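/- arXiv:1711.10134 — 9 statements merged into one kernel-verified Lean document; each statement's English description precedes it below -/
import Mathlib

section
/- The commutative monoid generated by x, y subject to the relations xy = yx and x² = y² is cancellative and torsion-free but is not a unique product monoid (witnessed by X = Y = {x, y}). -/
/-- A unique product monoid. -/
def IsUPM (G : Type*) [Monoid G] : Prop :=
  ∀ X Y : Finset G, X.Nonempty → Y.Nonempty →
    ∃ x ∈ X, ∃ y ∈ Y, ∀ x' ∈ X, ∀ y' ∈ Y, x' * y' = x * y → x' = x ∧ y' = y

/-- The defining relations of the monoid ⟨x, y ∣ xy = yx, x² = y²⟩. -/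
inductive TwoGenRel : FreeMonoid (Fin 2) → FreeMonoid (Fin 2) → Prop
  | comm : TwoGenRel (FreeMonoid.of 0 * FreeMonoid.of 1) (FreeMonoid.of 1 * FreeMonoid.of 0)
  | sq : TwoGenRel (FreeMonoid.of 0 * FreeMonoid.of 0) (FreeMonoid.of 1 * FreeMonoid.of 1)

/-- The monoid generated by `x, y` subject to `xy = yx` and `x² = y²`. -/
abbrev TwoGenMonoid := (conGen TwoGenRel).Quotient

/-!
Every element is `xⁿ` or `xⁿy`: the generators commute, and `y` absorbs into `y·y = x·x`.
The homomorphism `x ↦ (1, 0)`, `y ↦ (1, 1)` into the cancellative monoid `ℕ × ℤ/2` sends these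
normal forms to `(n, 0)` and `(n + 1, 1)`, so it is injective; its first coordinate, the degree,
vanishes only at `1`, which gives torsion-freeness. On the other hand `x ≠ y` while `xy = yx` and
`xx = yy`, so every product in `{x, y}·{x, y}` is also attained by a pair with the other first factor.
-/

theorem mul_comm_of_closure_eq_top {M : Type*} [Monoid M] {s : Set M}
    (hs : Submonoid.closure s = ⊤) (hcomm : ∀ a ∈ s, ∀ b ∈ s, a * b = b * a) (a b : M) :
    a * b = b * a :=
  Set.centralizer_centralizer_comm_of_comm hcomm
    a (Submonoid.closure_le_centralizer_centralizer s (hs ▸ Submonoid.mem_top a))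
    b (Submonoid.closure_le_centralizer_centralizer s (hs ▸ Submonoid.mem_top b))

theorem not_isUPM_of_mul_self_eq_mul_self {M : Type*} [Monoid M] {a b : M} (hab : a ≠ b)
    (hcomm : a * b = b * a) (hsq : a * a = b * b) : ¬ IsUPM M := by
  classical
  intro h
  obtain ⟨c, hc, d, hd, huniq⟩ := h {a, b} {a, b} (by simp) (by simp)
  have ha : a ∈ ({a, b} : Finset M) := by simp
  have hb : b ∈ ({a, b} : Finset M) := by simp
  simp only [Finset.mem_insert, Finset.mem_singleton] at hc hd
  rcases hc with hc | hc <;> rcases hd with hd | hd <;> subst c d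
  · exact hab (huniq b hb b hb hsq.symm).1.symm
  · exact hab (huniq b hb a ha hcomm.symm).1.symm
  · exact hab (huniq a ha b hb hcomm).1
  · exact hab (huniq a ha a ha hsq).1

namespace TwoGenMonoid

def x : TwoGenMonoid := PresentedMonoid.of TwoGenRel 0

def y : TwoGenMonoid := PresentedMonoid.of TwoGenRel 1

theorem x_mul_y : x * y = y * x := PresentedMonoid.mk_eq_mk_of_rel .comm

theorem x_mul_x : x * x = y * y := PresentedMonoid.mk_eq_mk_of_rel .sq

theorem range_of_eq : Set.range (PresentedMonoid.of TwoGenRel) = ({x, y} : Set TwoGenMonoid) := by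
  ext m
  constructor
  · rintro ⟨i, rfl⟩
    fin_cases i
    exacts [.inl rfl, .inr rfl]
  · rintro (rfl | rfl)
    exacts [⟨0, rfl⟩, ⟨1, rfl⟩]

theorem closure_x_y : Submonoid.closure {x, y} = ⊤ :=
  range_of_eq ▸ PresentedMonoid.closure_range_of TwoGenRel

protected theorem mul_comm (a b : TwoGenMonoid) : a * b = b * a := by
  refine mul_comm_of_closure_eq_top closure_x_y ?_ a b
  simp only [Set.mem_insert_iff, Set.mem_singleton_iff]
  rintro _ (rfl | rfl) _ (rfl | rfl) <;> first | rfl | exact x_mul_y | exact x_mul_y.symm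

theorem exists_eq_x_pow_or_x_pow_mul_y (m : TwoGenMonoid) :
    ∃ n : ℕ, m = x ^ n ∨ m = x ^ n * y := by
  induction closure_x_y ▸ Submonoid.mem_top m using Submonoid.closure_induction_left with
  | one => exact ⟨0, .inl (pow_zero x).symm⟩
  | mul_left g hg m _ ih =>
    obtain ⟨n, rfl | rfl⟩ := ih <;> rcases hg with rfl | rfl
    · exact ⟨n + 1, .inl (pow_succ' x n).symm⟩
    · exact ⟨n, .inr (TwoGenMonoid.mul_comm y _)⟩
    · exact ⟨n + 1, .inr (by rw [pow_succ', mul_assoc])⟩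
    · refine ⟨n + 2, .inl ?_⟩
      rw [pow_add, sq, x_mul_x, TwoGenMonoid.mul_comm y, mul_assoc]

def toProd : TwoGenMonoid →* Multiplicative (ℕ × ZMod 2) :=
  PresentedMonoid.lift ![.ofAdd (1, 0), .ofAdd (1, 1)] (by rintro _ _ (_ | _) <;> decide)

theorem toProd_x : toProd x = .ofAdd (1, 0) := rfl

theorem toProd_x_pow (n : ℕ) : toProd (x ^ n) = .ofAdd (n, 0) := by
  simp [toProd_x, ← ofAdd_nsmul]

theorem toProd_x_pow_mul_y (n : ℕ) : toProd (x ^ n * y) = .ofAdd (n + 1, 1) := by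
  rw [map_mul, toProd_x_pow]
  rfl

theorem toProd_injective : Function.Injective toProd := by
  intro a b h
  obtain ⟨m, rfl | rfl⟩ := exists_eq_x_pow_or_x_pow_mul_y a <;>
    obtain ⟨n, rfl | rfl⟩ := exists_eq_x_pow_or_x_pow_mul_y b <;>
    simp_all [toProd_x_pow, toProd_x_pow_mul_y]

theorem eq_one_of_toProd_fst_eq_zero {m : TwoGenMonoid} (h : (toProd m).toAdd.1 = 0) :
    m = 1 := by
  obtain ⟨n, rfl | rfl⟩ := exists_eq_x_pow_or_x_pow_mul_y m <;>
    simp_all [toProd_x_pow, toProd_x_pow_mul_y]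

theorem x_ne_y : x ≠ y := fun h => absurd (congrArg toProd h) (by decide)

protected theorem mul_left_cancel {a b c : TwoGenMonoid} (h : a * b = a * c) : b = c :=
  toProd_injective (by simpa using congrArg toProd h)

theorem eq_zero_of_pow_eq_one {a : TwoGenMonoid} (ha : a ≠ 1) {n : ℕ} (h : a ^ n = 1) :
    n = 0 := by
  have : n * (toProd a).toAdd.1 = 0 := by
    simpa using congrArg (fun m => (toProd m).toAdd.1) h
  exact (mul_eq_zero.1 this).resolve_right (mt eq_one_of_toProd_fst_eq_zero ha)

end TwoGenMonoid

/-- The monoid ⟨x, y ∣ xy = yx, x² = y²⟩ is commutative, cancellative and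
torsion-free, but it is not a unique product monoid. -/
theorem stmt2 :
    (∀ a b : TwoGenMonoid, a * b = b * a) ∧
    (∀ a b c : TwoGenMonoid, (a * b = a * c → b = c) ∧ (b * a = c * a → b = c)) ∧
    (∀ a : TwoGenMonoid, a ≠ 1 → ∀ n : ℕ, a ^ n = 1 → n = 0) ∧
    ¬ IsUPM TwoGenMonoid :=
  ⟨TwoGenMonoid.mul_comm,
    fun a b c => ⟨TwoGenMonoid.mul_left_cancel, fun h => TwoGenMonoid.mul_left_cancel
      (by rwa [TwoGenMonoid.mul_comm a, TwoGenMonoid.mul_comm a])⟩,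
    fun _ ha _ => TwoGenMonoid.eq_zero_of_pow_eq_one ha,
    not_isUPM_of_mul_self_eq_mul_self TwoGenMonoid.x_ne_y TwoGenMonoid.x_mul_y
      TwoGenMonoid.x_mul_x⟩
end

section
/- Let G be a unique product monoid, S a G-graded ring, M a graded right S-module, and N a nonzero S-submodule of M. Let a ∈ N be a nonzero element whose canonical form a = a₁ + ⋯ + a_k has k minimal among nonzero elements of N. Then ann(a) = ann(a_i) for each i = 1,…,k, and ann(a) is a homogeneous right ideal of S. -/
lemma aux_indep {G : Type*} [DecidableEq G] {M : Type*} [AddCommGroup M]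
    (ℳ : G → AddSubgroup M) (hMdir : DirectSum.IsInternal ℳ)
    {ι : Type*} (t : Finset ι) (m : ι → M) (d : ι → G)
    (hinj : Set.InjOn d t) (hmem : ∀ j ∈ t, m j ∈ ℳ (d j))
    (hsum : ∑ j ∈ t, m j = 0) : ∀ j ∈ t, m j = 0 := by
  classical
  set x : DirectSum G fun g => ℳ g :=
    ∑ j ∈ t.attach, DirectSum.of (fun g => ℳ g) (d j.1) ⟨m j.1, hmem j.1 j.2⟩ with hx
  have hcoe : DirectSum.coeAddMonoidHom ℳ x = 0 := by
    rw [hx, map_sum]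
    simp only [DirectSum.coeAddMonoidHom_of]
    rw [Finset.sum_attach]
    exact hsum
  have hx0 : x = 0 := by
    apply hMdir.injective
    simpa using hcoe
  intro j hj
  have h1 : x (d j) = 0 := by rw [hx0]; rfl
  rw [hx, DFinsupp.finset_sum_apply] at h1
  rw [Finset.sum_eq_single (⟨j, hj⟩ : {x // x ∈ t})] at h1
  · rw [DirectSum.of_eq_same] at h1
    exact congrArg Subtype.val h1
  · intro b _ hb
    apply DirectSum.of_eq_of_ne
    intro hdb
    exact hb (Subtype.ext (hinj b.2 hj hdb.symm))
  · intro h; exact absurd (Finset.mem_attach t _) h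

lemma aux_decomp {G : Type*} [DecidableEq G] {S : Type*} [AddCommGroup S]
    (𝒮 : G → AddSubgroup S) (hSdir : DirectSum.IsInternal 𝒮) (s : S) :
    ∃ (n : ℕ) (c : Fin n → S) (d : Fin n → G), Function.Injective d ∧
      (∀ j, c j ∈ 𝒮 (d j)) ∧ ∑ j, c j = s := by
  classical
  obtain ⟨x, hx⟩ := hSdir.surjective s
  set t := DFinsupp.support x with ht
  let e := t.equivFin
  refine ⟨t.card, fun j => (x (e.symm j).1 : S), fun j => (e.symm j).1,
    fun j₁ j₂ h => ?_, fun j => (x _).2, ?_⟩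
  · exact e.symm.injective (Subtype.ext h)
  · have h1 : ∑ j : Fin t.card, ((x (e.symm j).1 : S)) = ∑ g ∈ t, (x g : S) := by
      rw [← Finset.sum_coe_sort t (fun g => (x g : S))]
      exact Fintype.sum_equiv e.symm _ _ (fun j => rfl)
    rw [h1, ← hx]
    conv_rhs => rw [← DirectSum.sum_support_of x]
    rw [map_sum]
    simp [DirectSum.coeAddMonoidHom_of]
    rfl

lemma aux_op_sum {S : Type*} [Ring S] {ι : Type*} (t : Finset ι) (f : ι → S) :
    MulOpposite.op (∑ j ∈ t, f j) = ∑ j ∈ t, MulOpposite.op (f j) :=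
  map_sum (MulOpposite.opAddEquiv : S ≃+ Sᵐᵒᵖ) f t

/-- Let `G` be a unique product monoid, `S` a `G`-graded ring, `M` a graded right
`S`-module, `N` a nonzero `S`-submodule of `M`, and `a = a₁ + ⋯ + a_k ∈ N` a nonzero
element whose canonical form has minimal length `k` among nonzero elements of `N`.
Then `ann(a) = ann(a_i)` for every `i`, and `ann(a)` is homogeneous. -/
theorem stmt6 {G : Type*} [Monoid G] [DecidableEq G] (hUP : IsUPM G)
    {S : Type*} [Ring S] (𝒮 : G → AddSubgroup S)
    (hSdir : DirectSum.IsInternal 𝒮) (hone : (1 : S) ∈ 𝒮 1)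
    (hmul : ∀ {g h : G} {a b : S}, a ∈ 𝒮 g → b ∈ 𝒮 h → a * b ∈ 𝒮 (g * h))
    {M : Type*} [AddCommGroup M] [Module Sᵐᵒᵖ M] (ℳ : G → AddSubgroup M)
    (hMdir : DirectSum.IsInternal ℳ)
    (hsmul : ∀ {g h : G} {m : M} {s : S}, m ∈ ℳ g → s ∈ 𝒮 h →
      MulOpposite.op s • m ∈ ℳ (g * h))
    (N : Submodule Sᵐᵒᵖ M) (hN : N ≠ ⊥)
    {k : ℕ} (hk : 0 < k) (a : Fin k → M) (dg : Fin k → G) (hdg : Function.Injective dg)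
    (hai : ∀ i, a i ∈ ℳ (dg i)) (ha0 : ∀ i, a i ≠ 0) (haN : (∑ i, a i) ∈ N)
    (hmin : ∀ (l : ℕ) (b : Fin l → M) (db : Fin l → G), Function.Injective db →
      (∀ j, b j ∈ ℳ (db j)) → (∀ j, b j ≠ 0) → (∑ j, b j) ∈ N → (∑ j, b j) ≠ 0 →
      k ≤ l) :
    (∀ i, {s : S | MulOpposite.op s • (∑ i', a i') = 0} =
      {s : S | MulOpposite.op s • a i = 0}) ∧
    (∀ (l : ℕ) (c : Fin l → S) (d : Fin l → G), Function.Injective d →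
      (∀ j, c j ∈ 𝒮 (d j)) → MulOpposite.op (∑ j, c j) • (∑ i', a i') = 0 →
      ∀ j, MulOpposite.op (c j) • (∑ i', a i') = 0) := by
  classical
  -- right cancellation
  have hcancel : ∀ {x x' y : G}, x * y = x' * y → x = x' := by
    intro x x' y hxy
    obtain ⟨x₀, hx₀, y₀, hy₀, huniq⟩ := hUP {x, x'} {y} ⟨x, by simp⟩ ⟨y, by simp⟩
    have hy : y₀ = y := by simpa using hy₀
    have hx0 : x₀ = x ∨ x₀ = x' := by simpa using hx₀
    have e0 : x₀ * y₀ = x * y := by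
      rw [hy]
      rcases hx0 with h | h
      · rw [h]
      · rw [h, ← hxy]
    have h1 := (huniq x (by simp) y (by simp) (by rw [hy, e0.symm, hy])).1
    have h2 := (huniq x' (by simp) y (by simp) (by rw [hy, ← hxy, e0.symm, hy])).1
    exact h1.trans h2.symm
  have hcancelL : ∀ {x y y' : G}, x * y = x * y' → y = y' := by
    intro x y y' hxy
    obtain ⟨x₀, hx₀, y₀, hy₀, huniq⟩ := hUP {x} {y, y'} ⟨x, by simp⟩ ⟨y, by simp⟩
    have hx : x₀ = x := by simpa using hx₀
    have hy0 : y₀ = y ∨ y₀ = y' := by simpa using hy₀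
    have e0 : x₀ * y₀ = x * y := by
      rw [hx]
      rcases hy0 with h | h
      · rw [h]
      · rw [h, ← hxy]
    have h1 := (huniq x (by simp) y (by simp) (by rw [hx, e0.symm, hx])).2
    have h2 := (huniq x (by simp) y' (by simp) (by rw [hx, ← hxy, e0.symm, hx])).2
    exact h1.trans h2.symm
  -- a homogeneous element killing the sum kills each component
  have hkill_each : ∀ {h : G} {s : S}, s ∈ 𝒮 h →
      MulOpposite.op s • (∑ i', a i') = 0 → ∀ i, MulOpposite.op s • a i = 0 := by
    intro h s hs hsa i
    refine aux_indep ℳ hMdir Finset.univ (fun i => MulOpposite.op s • a i)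
      (fun i => dg i * h) ?_ ?_ ?_ i (Finset.mem_univ i)
    · intro i₁ _ i₂ _ hh
      exact hdg (hcancel hh)
    · intro j _
      exact hsmul (hai j) hs
    · rw [← Finset.smul_sum]
      exact hsa
  -- a family with a vanishing entry sums to zero if the sum is in N
  have hshorter : ∀ (m : Fin k → M) (d : Fin k → G), Function.Injective d →
      (∀ j, m j ∈ ℳ (d j)) → (∑ j, m j) ∈ N → ∀ i₀, m i₀ = 0 → ∑ j, m j = 0 := by
    intro m d hdinj hm hmN i₀ hmi₀
    by_contra hne
    set T := Finset.univ.filter (fun j => m j ≠ 0) with hT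
    have hTs : T ⊂ Finset.univ := by
      refine ⟨Finset.subset_univ T, fun hsub => ?_⟩
      have : i₀ ∈ T := hsub (Finset.mem_univ i₀)
      rw [hT, Finset.mem_filter] at this
      exact this.2 hmi₀
    have hcard : T.card < k := by
      have := Finset.card_lt_card hTs
      simpa using this
    let e := T.equivFin
    have hsum : ∑ j : Fin T.card, m (e.symm j).1 = ∑ j, m j := by
      rw [← Finset.sum_filter_ne_zero Finset.univ (f := m), ← hT,
        ← Finset.sum_coe_sort T m]
      exact Fintype.sum_equiv e.symm _ _ (fun j => rfl)
    have := hmin T.card (fun j => m (e.symm j).1) (fun j => d (e.symm j).1)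
      (fun j₁ j₂ hh => e.symm.injective (Subtype.ext (hdinj hh)))
      (fun j => hm _) (fun j => (Finset.mem_filter.mp (e.symm j).2).2)
      (by rw [hsum]; exact hmN) (by rw [hsum]; exact hne)
    omega
  -- a homogeneous element killing one component kills the sum
  have hkill_sum : ∀ {h : G} {s : S}, s ∈ 𝒮 h →
      (∃ i₀, MulOpposite.op s • a i₀ = 0) → MulOpposite.op s • (∑ i', a i') = 0 := by
    rintro h s hs ⟨i₀, hi₀⟩
    rw [Finset.smul_sum]
    refine hshorter (fun i => MulOpposite.op s • a i) (fun i => dg i * h)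
      (fun i₁ i₂ hh => hdg (hcancel hh)) (fun j => hsmul (hai j) hs) ?_ i₀ hi₀
    rw [← Finset.smul_sum]
    exact N.smul_mem _ haN
  -- the key homogeneity statement (second conclusion)
  have key : ∀ (l : ℕ) (c : Fin l → S) (d : Fin l → G), Function.Injective d →
      (∀ j, c j ∈ 𝒮 (d j)) → MulOpposite.op (∑ j, c j) • (∑ i', a i') = 0 →
      ∀ j, MulOpposite.op (c j) • (∑ i', a i') = 0 := by
    intro l
    suffices H : ∀ (n : ℕ) (c : Fin l → S) (d : Fin l → G), Function.Injective d →
        (∀ j, c j ∈ 𝒮 (d j)) →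
        (Finset.univ.filter (fun j => c j ≠ 0)).card ≤ n →
        MulOpposite.op (∑ j, c j) • (∑ i', a i') = 0 →
        ∀ j, MulOpposite.op (c j) • (∑ i', a i') = 0 by
      exact fun c d h1 h2 h3 => H _ c d h1 h2 le_rfl h3
    intro n
    induction n with
    | zero =>
      intro c d _ _ hcard h0 j
      have hc0 : c j = 0 := by
        by_contra hne
        have : j ∈ Finset.univ.filter (fun j => c j ≠ 0) := by
          simp [hne]
        have := Finset.card_pos.mpr ⟨j, this⟩
        omega
      simp [hc0]
    | succ n ih =>
      intro c d hdinj hc hcard h0 j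
      by_cases hempty : ∀ j', c j' = 0
      · simp [hempty j]
      push_neg at hempty
      obtain ⟨j₁, hj₁⟩ := hempty
      set Y := (Finset.univ.filter (fun j => c j ≠ 0)).image d with hY
      set X := Finset.univ.image dg with hX
      obtain ⟨x, hxX, y, hyY, huniq⟩ := hUP X Y
        ⟨dg ⟨0, hk⟩, Finset.mem_image_of_mem dg (Finset.mem_univ _)⟩
        ⟨d j₁, Finset.mem_image_of_mem d (by simp [hj₁])⟩
      rw [hX] at hxX
      obtain ⟨i₀, _, hi₀⟩ := Finset.mem_image.mp hxX
      rw [hY] at hyY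
      obtain ⟨j₀, hj₀mem, hj₀⟩ := Finset.mem_image.mp hyY
      have hcj₀ : c j₀ ≠ 0 := (Finset.mem_filter.mp hj₀mem).2
      -- projection to degree dg i₀ * d j₀
      set g₀ := dg i₀ * d j₀ with hg₀
      set E := AddEquiv.ofBijective (DirectSum.coeAddMonoidHom ℳ) hMdir with hE
      set π : M →+ M :=
        ((ℳ g₀).subtype.comp (DFinsupp.evalAddMonoidHom g₀)).comp
          E.symm.toAddMonoidHom with hπ
      have hπ_hom : ∀ {g : G} (m : M), m ∈ ℳ g → π m = if g = g₀ then m else 0 := by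
        intro g m hm
        have h1 : E (DirectSum.of (fun g => ℳ g) g ⟨m, hm⟩) = m :=
          DirectSum.coeAddMonoidHom_of ℳ g ⟨m, hm⟩
        have h2 : E.symm m = DirectSum.of (fun g => ℳ g) g ⟨m, hm⟩ := by
          have := congrArg E.symm h1
          rw [AddEquiv.symm_apply_apply] at this
          exact this.symm
        have h3 : π m = ((E.symm m) g₀ : M) := rfl
        have h4 : π m = ((DirectSum.of (fun g => ℳ g) g ⟨m, hm⟩) g₀ : M) := by
          rw [h3]
          exact congrArg (fun z : DirectSum G fun g => ℳ g => (z g₀ : M)) h2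
        rw [h4]
        by_cases hg : g = g₀
        · subst hg
          rw [DirectSum.of_eq_same, if_pos rfl]
        · rw [DirectSum.of_eq_of_ne _ _ _ (Ne.symm hg), if_neg hg]
          rfl
      -- expand the double sum
      have hdouble : MulOpposite.op (∑ j', c j') • (∑ i', a i') =
          ∑ j', ∑ i', MulOpposite.op (c j') • a i' := by
        rw [aux_op_sum, Finset.sum_smul]
        exact Finset.sum_congr rfl (fun j' _ => Finset.smul_sum)
      have hXmem : ∀ i', dg i' ∈ X := fun i' => by
        rw [hX]; exact Finset.mem_image_of_mem dg (Finset.mem_univ _)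
      have hYmem : ∀ j', c j' ≠ 0 → d j' ∈ Y := fun j' hcz => by
        rw [hY]; exact Finset.mem_image_of_mem d (by simp [hcz])
      have hzero : MulOpposite.op (c j₀) • a i₀ = 0 := by
        have h4 : π (MulOpposite.op (∑ j', c j') • (∑ i', a i')) = 0 := by
          rw [h0]; exact map_zero π
        rw [hdouble, map_sum] at h4
        have h5 : ∀ j', π (∑ i', MulOpposite.op (c j') • a i') =
            ∑ i', π (MulOpposite.op (c j') • a i') := fun j' => map_sum π _ _
        simp only [h5] at h4
        rw [Finset.sum_comm] at h4
        have h6 : ∀ i' j', π (MulOpposite.op (c j') • a i') =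
            if dg i' * d j' = g₀ then MulOpposite.op (c j') • a i' else 0 :=
          fun i' j' => hπ_hom _ (hsmul (hai i') (hc j'))
        simp only [h6] at h4
        have hinner : ∀ b ∈ Finset.univ, b ≠ j₀ →
            (if dg i₀ * d b = g₀ then MulOpposite.op (c b) • a i₀ else 0) = 0 := by
          intro j' _ hj'
          by_cases hcz : c j' = 0
          · simp [hcz]
          refine if_neg fun hdeq => ?_
          have := huniq (dg i₀) (hXmem i₀) (d j') (hYmem j' hcz)
            (by rw [hdeq, hg₀, hi₀, hj₀])
          exact hj' (hdinj (this.2.trans hj₀.symm))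
        have houter : ∀ b ∈ Finset.univ, b ≠ i₀ →
            (∑ j', if dg b * d j' = g₀ then MulOpposite.op (c j') • a b else 0) = 0 := by
          intro i' _ hi'
          apply Finset.sum_eq_zero
          intro j' _
          by_cases hcz : c j' = 0
          · simp [hcz]
          refine if_neg fun hdeq => ?_
          have := huniq (dg i') (hXmem i') (d j') (hYmem j' hcz)
            (by rw [hdeq, hg₀, hi₀, hj₀])
          exact hi' (hdg (this.1.trans hi₀.symm))
        rw [Finset.sum_eq_single_of_mem i₀ (Finset.mem_univ i₀) houter,
          Finset.sum_eq_single_of_mem j₀ (Finset.mem_univ j₀) hinner,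
          if_pos rfl] at h4
        exact h4
      -- so c j₀ kills the whole sum
      have hkillj₀ : MulOpposite.op (c j₀) • (∑ i', a i') = 0 :=
        hkill_sum (hc j₀) ⟨i₀, hzero⟩
      -- remove j₀ and apply the induction hypothesis
      set c' : Fin l → S := Function.update c j₀ 0 with hc'
      have hsumc' : ∑ j', c' j' = (∑ j', c j') - c j₀ := by
        rw [hc', Finset.sum_update_of_mem (Finset.mem_univ j₀)]
        rw [Finset.sum_sdiff_eq_sub (Finset.singleton_subset_iff.mpr (Finset.mem_univ j₀))]
        rw [Finset.sum_singleton]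
        exact zero_add _
      have hc'mem : ∀ j', c' j' ∈ 𝒮 (d j') := by
        intro j'
        rw [hc']
        by_cases hjj : j' = j₀
        · subst hjj; rw [Function.update_self]; exact (𝒮 (d j')).zero_mem
        · rw [Function.update_of_ne hjj]; exact hc j'
      have hcard' : (Finset.univ.filter (fun j' => c' j' ≠ 0)).card ≤ n := by
        have hss : Finset.univ.filter (fun j' => c' j' ≠ 0) ⊂
            Finset.univ.filter (fun j' => c j' ≠ 0) := by
          constructor
          · intro j' hj'
            rw [Finset.mem_filter] at hj' ⊢
            refine ⟨hj'.1, ?_⟩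
            rcases eq_or_ne j' j₀ with h | h
            · exfalso; apply hj'.2; rw [hc', h, Function.update_self]
            · rw [hc', Function.update_of_ne h] at hj'
              exact hj'.2
          · intro hsub
            have := hsub (Finset.mem_filter.mpr ⟨Finset.mem_univ j₀, hcj₀⟩)
            rw [Finset.mem_filter, hc', Function.update_self] at this
            exact this.2 rfl
        have := Finset.card_lt_card hss
        omega
      have h0' : MulOpposite.op (∑ j', c' j') • (∑ i', a i') = 0 := by
        rw [hsumc', MulOpposite.op_sub, sub_smul, h0, hkillj₀, sub_zero]
      have hall := ih c' d hdinj hc'mem hcard' h0'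
      rcases eq_or_ne j j₀ with h | h
      · rw [h]; exact hkillj₀
      · have := hall j
        rwa [hc', Function.update_of_ne h] at this
  refine ⟨?_, key⟩
  intro i
  ext s
  simp only [Set.mem_setOf_eq]
  obtain ⟨n, c, d, hdinj, hcmem, hcsum⟩ := aux_decomp 𝒮 hSdir s
  have hsm : ∀ (m : M), MulOpposite.op s • m = ∑ j, MulOpposite.op (c j) • m := by
    intro m
    rw [← hcsum, aux_op_sum, Finset.sum_smul]
  constructor
  · intro hs
    have hkills := key n c d hdinj hcmem (by rw [hcsum]; exact hs)
    rw [hsm]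
    apply Finset.sum_eq_zero
    intro j _
    exact hkill_each (hcmem j) (hkills j) i
  · intro hs
    have heach : ∀ j ∈ Finset.univ, MulOpposite.op (c j) • a i = 0 := by
      refine aux_indep ℳ hMdir Finset.univ (fun j => MulOpposite.op (c j) • a i)
        (fun j => dg i * d j) ?_ ?_ ?_
      · intro j₁ _ j₂ _ hh
        exact hdinj (hcancelL hh)
      · intro j _
        exact hsmul (hai i) (hcmem j)
      · rw [← hsm]
        exact hs
    rw [hsm]
    apply Finset.sum_eq_zero
    intro j _
    exact hkill_sum (hcmem j) ⟨i, heach j (Finset.mem_univ j)⟩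
end

section
/- Let G be a unique product monoid, S a G-graded ring, M a graded right S-module, and N a nonzero S-submodule of M. Then N contains an S-submodule isomorphic to bS for some nonzero homogeneous element b ∈ M. -/
/-!
Choose `m ∈ N`, `m ≠ 0`, whose homogeneous support is as small as possible, and let `b = m_{g₀}`
be one of its homogeneous components. For `s` homogeneous of degree `h`, right cancellation puts
`m_g s` alone in degree `g h` of `m s`; so `m_g s = 0` for one `g` would make the support of the
multiple `m s ∈ N` strictly smaller, hence `m s = 0`. Thus `m s = 0 ↔ m_g s = 0` for homogeneous
`s`. For arbitrary `s` this gives `b s = 0 ↔ m s = 0`: if `b s = 0`, left cancellation isolates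
each `b s_h`; if `m s = 0`, a unique product `g h` of the supports of `m` and `s` isolates
`m_g s_h`, so `s_h` kills `m` and `b`, and we induct on the support of `s - s_h`.
Hence `mS ≅ S / ann(m) = S / ann(b) ≅ bS`.
-/

open DirectSum MulOpposite
open scoped Finset

theorem IsUPM.uniqueProds {G : Type*} [Monoid G] (hUP : IsUPM G) : UniqueProds G where
  uniqueMul_of_nonempty {A B} hA hB := by
    obtain ⟨a, ha, b, hb, huniq⟩ := hUP A B hA hB
    exact ⟨a, ha, b, hb, fun a' b' ha' hb' => huniq a' ha' b' hb'⟩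

noncomputable def Submodule.spanSingletonEquivOfSMulEqZeroIff {R M : Type*} [Ring R]
    [AddCommGroup M] [Module R M] {x y : M} (h : ∀ r : R, r • x = 0 ↔ r • y = 0) :
    (R ∙ x) ≃ₗ[R] (R ∙ y) :=
  (Ideal.quotTorsionOfEquivSpanSingleton R M x).symm ≪≫ₗ
    quotEquivOfEq _ _ (ext fun r => by simp only [Ideal.mem_torsionOf_iff, h]) ≪≫ₗ
    Ideal.quotTorsionOfEquivSpanSingleton R M y

namespace DirectSum

section Decomposition

variable {ι M σ : Type*} [DecidableEq ι] [AddCommGroup M] [SetLike σ M] [AddSubgroupClass σ M]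
  (ℳ : ι → σ) [Decomposition ℳ]

theorem coe_decompose_sum_of_mem {α : Type*} (T : Finset α) (κ : α → ι) (v : α → M)
    (hv : ∀ a ∈ T, v a ∈ ℳ (κ a)) (i : ι) :
    (decompose ℳ (∑ a ∈ T, v a) i : M) = ∑ a ∈ T with κ a = i, v a := by
  rw [decompose_sum, DFinsupp.finsetSum_apply, AddSubmonoidClass.coe_finsetSum,
    Finset.sum_filter]
  refine Finset.sum_congr rfl fun a ha => ?_
  split_ifs with h
  · exact decompose_of_mem_same ℳ (h ▸ hv a ha)
  · exact decompose_of_mem_ne ℳ (hv a ha) h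

theorem coe_decompose_sum_of_unique {α : Type*} (T : Finset α) (κ : α → ι) (v : α → M)
    (hv : ∀ a ∈ T, v a ∈ ℳ (κ a)) {a : α} (ha : a ∈ T)
    (huniq : ∀ a' ∈ T, κ a' = κ a → a' = a) :
    (decompose ℳ (∑ a' ∈ T, v a') (κ a) : M) = v a := by
  rw [coe_decompose_sum_of_mem ℳ T κ v hv]
  convert Finset.sum_singleton v a
  ext a'
  simp only [Finset.mem_filter, Finset.mem_singleton]
  exact ⟨fun h => huniq a' h.1 h.2, by rintro rfl; exact ⟨ha, rfl⟩⟩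

theorem support_decompose_sub_coe_decompose [∀ i (x : ℳ i), Decidable (x ≠ 0)] (x : M) (i : ι) :
    (decompose ℳ (x - decompose ℳ x i)).support = (decompose ℳ x).support.erase i := by
  rw [decompose_sub, decompose_coe, ← DFinsupp.support_erase]
  exact congrArg _ (sub_eq_of_eq_add (DFinsupp.erase_add_single i (decompose ℳ x)).symm)

theorem support_decompose_nonempty [∀ i (x : ℳ i), Decidable (x ≠ 0)] {x : M} (hx : x ≠ 0) :
    (decompose ℳ x).support.Nonempty := by
  rw [Finset.nonempty_iff_ne_empty, Ne, DFinsupp.support_eq_empty]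
  exact fun h => hx ((decompose ℳ).injective (h.trans (decompose_zero ℳ).symm))

end Decomposition

end DirectSum

section GradedModule

open scoped Classical

variable {G : Type*} [DecidableEq G] {S : Type*} [Ring S] {M : Type*} [AddCommGroup M]
  [Module Sᵐᵒᵖ M]

theorem op_smul_eq_sum_support_decompose (𝒮 : G → AddSubgroup S) [Decomposition 𝒮] (s : S)
    (x : M) : op s • x = ∑ h ∈ (decompose 𝒮 s).support, op (decompose 𝒮 s h : S) • x := by
  conv_lhs => rw [← sum_support_decompose 𝒮 s]
  rw [Finset.op_sum, Finset.sum_smul]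

theorem op_smul_eq_sum_support_decompose_product (𝒮 : G → AddSubgroup S) [Decomposition 𝒮]
    (ℳ : G → AddSubgroup M) [Decomposition ℳ] (s : S) (m : M) :
    op s • m = ∑ p ∈ (decompose 𝒮 s).support ×ˢ (decompose ℳ m).support,
      op (decompose 𝒮 s p.1 : S) • (decompose ℳ m p.2 : M) := by
  rw [op_smul_eq_sum_support_decompose 𝒮, Finset.sum_product]
  refine Finset.sum_congr rfl fun h _ => ?_
  conv_lhs => rw [← sum_support_decompose ℳ m]
  rw [Finset.smul_sum]

variable (S) in
def HasMinimalSupport (ℳ : G → AddSubgroup M) [Decomposition ℳ] (m : M) : Prop :=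
  ∀ s : S, op s • m ≠ 0 → #(decompose ℳ m).support ≤ #(decompose ℳ (op s • m)).support

variable [Monoid G]

def IsGradedRightSMul (𝒮 : G → AddSubgroup S) (ℳ : G → AddSubgroup M) : Prop :=
  ∀ {g h : G} {m : M} {s : S}, m ∈ ℳ g → s ∈ 𝒮 h → op s • m ∈ ℳ (g * h)

variable {𝒮 : G → AddSubgroup S} {ℳ : G → AddSubgroup M} [Decomposition ℳ]

theorem coe_decompose_op_smul_of_uniqueMul [Decomposition 𝒮] (hsmul : IsGradedRightSMul 𝒮 ℳ)
    {s : S} {m : M} {g h : G} (hg : g ∈ (decompose ℳ m).support)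
    (hh : h ∈ (decompose 𝒮 s).support)
    (huniq : UniqueMul (decompose ℳ m).support (decompose 𝒮 s).support g h) :
    (decompose ℳ (op s • m) (g * h) : M) = op (decompose 𝒮 s h : S) • (decompose ℳ m g : M) := by
  rw [op_smul_eq_sum_support_decompose_product 𝒮 ℳ]
  exact coe_decompose_sum_of_unique ℳ ((decompose 𝒮 s).support ×ˢ (decompose ℳ m).support)
    (fun p => p.2 * p.1) (fun p => op (decompose 𝒮 s p.1 : S) • (decompose ℳ m p.2 : M))
    (fun p _ => hsmul (SetLike.coe_mem _) (SetLike.coe_mem _)) (a := (h, g))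
    (Finset.mem_product.2 ⟨hh, hg⟩) fun p hp hpgh => by
      obtain ⟨hp1, hp2⟩ := Finset.mem_product.1 hp
      exact Prod.ext_iff.2 (huniq hp2 hp1 hpgh).symm

theorem coe_decompose_op_smul_mul [IsRightCancelMul G] (hsmul : IsGradedRightSMul 𝒮 ℳ) {s : S}
    {h : G} (hs : s ∈ 𝒮 h) {m : M} {g : G} (hg : g ∈ (decompose ℳ m).support) :
    (decompose ℳ (op s • m) (g * h) : M) = op s • (decompose ℳ m g : M) := by
  conv_lhs => rw [← sum_support_decompose ℳ m, Finset.smul_sum]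
  exact coe_decompose_sum_of_unique ℳ _ (· * h) _
    (fun g _ => hsmul (SetLike.coe_mem _) hs) hg fun _ _ => mul_right_cancel

theorem coe_decompose_mul_op_smul [Decomposition 𝒮] [IsLeftCancelMul G]
    (hsmul : IsGradedRightSMul 𝒮 ℳ) {s : S} {b : M} {g : G} (hb : b ∈ ℳ g) {h : G}
    (hh : h ∈ (decompose 𝒮 s).support) :
    (decompose ℳ (op s • b) (g * h) : M) = op (decompose 𝒮 s h : S) • b := by
  rw [op_smul_eq_sum_support_decompose 𝒮]
  exact coe_decompose_sum_of_unique ℳ _ (g * ·) _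
    (fun h _ => hsmul hb (SetLike.coe_mem _)) hh fun _ _ => mul_left_cancel

theorem support_decompose_op_smul_subset (hsmul : IsGradedRightSMul 𝒮 ℳ) {s : S} {h : G}
    (hs : s ∈ 𝒮 h) (m : M) :
    (decompose ℳ (op s • m)).support ⊆
      ((decompose ℳ m).support.filter fun g => op s • (decompose ℳ m g : M) ≠ 0).image (· * h) := by
  intro k hk
  have hk : (decompose ℳ (op s • m) k : M) ≠ 0 := by simpa using hk
  conv at hk => rw [← sum_support_decompose ℳ m, Finset.smul_sum]
  rw [coe_decompose_sum_of_mem ℳ _ (· * h) _ fun g _ => hsmul (SetLike.coe_mem _) hs] at hk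
  obtain ⟨g, hg, hg0⟩ := Finset.exists_ne_zero_of_sum_ne_zero hk
  rw [Finset.mem_filter] at hg
  exact Finset.mem_image.2 ⟨g, Finset.mem_filter.2 ⟨hg.1, hg0⟩, hg.2⟩

theorem op_smul_coe_decompose_eq_zero_iff_of_mem [IsRightCancelMul G]
    (hsmul : IsGradedRightSMul 𝒮 ℳ) {m : M} (hmin : HasMinimalSupport S ℳ m)
    {s : S} {h : G} (hs : s ∈ 𝒮 h) {g : G} (hg : g ∈ (decompose ℳ m).support) :
    op s • (decompose ℳ m g : M) = 0 ↔ op s • m = 0 := by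
  refine ⟨fun h0 => ?_, fun h0 => ?_⟩
  · by_contra hne
    have hlt : #((decompose ℳ m).support.filter fun g => op s • (decompose ℳ m g : M) ≠ 0) <
        #(decompose ℳ m).support :=
      Finset.card_lt_card (Finset.filter_ssubset.2 ⟨g, hg, not_not.2 h0⟩)
    have := (hmin s hne).trans
      ((Finset.card_le_card (support_decompose_op_smul_subset hsmul hs m)).trans
        Finset.card_image_le)
    omega
  · rw [← coe_decompose_op_smul_mul hsmul hs hg, h0, decompose_zero, DirectSum.zero_apply,
      ZeroMemClass.coe_zero]

theorem op_smul_eq_zero_of_op_smul_coe_decompose_eq_zero [Decomposition 𝒮] [IsCancelMul G]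
    (hsmul : IsGradedRightSMul 𝒮 ℳ) {m : M} (hmin : HasMinimalSupport S ℳ m)
    {g : G} (hg : g ∈ (decompose ℳ m).support) {s : S}
    (hs : op s • (decompose ℳ m g : M) = 0) : op s • m = 0 := by
  rw [op_smul_eq_sum_support_decompose 𝒮]
  refine Finset.sum_eq_zero fun h hh => ?_
  rw [← op_smul_coe_decompose_eq_zero_iff_of_mem hsmul hmin (SetLike.coe_mem _) hg,
    ← coe_decompose_mul_op_smul hsmul (SetLike.coe_mem _) hh, hs, decompose_zero,
    DirectSum.zero_apply, ZeroMemClass.coe_zero]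

theorem op_smul_coe_decompose_eq_zero_of_op_smul_eq_zero [Decomposition 𝒮] [UniqueProds G]
    (hsmul : IsGradedRightSMul 𝒮 ℳ) {m : M} (hmin : HasMinimalSupport S ℳ m)
    {g₀ : G} (hg₀ : g₀ ∈ (decompose ℳ m).support) (s : S) (hs : op s • m = 0) :
    op s • (decompose ℳ m g₀ : M) = 0 := by
  have := UniqueProds.toIsCancelMul (G := G)
  induction hn : #(decompose 𝒮 s).support using Nat.strong_induction_on generalizing s with
  | _ n ih =>
    obtain hT | hT := (decompose 𝒮 s).support.eq_empty_or_nonempty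
    · rw [← sum_support_decompose 𝒮 s, hT, Finset.sum_empty, op_zero, zero_smul]
    obtain ⟨g, hg, h, hh, huniq⟩ := UniqueProds.uniqueMul_of_nonempty ⟨g₀, hg₀⟩ hT
    set sₕ := (decompose 𝒮 s h : S)
    have hsₕ : sₕ ∈ 𝒮 h := SetLike.coe_mem _
    have hsₕm : op sₕ • m = 0 := by
      rw [← op_smul_coe_decompose_eq_zero_iff_of_mem hsmul hmin hsₕ hg,
        ← coe_decompose_op_smul_of_uniqueMul hsmul hg hh huniq, hs, decompose_zero,
        DirectSum.zero_apply, ZeroMemClass.coe_zero]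
    have hsₕb : op sₕ • (decompose ℳ m g₀ : M) = 0 :=
      (op_smul_coe_decompose_eq_zero_iff_of_mem hsmul hmin hsₕ hg₀).2 hsₕm
    have hrest : op (s - sₕ) • (decompose ℳ m g₀ : M) = 0 := by
      refine ih _ ?_ (s - sₕ) (by rw [op_sub, sub_smul, hs, hsₕm, sub_zero]) rfl
      rw [support_decompose_sub_coe_decompose, Finset.card_erase_of_mem hh]
      have := hT.card_pos
      omega
    rw [← add_sub_cancel sₕ s, op_add, add_smul, hsₕb, hrest, add_zero]

theorem op_smul_coe_decompose_eq_zero_iff [Decomposition 𝒮] [UniqueProds G]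
    (hsmul : IsGradedRightSMul 𝒮 ℳ) {m : M} (hmin : HasMinimalSupport S ℳ m)
    {g₀ : G} (hg₀ : g₀ ∈ (decompose ℳ m).support) (s : S) :
    op s • (decompose ℳ m g₀ : M) = 0 ↔ op s • m = 0 :=
  have := UniqueProds.toIsCancelMul (G := G)
  ⟨op_smul_eq_zero_of_op_smul_coe_decompose_eq_zero hsmul hmin hg₀,
    op_smul_coe_decompose_eq_zero_of_op_smul_eq_zero hsmul hmin hg₀ s⟩

end GradedModule

theorem stmt7_general {G : Type*} [Monoid G] [DecidableEq G] (hUP : IsUPM G)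
    {S : Type*} [Ring S] (𝒮 : G → AddSubgroup S)
    (hSdir : DirectSum.IsInternal 𝒮)
    {M : Type*} [AddCommGroup M] [Module Sᵐᵒᵖ M] (ℳ : G → AddSubgroup M)
    (hMdir : DirectSum.IsInternal ℳ)
    (hsmul : ∀ {g h : G} {m : M} {s : S}, m ∈ ℳ g → s ∈ 𝒮 h →
      MulOpposite.op s • m ∈ ℳ (g * h))
    (N : Submodule Sᵐᵒᵖ M) (hN : N ≠ ⊥) :
    ∃ (g : G) (b : M), b ∈ ℳ g ∧ b ≠ 0 ∧
      ∃ P : Submodule Sᵐᵒᵖ M, P ≤ N ∧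
        Nonempty (P ≃ₗ[Sᵐᵒᵖ] (Submodule.span Sᵐᵒᵖ ({b} : Set M))) := by
  classical
  let := hSdir.chooseDecomposition
  let := hMdir.chooseDecomposition
  have := hUP.uniqueProds
  obtain ⟨m, ⟨hmN, hm0⟩, hleast⟩ := (measure fun x => #(decompose ℳ x).support).wf.has_min
    {x | x ∈ N ∧ x ≠ 0} ((Submodule.ne_bot_iff N).1 hN)
  have hmin : HasMinimalSupport S ℳ m := fun s hs =>
    not_lt.1 (hleast _ ⟨N.smul_mem _ hmN, hs⟩)
  obtain ⟨g₀, hg₀⟩ := support_decompose_nonempty ℳ hm0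
  refine ⟨g₀, decompose ℳ m g₀, SetLike.coe_mem _, ?_, Submodule.span _ {m},
    (Submodule.span_singleton_le_iff_mem _ _).2 hmN,
    ⟨Submodule.spanSingletonEquivOfSMulEqZeroIff fun r => ?_⟩⟩
  · simpa using hg₀
  · rw [← op_unop r]
    exact (op_smul_coe_decompose_eq_zero_iff hsmul hmin hg₀ _).symm

/-- Let `G` be a unique product monoid, `S` a `G`-graded ring, `M` a graded right
`S`-module, and `N` a nonzero `S`-submodule of `M`.  Then `N` contains an
`S`-submodule isomorphic to `bS` for some nonzero homogeneous `b ∈ M`. -/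
theorem stmt7 {G : Type*} [Monoid G] [DecidableEq G] (hUP : IsUPM G)
    {S : Type*} [Ring S] (𝒮 : G → AddSubgroup S)
    (hSdir : DirectSum.IsInternal 𝒮) (hone : (1 : S) ∈ 𝒮 1)
    (hmul : ∀ {g h : G} {a b : S}, a ∈ 𝒮 g → b ∈ 𝒮 h → a * b ∈ 𝒮 (g * h))
    {M : Type*} [AddCommGroup M] [Module Sᵐᵒᵖ M] (ℳ : G → AddSubgroup M)
    (hMdir : DirectSum.IsInternal ℳ)
    (hsmul : ∀ {g h : G} {m : M} {s : S}, m ∈ ℳ g → s ∈ 𝒮 h →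
      MulOpposite.op s • m ∈ ℳ (g * h))
    (N : Submodule Sᵐᵒᵖ M) (hN : N ≠ ⊥) :
    ∃ (g : G) (b : M), b ∈ ℳ g ∧ b ≠ 0 ∧
      ∃ P : Submodule Sᵐᵒᵖ M, P ≤ N ∧
        Nonempty (P ≃ₗ[Sᵐᵒᵖ] (Submodule.span Sᵐᵒᵖ ({b} : Set M))) :=
  stmt7_general hUP 𝒮 hSdir ℳ hMdir hsmul N hN
end

section
/- Let G be a unique product monoid, S a G-graded ring, M a graded right S-module, and N a prime S-submodule of M. Then ann(N) is a homogeneous prime ideal of S. -/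
/-!
Choose `m ∈ N`, `m ≠ 0`, whose homogeneous support is as small as possible. Let `cᵢ` be
homogeneous of pairwise distinct degrees `dᵢ` with `∑ cᵢ ∈ ann N`, and let `n ∈ N` have support
no larger than that of `m`. A uniquely represented product `y₀ * d_{i₀}` of `supp n` and `{dᵢ}`
shows that the `y₀ * d_{i₀}`-component of `n c_{i₀}` equals that of `n ∑ cᵢ = 0`; so
`n c_{i₀}` has strictly smaller support than `n` and vanishes by minimality. Removing `c_{i₀}`
and repeating gives `n cᵢ = 0` for all `i`. The homogeneous pieces of each `m s` are such `n`,
so every `cᵢ` annihilates the nonzero submodule `m S ≤ N`, and primeness of `N` gives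
`cᵢ ∈ ann N`. Primeness of `ann N` is the same transfer: if `n a ≠ 0`, then `b` annihilates
`n a S` whenever `a S b ⊆ ann N`.
-/

open MulOpposite DirectSum Finset

theorem IsUPM.uniqueProds_s8 {G : Type*} [Monoid G] (h : IsUPM G) : UniqueProds G where
  uniqueMul_of_nonempty hX hY := by
    obtain ⟨x, hx, y, hy, huniq⟩ := h _ _ hX hY
    exact ⟨x, hx, y, hy, fun x' y' hx' hy' he => huniq x' hx' y' hy' he⟩

namespace Submodule

variable {S M : Type*} [Ring S] [AddCommGroup M] [Module Sᵐᵒᵖ M]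

def rightAnnihilator (N : Submodule Sᵐᵒᵖ M) : Set S := {s | ∀ n ∈ N, op s • n = 0}

variable {N : Submodule Sᵐᵒᵖ M}

theorem zero_mem_rightAnnihilator : (0 : S) ∈ N.rightAnnihilator := fun n _ => by
  rw [op_zero, zero_smul]

theorem add_mem_rightAnnihilator {a b : S} (ha : a ∈ N.rightAnnihilator)
    (hb : b ∈ N.rightAnnihilator) : a + b ∈ N.rightAnnihilator := fun n hn => by
  rw [op_add, add_smul, ha n hn, hb n hn, add_zero]

theorem neg_mem_rightAnnihilator {a : S} (ha : a ∈ N.rightAnnihilator) :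
    -a ∈ N.rightAnnihilator := fun n hn => by
  rw [op_neg, neg_smul, ha n hn, neg_zero]

theorem mul_mem_rightAnnihilator_right {a : S} (ha : a ∈ N.rightAnnihilator) (t : S) :
    a * t ∈ N.rightAnnihilator := fun n hn => by
  rw [op_mul, mul_smul, ha n hn, smul_zero]

theorem mul_mem_rightAnnihilator_left {a : S} (ha : a ∈ N.rightAnnihilator) (t : S) :
    t * a ∈ N.rightAnnihilator := fun n hn => by
  rw [op_mul, mul_smul]
  exact ha _ (N.smul_mem _ hn)

theorem one_notMem_rightAnnihilator (hN : N ≠ ⊥) : (1 : S) ∉ N.rightAnnihilator := by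
  intro h1
  obtain ⟨n, hnN, hn0⟩ := N.ne_bot_iff.1 hN
  exact hn0 (by simpa using h1 n hnN)

theorem mem_rightAnnihilator_of_forall_mul_smul_eq_zero
    (hprime : ∀ P ≤ N, P ≠ ⊥ → P.rightAnnihilator = N.rightAnnihilator)
    {n : M} (hnN : n ∈ N) (hn0 : n ≠ 0) {x : S} (hx : ∀ s : S, op (s * x) • n = 0) :
    x ∈ N.rightAnnihilator := by
  have hspan_le : Sᵐᵒᵖ ∙ n ≤ N := (span_singleton_le_iff_mem n N).2 hnN
  have hspan_ne : Sᵐᵒᵖ ∙ n ≠ ⊥ := (span_singleton_eq_bot.not).2 hn0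
  rw [← hprime _ hspan_le hspan_ne]
  intro m hm
  obtain ⟨r, rfl⟩ := mem_span_singleton.1 hm
  rw [smul_smul, ← op_unop r, ← op_mul]
  exact hx r.unop

theorem mem_or_mem_rightAnnihilator_of_forall_mul_mul_mem
    (hprime : ∀ P ≤ N, P ≠ ⊥ → P.rightAnnihilator = N.rightAnnihilator)
    {a b : S} (hab : ∀ s : S, a * s * b ∈ N.rightAnnihilator) :
    a ∈ N.rightAnnihilator ∨ b ∈ N.rightAnnihilator := by
  refine or_iff_not_imp_left.2 fun ha => ?_
  obtain ⟨n, hnN, hn⟩ : ∃ n ∈ N, op a • n ≠ 0 := by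
    simpa [rightAnnihilator] using ha
  refine mem_rightAnnihilator_of_forall_mul_smul_eq_zero hprime (N.smul_mem _ hnN) hn
    fun s => ?_
  rw [smul_smul, ← op_mul, ← mul_assoc]
  exact hab s n hnN

end Submodule

section Graded

variable {G S M : Type*} [DecidableEq G] [Ring S] [AddCommGroup M] [Module Sᵐᵒᵖ M]
  (𝒮 : G → AddSubgroup S) (ℳ : G → AddSubgroup M) [Decomposition ℳ]

open Classical in
noncomputable def gradedSupport (m : M) : Finset G := (decompose ℳ m).support

variable {ℳ}

open Classical in
theorem mem_gradedSupport {m : M} {g : G} :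
    g ∈ gradedSupport ℳ m ↔ decompose ℳ m g ≠ 0 :=
  DFinsupp.mem_support_iff

theorem gradedSupport_nonempty {m : M} (hm : m ≠ 0) : (gradedSupport ℳ m).Nonempty := by
  by_contra h
  refine hm ((decompose ℳ).injective ?_)
  ext g : 1
  rw [decompose_zero]
  by_contra hg
  exact h ⟨g, mem_gradedSupport.2 hg⟩

open Classical in
theorem sum_gradedSupport (m : M) : ∑ g ∈ gradedSupport ℳ m, (decompose ℳ m g : M) = m :=
  sum_support_decompose ℳ m

theorem exists_mem_ne_zero_forall_card_gradedSupport_le {N : Submodule Sᵐᵒᵖ M} (hN : N ≠ ⊥) :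
    ∃ m ∈ N, m ≠ 0 ∧ ∀ n ∈ N, n ≠ 0 → #(gradedSupport ℳ m) ≤ #(gradedSupport ℳ n) := by
  obtain ⟨m, ⟨hmN, hm0⟩, hmin⟩ := (measure fun n => #(gradedSupport ℳ n)).wf.has_min
    {n | n ∈ N ∧ n ≠ 0} (N.ne_bot_iff.1 hN)
  exact ⟨m, hmN, hm0, fun n hnN hn0 => not_lt.1 (hmin n ⟨hnN, hn0⟩)⟩

variable [Mul G] {𝒮}

theorem gradedSupport_smul_subset
    (hsmul : ∀ {g h : G} {m : M} {s : S}, m ∈ ℳ g → s ∈ 𝒮 h → op s • m ∈ ℳ (g * h))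
    {x : S} {h : G} (hx : x ∈ 𝒮 h) (m : M) :
    gradedSupport ℳ (op x • m) ⊆ (gradedSupport ℳ m).image (· * h) := by
  intro g hg
  rw [mem_gradedSupport] at hg
  conv at hg => rw [← sum_gradedSupport (ℳ := ℳ) m, smul_sum, decompose_sum,
    DFinsupp.finsetSum_apply]
  obtain ⟨y, hy, hne⟩ := exists_ne_zero_of_sum_ne_zero hg
  refine mem_image.2 ⟨y, hy, by_contra fun hyg => hne ?_⟩
  exact Subtype.ext (decompose_of_mem_ne ℳ (hsmul (decompose ℳ m y).2 hx) hyg)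

theorem card_gradedSupport_smul_lt
    (hsmul : ∀ {g h : G} {m : M} {s : S}, m ∈ ℳ g → s ∈ 𝒮 h → op s • m ∈ ℳ (g * h))
    {x : S} {h : G} (hx : x ∈ 𝒮 h) {m : M} {g : G} (hg : g ∈ gradedSupport ℳ m)
    (h0 : decompose ℳ (op x • m) (g * h) = 0) :
    #(gradedSupport ℳ (op x • m)) < #(gradedSupport ℳ m) := by
  have hsub : gradedSupport ℳ (op x • m) ⊆ ((gradedSupport ℳ m).image (· * h)).erase (g * h) :=
    fun g' hg' => mem_erase.2 ⟨fun he => mem_gradedSupport.1 hg' (he ▸ h0),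
      gradedSupport_smul_subset hsmul hx m hg'⟩
  calc #(gradedSupport ℳ (op x • m))
      ≤ #(((gradedSupport ℳ m).image (· * h)).erase (g * h)) := card_le_card hsub
    _ < #((gradedSupport ℳ m).image (· * h)) :=
        card_erase_lt_of_mem (mem_image_of_mem _ hg)
    _ ≤ #(gradedSupport ℳ m) := card_image_le

theorem decompose_smul_sum_apply_of_uniqueMul
    (hsmul : ∀ {g h : G} {m : M} {s : S}, m ∈ ℳ g → s ∈ 𝒮 h → op s • m ∈ ℳ (g * h))
    {ι : Type*} {c : ι → S} {d : ι → G} (hd : Function.Injective d)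
    (hc : ∀ i, c i ∈ 𝒮 (d i)) {t : Finset ι} {i₀ : ι} (hi₀ : i₀ ∈ t) {m : M} {y₀ : G}
    (hu : UniqueMul (gradedSupport ℳ m) (t.image d) y₀ (d i₀)) :
    decompose ℳ (op (∑ i ∈ t, c i) • m) (y₀ * d i₀) =
      decompose ℳ (op (c i₀) • m) (y₀ * d i₀) := by
  rw [op_sum, sum_smul, decompose_sum, DFinsupp.finsetSum_apply]
  refine sum_eq_single_of_mem i₀ hi₀ fun i hi hne => ?_
  by_contra hne0
  obtain ⟨y, hy, hyi⟩ :=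
    mem_image.1 (gradedSupport_smul_subset hsmul (hc i) m (mem_gradedSupport.2 hne0))
  exact hne (hd (hu hy (mem_image_of_mem d hi) hyi).2)

theorem smul_eq_zero_of_smul_sum_eq_zero [UniqueProds G]
    (hsmul : ∀ {g h : G} {m : M} {s : S}, m ∈ ℳ g → s ∈ 𝒮 h → op s • m ∈ ℳ (g * h))
    {ι : Type*} {c : ι → S} {d : ι → G} (hd : Function.Injective d)
    (hc : ∀ i, c i ∈ 𝒮 (d i)) {N : Submodule Sᵐᵒᵖ M} {n : M} (hnN : n ∈ N)
    (hmin : ∀ n' ∈ N, n' ≠ 0 → #(gradedSupport ℳ n) ≤ #(gradedSupport ℳ n'))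
    (t : Finset ι) (ht : op (∑ i ∈ t, c i) • n = 0) : ∀ i ∈ t, op (c i) • n = 0 := by
  classical
  induction t using Finset.strongInduction with
  | H t ih =>
    intro i hi
    rcases eq_or_ne n 0 with rfl | hn0
    · exact smul_zero _
    obtain ⟨y₀, hy₀, _, hx₀, hu⟩ := UniqueProds.uniqueMul_of_nonempty
      (gradedSupport_nonempty (ℳ := ℳ) hn0) ⟨d i, mem_image_of_mem d hi⟩
    obtain ⟨i₀, hi₀, rfl⟩ := mem_image.1 hx₀
    have hi₀n : op (c i₀) • n = 0 := by
      by_contra hne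
      refine (hmin _ (N.smul_mem _ hnN) hne).not_gt
        (card_gradedSupport_smul_lt hsmul (hc i₀) hy₀ ?_)
      rw [← decompose_smul_sum_apply_of_uniqueMul hsmul hd hc hi₀ hu, ht,
        decompose_zero (ℳ := ℳ), DirectSum.zero_apply]
    have hrest : op (∑ i ∈ t.erase i₀, c i) • n = 0 := by
      rwa [← sum_erase_add t c hi₀, op_add, add_smul, hi₀n, add_zero] at ht
    rcases eq_or_ne i i₀ with rfl | hne
    · exact hi₀n
    · exact ih _ (erase_ssubset hi₀) hrest i (mem_erase.2 ⟨hne, hi⟩)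

theorem op_mul_smul_eq_zero_of_sum_mem_rightAnnihilator [Decomposition 𝒮] [UniqueProds G]
    (hsmul : ∀ {g h : G} {m : M} {s : S}, m ∈ ℳ g → s ∈ 𝒮 h → op s • m ∈ ℳ (g * h))
    {ι : Type*} [Fintype ι] {c : ι → S} {d : ι → G} (hd : Function.Injective d)
    (hc : ∀ i, c i ∈ 𝒮 (d i)) {N : Submodule Sᵐᵒᵖ M}
    (hsum : (∑ i, c i) ∈ N.rightAnnihilator) {m : M} (hmN : m ∈ N)
    (hmin : ∀ n ∈ N, n ≠ 0 → #(gradedSupport ℳ m) ≤ #(gradedSupport ℳ n)) (s : S) (i : ι) :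
    op (s * c i) • m = 0 := by
  rw [← sum_gradedSupport (ℳ := 𝒮) s, sum_mul, op_sum, sum_smul]
  refine sum_eq_zero fun h _ => ?_
  have hx := (decompose 𝒮 s h).2
  have hxN : op (decompose 𝒮 s h : S) • m ∈ N := N.smul_mem _ hmN
  have hxmin : ∀ n ∈ N, n ≠ 0 →
      #(gradedSupport ℳ (op (decompose 𝒮 s h : S) • m)) ≤ #(gradedSupport ℳ n) :=
    fun n hnN hn0 => calc
      _ ≤ #((gradedSupport ℳ m).image (· * h)) :=
          card_le_card (gradedSupport_smul_subset hsmul hx m)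
      _ ≤ #(gradedSupport ℳ m) := card_image_le
      _ ≤ _ := hmin n hnN hn0
  rw [op_mul, mul_smul]
  exact smul_eq_zero_of_smul_sum_eq_zero hsmul hd hc hxN hxmin univ (hsum _ hxN) i (mem_univ i)

theorem mem_rightAnnihilator_of_sum_mem [Decomposition 𝒮] [UniqueProds G]
    (hsmul : ∀ {g h : G} {m : M} {s : S}, m ∈ ℳ g → s ∈ 𝒮 h → op s • m ∈ ℳ (g * h))
    {N : Submodule Sᵐᵒᵖ M} (hN : N ≠ ⊥)
    (hprime : ∀ P ≤ N, P ≠ ⊥ → P.rightAnnihilator = N.rightAnnihilator)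
    {ι : Type*} [Fintype ι] {c : ι → S} {d : ι → G} (hd : Function.Injective d)
    (hc : ∀ i, c i ∈ 𝒮 (d i)) (hsum : (∑ i, c i) ∈ N.rightAnnihilator) (i : ι) :
    c i ∈ N.rightAnnihilator := by
  obtain ⟨m, hmN, hm0, hmin⟩ := exists_mem_ne_zero_forall_card_gradedSupport_le (ℳ := ℳ) hN
  exact N.mem_rightAnnihilator_of_forall_mul_smul_eq_zero hprime hmN hm0 fun s =>
    op_mul_smul_eq_zero_of_sum_mem_rightAnnihilator hsmul hd hc hsum hmN hmin s i

end Graded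

theorem stmt8_general {G : Type*} [Monoid G] [DecidableEq G] (hUP : IsUPM G)
    {S : Type*} [Ring S] (𝒮 : G → AddSubgroup S)
    (hSdir : DirectSum.IsInternal 𝒮)
    {M : Type*} [AddCommGroup M] [Module Sᵐᵒᵖ M] (ℳ : G → AddSubgroup M)
    (hMdir : DirectSum.IsInternal ℳ)
    (hsmul : ∀ {g h : G} {m : M} {s : S}, m ∈ ℳ g → s ∈ 𝒮 h →
      MulOpposite.op s • m ∈ ℳ (g * h))
    (N : Submodule Sᵐᵒᵖ M) (hN : N ≠ ⊥)
    (hprime : ∀ P : Submodule Sᵐᵒᵖ M, P ≤ N → P ≠ ⊥ →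
      {s : S | ∀ n ∈ P, MulOpposite.op s • n = 0} =
        {s : S | ∀ n ∈ N, MulOpposite.op s • n = 0}) :
    (0 : S) ∈ {s : S | ∀ n ∈ N, MulOpposite.op s • n = 0} ∧
    (∀ a ∈ {s : S | ∀ n ∈ N, MulOpposite.op s • n = 0},
      ∀ b ∈ {s : S | ∀ n ∈ N, MulOpposite.op s • n = 0},
      a + b ∈ {s : S | ∀ n ∈ N, MulOpposite.op s • n = 0}) ∧
    (∀ a ∈ {s : S | ∀ n ∈ N, MulOpposite.op s • n = 0},
      -a ∈ {s : S | ∀ n ∈ N, MulOpposite.op s • n = 0}) ∧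
    (∀ a ∈ {s : S | ∀ n ∈ N, MulOpposite.op s • n = 0}, ∀ t : S,
      a * t ∈ {s : S | ∀ n ∈ N, MulOpposite.op s • n = 0} ∧
      t * a ∈ {s : S | ∀ n ∈ N, MulOpposite.op s • n = 0}) ∧
    (∀ (k : ℕ) (c : Fin k → S) (d : Fin k → G), Function.Injective d →
      (∀ i, c i ∈ 𝒮 (d i)) →
      (∑ i, c i) ∈ {s : S | ∀ n ∈ N, MulOpposite.op s • n = 0} →
      ∀ i, c i ∈ {s : S | ∀ n ∈ N, MulOpposite.op s • n = 0}) ∧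
    (1 : S) ∉ {s : S | ∀ n ∈ N, MulOpposite.op s • n = 0} ∧
    (∀ a b : S, (∀ s : S, a * s * b ∈ {s : S | ∀ n ∈ N, MulOpposite.op s • n = 0}) →
      a ∈ {s : S | ∀ n ∈ N, MulOpposite.op s • n = 0} ∨
      b ∈ {s : S | ∀ n ∈ N, MulOpposite.op s • n = 0}) := by
  let _ := hSdir.chooseDecomposition
  let _ := hMdir.chooseDecomposition
  have _ := hUP.uniqueProds_s8
  exact ⟨Submodule.zero_mem_rightAnnihilator,
    fun _ ha _ hb => Submodule.add_mem_rightAnnihilator ha hb,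
    fun _ ha => Submodule.neg_mem_rightAnnihilator ha,
    fun _ ha t => ⟨Submodule.mul_mem_rightAnnihilator_right ha t,
      Submodule.mul_mem_rightAnnihilator_left ha t⟩,
    fun _ _ _ hd hc hsum => mem_rightAnnihilator_of_sum_mem (ℳ := ℳ) hsmul hN hprime hd hc hsum,
    Submodule.one_notMem_rightAnnihilator hN,
    fun _ _ hab => Submodule.mem_or_mem_rightAnnihilator_of_forall_mul_mul_mem hprime hab⟩

/-- Let `G` be a unique product monoid, `S` a `G`-graded ring, `M` a graded right
`S`-module, and `N` a prime `S`-submodule of `M` (nonzero, and every nonzero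
submodule contained in `N` has the same annihilator as `N`).  Then `ann(N)` is a
homogeneous prime (two-sided, proper) ideal of `S`. -/
theorem stmt8 {G : Type*} [Monoid G] [DecidableEq G] (hUP : IsUPM G)
    {S : Type*} [Ring S] (𝒮 : G → AddSubgroup S)
    (hSdir : DirectSum.IsInternal 𝒮) (hone : (1 : S) ∈ 𝒮 1)
    (hmul : ∀ {g h : G} {a b : S}, a ∈ 𝒮 g → b ∈ 𝒮 h → a * b ∈ 𝒮 (g * h))
    {M : Type*} [AddCommGroup M] [Module Sᵐᵒᵖ M] (ℳ : G → AddSubgroup M)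
    (hMdir : DirectSum.IsInternal ℳ)
    (hsmul : ∀ {g h : G} {m : M} {s : S}, m ∈ ℳ g → s ∈ 𝒮 h →
      MulOpposite.op s • m ∈ ℳ (g * h))
    (N : Submodule Sᵐᵒᵖ M) (hN : N ≠ ⊥)
    (hprime : ∀ P : Submodule Sᵐᵒᵖ M, P ≤ N → P ≠ ⊥ →
      {s : S | ∀ n ∈ P, MulOpposite.op s • n = 0} =
        {s : S | ∀ n ∈ N, MulOpposite.op s • n = 0}) :
    (0 : S) ∈ {s : S | ∀ n ∈ N, MulOpposite.op s • n = 0} ∧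
    (∀ a ∈ {s : S | ∀ n ∈ N, MulOpposite.op s • n = 0},
      ∀ b ∈ {s : S | ∀ n ∈ N, MulOpposite.op s • n = 0},
      a + b ∈ {s : S | ∀ n ∈ N, MulOpposite.op s • n = 0}) ∧
    (∀ a ∈ {s : S | ∀ n ∈ N, MulOpposite.op s • n = 0},
      -a ∈ {s : S | ∀ n ∈ N, MulOpposite.op s • n = 0}) ∧
    (∀ a ∈ {s : S | ∀ n ∈ N, MulOpposite.op s • n = 0}, ∀ t : S,
      a * t ∈ {s : S | ∀ n ∈ N, MulOpposite.op s • n = 0} ∧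
      t * a ∈ {s : S | ∀ n ∈ N, MulOpposite.op s • n = 0}) ∧
    (∀ (k : ℕ) (c : Fin k → S) (d : Fin k → G), Function.Injective d →
      (∀ i, c i ∈ 𝒮 (d i)) →
      (∑ i, c i) ∈ {s : S | ∀ n ∈ N, MulOpposite.op s • n = 0} →
      ∀ i, c i ∈ {s : S | ∀ n ∈ N, MulOpposite.op s • n = 0}) ∧
    (1 : S) ∉ {s : S | ∀ n ∈ N, MulOpposite.op s • n = 0} ∧
    (∀ a b : S, (∀ s : S, a * s * b ∈ {s : S | ∀ n ∈ N, MulOpposite.op s • n = 0}) →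
      a ∈ {s : S | ∀ n ∈ N, MulOpposite.op s • n = 0} ∨
      b ∈ {s : S | ∀ n ∈ N, MulOpposite.op s • n = 0}) :=
  stmt8_general hUP 𝒮 hSdir ℳ hMdir hsmul N hN hprime
end

section
/- Let G be a unique product monoid, S a G-graded ring, and M a graded right S-module. Then M is a prime module if and only if for any homogeneous m ∈ M and homogeneous b ∈ S, if m S_g b = 0 for all g ∈ G then m = 0 or Mb = 0. -/
namespace Stmt9Aux

open MulOpposite DirectSum
open scoped Classical

/-! ### Cancellativity of unique product monoids -/

lemma upm_left_cancel {G : Type*} [Monoid G] (hUP : IsUPM G) {a b c : G}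
    (h : a * b = a * c) : b = c := by
  classical
  obtain ⟨x, hx, y, hy, hu⟩ := hUP {a} {b, c} ⟨a, by simp⟩ ⟨b, by simp⟩
  obtain rfl : x = a := Finset.mem_singleton.mp hx
  have hb : b ∈ ({b, c} : Finset G) := by simp
  have hc : c ∈ ({b, c} : Finset G) := by simp
  rcases Finset.mem_insert.mp hy with h1 | h2
  · -- y = b
    have := (hu x hx c hc (by rw [← h, h1])).2
    rw [this, h1]
  · -- y = c
    have hyc : y = c := Finset.mem_singleton.mp h2
    have := (hu x hx b hb (by rw [h, hyc])).2
    rw [this, hyc]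

lemma upm_right_cancel {G : Type*} [Monoid G] (hUP : IsUPM G) {a b c : G}
    (h : b * a = c * a) : b = c := by
  classical
  obtain ⟨x, hx, y, hy, hu⟩ := hUP {b, c} {a} ⟨b, by simp⟩ ⟨a, by simp⟩
  obtain rfl : y = a := Finset.mem_singleton.mp hy
  have hb : b ∈ ({b, c} : Finset G) := by simp
  have hc : c ∈ ({b, c} : Finset G) := by simp
  rcases Finset.mem_insert.mp hx with h1 | h2
  · -- x = b
    have := (hu c hc y hy (by rw [← h, h1])).1
    rw [this, h1]
  · -- x = c
    have hxc : x = c := Finset.mem_singleton.mp h2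
    have := (hu b hb y hy (by rw [h, hxc])).1
    rw [this, hxc]

/-! ### Decomposition machinery for an internal direct sum of additive subgroups -/

section Decomp

variable {G : Type*} [DecidableEq G] {A : Type*} [AddCommGroup A]
  {ℬ : G → AddSubgroup A}

noncomputable def decompE (hd : DirectSum.IsInternal ℬ) : (⨁ g, ℬ g) ≃+ A :=
  AddEquiv.ofBijective (DirectSum.coeAddMonoidHom ℬ) hd

lemma decompE_apply (hd : DirectSum.IsInternal ℬ) (x : ⨁ g, ℬ g) :
    decompE hd x = DirectSum.coeAddMonoidHom ℬ x := rfl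

noncomputable def proj (hd : DirectSum.IsInternal ℬ) (g : G) (a : A) : A :=
  ((decompE hd).symm a g : A)

lemma proj_mem (hd : DirectSum.IsInternal ℬ) (g : G) (a : A) :
    proj hd g a ∈ ℬ g := ((decompE hd).symm a g).2

noncomputable def suppd (hd : DirectSum.IsInternal ℬ) (a : A) : Finset G :=
  ((decompE hd).symm a).support

lemma symm_of_mem (hd : DirectSum.IsInternal ℬ) {g : G} {a : A} (h : a ∈ ℬ g) :
    (decompE hd).symm a = DirectSum.of (fun g => ℬ g) g ⟨a, h⟩ := by
  apply (decompE hd).injective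
  rw [AddEquiv.apply_symm_apply, decompE_apply, DirectSum.coeAddMonoidHom_of]

lemma proj_of_mem_same (hd : DirectSum.IsInternal ℬ) {g : G} {a : A} (h : a ∈ ℬ g) :
    proj hd g a = a := by
  unfold proj
  rw [symm_of_mem hd h, DirectSum.of_eq_same]

lemma proj_of_mem_ne (hd : DirectSum.IsInternal ℬ) {g g' : G} {a : A} (h : a ∈ ℬ g)
    (hne : g' ≠ g) : proj hd g' a = 0 := by
  unfold proj
  rw [symm_of_mem hd h, DirectSum.of_eq_of_ne _ _ _ hne]
  rfl

lemma proj_zero (hd : DirectSum.IsInternal ℬ) (g : G) : proj hd g (0 : A) = 0 := by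
  unfold proj
  rw [map_zero]
  rfl

lemma sum_proj (hd : DirectSum.IsInternal ℬ) (a : A) :
    ∑ g ∈ suppd hd a, proj hd g a = a := by
  conv_rhs => rw [← (decompE hd).apply_symm_apply a,
    ← DirectSum.sum_support_of ((decompE hd).symm a), map_sum]
  exact Finset.sum_congr rfl fun g _ => by
    rw [decompE_apply, DirectSum.coeAddMonoidHom_of]; rfl

lemma proj_finsum (hd : DirectSum.IsInternal ℬ) {ι : Type*} (g : G) (T : Finset ι)
    (v : ι → A) : proj hd g (∑ i ∈ T, v i) = ∑ i ∈ T, proj hd g (v i) := by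
  unfold proj
  rw [map_sum, DFinsupp.finset_sum_apply, AddSubmonoidClass.coe_finset_sum]

lemma proj_sum_eq (hd : DirectSum.IsInternal ℬ) {ι : Type*} {T : Finset ι} {f : ι → G}
    {v : ι → A} (hv : ∀ i ∈ T, v i ∈ ℬ (f i))
    (hinj : ∀ i ∈ T, ∀ j ∈ T, f i = f j → i = j)
    {x : ι} (hx : x ∈ T) :
    proj hd (f x) (∑ i ∈ T, v i) = v x := by
  rw [proj_finsum hd]
  rw [Finset.sum_eq_single_of_mem x hx]
  · exact proj_of_mem_same hd (hv x hx)
  · intro i hi hne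
    exact proj_of_mem_ne hd (hv i hi) fun he => hne (hinj i hi x hx he.symm)

lemma suppd_sum_subset (hd : DirectSum.IsInternal ℬ) {ι : Type*} {T : Finset ι}
    {f : ι → G} {v : ι → A} (hv : ∀ i ∈ T, v i ∈ ℬ (f i)) :
    suppd hd (∑ i ∈ T, v i) ⊆ T.image f := by
  intro g hg
  rw [suppd, DFinsupp.mem_support_iff, map_sum, DFinsupp.finset_sum_apply] at hg
  obtain ⟨i, hi, hne⟩ := Finset.exists_ne_zero_of_sum_ne_zero hg
  rw [symm_of_mem hd (hv i hi)] at hne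
  by_cases h : f i = g
  · exact Finset.mem_image.2 ⟨i, hi, h⟩
  · exact absurd (DirectSum.of_eq_of_ne _ _ _ (Ne.symm h)) hne

lemma suppd_eq_empty (hd : DirectSum.IsInternal ℬ) (a : A) :
    suppd hd a = ∅ ↔ a = 0 := by
  rw [suppd, DFinsupp.support_eq_empty]
  exact map_eq_zero_iff _ (decompE hd).symm.injective

lemma proj_ne_zero (hd : DirectSum.IsInternal ℬ) {a : A} {g : G}
    (h : g ∈ suppd hd a) : proj hd g a ≠ 0 := by
  rw [suppd, DFinsupp.mem_support_iff] at h
  intro h0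
  exact h (Subtype.ext h0)

end Decomp

/-- Pushing `op` of a finite sum through a scalar action. -/
lemma op_sum_smul {S : Type*} [Ring S] {M : Type*} [AddCommGroup M] [Module Sᵐᵒᵖ M]
    {ι : Type*} (T : Finset ι) (c : ι → S) (m : M) :
    op (∑ i ∈ T, c i) • m = ∑ i ∈ T, op (c i) • m := by
  rw [show op (∑ i ∈ T, c i) = ∑ i ∈ T, op (c i) from
    map_sum (MulOpposite.opAddEquiv (α := S)).toAddMonoidHom c T, Finset.sum_smul]

lemma opSmulOpSmul {S : Type*} [Ring S] {M : Type*} [AddCommGroup M]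
    [Module Sᵐᵒᵖ M] (a c : S) (n : M) :
    op a • (op c • n) = op (c * a) • n := by
  rw [smul_smul, ← op_mul]

end Stmt9Aux

open Stmt9Aux MulOpposite in
/-- Let `G` be a unique product monoid, `S` a `G`-graded ring, and `M` a nonzero
graded right `S`-module.  Then `M` is a prime module (every nonzero submodule has
the same annihilator as `M`) iff for any homogeneous `m ∈ M` and homogeneous
`b ∈ S`, `m S_g b = 0` for all `g ∈ G` implies `m = 0` or `M b = 0`. -/
theorem stmt9 {G : Type*} [Monoid G] [DecidableEq G] (hUP : IsUPM G)
    {S : Type*} [Ring S] (𝒮 : G → AddSubgroup S)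
    (hSdir : DirectSum.IsInternal 𝒮) (hone : (1 : S) ∈ 𝒮 1)
    (hmul : ∀ {g h : G} {a b : S}, a ∈ 𝒮 g → b ∈ 𝒮 h → a * b ∈ 𝒮 (g * h))
    {M : Type*} [AddCommGroup M] [Module Sᵐᵒᵖ M] (ℳ : G → AddSubgroup M)
    (hMdir : DirectSum.IsInternal ℳ)
    (hsmul : ∀ {g h : G} {m : M} {s : S}, m ∈ ℳ g → s ∈ 𝒮 h →
      MulOpposite.op s • m ∈ ℳ (g * h))
    (hnz : ∃ m : M, m ≠ 0) :
    (∀ P : Submodule Sᵐᵒᵖ M, P ≠ ⊥ →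
      {s : S | ∀ n ∈ P, MulOpposite.op s • n = 0} =
        {s : S | ∀ m : M, MulOpposite.op s • m = 0}) ↔
    (∀ (gm : G) (m : M), m ∈ ℳ gm → ∀ (gb : G) (b : S), b ∈ 𝒮 gb →
      (∀ g : G, ∀ s ∈ 𝒮 g, MulOpposite.op (s * b) • m = 0) →
      m = 0 ∨ ∀ m' : M, MulOpposite.op b • m' = 0) := by
  classical
  constructor
  · -- prime ⇒ homogeneous condition
    intro hprime gm m hm gb b hb hann
    by_cases hm0 : m = 0
    · exact Or.inl hm0
    right
    -- `m S b = 0` for all (not nec. homogeneous) elements of `S`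
    have key : ∀ s : S, op (s * b) • m = 0 := by
      intro s
      conv_lhs => rw [← sum_proj hSdir s, Finset.sum_mul, op_sum_smul]
      exact Finset.sum_eq_zero fun g _ => hann g _ (proj_mem hSdir g s)
    have hP : Submodule.span Sᵐᵒᵖ {m} ≠ ⊥ := by
      rw [Ne, Submodule.span_singleton_eq_bot]
      exact hm0
    have hset := hprime _ hP
    have hbmem : b ∈ {s : S | ∀ n ∈ Submodule.span Sᵐᵒᵖ {m}, op s • n = 0} := by
      intro n hn
      obtain ⟨r, rfl⟩ := Submodule.mem_span_singleton.mp hn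
      conv_lhs => rw [← MulOpposite.op_unop r]
      rw [opSmulOpSmul b r.unop m]
      exact key r.unop
    rw [hset] at hbmem
    exact hbmem
  · -- homogeneous condition ⇒ prime
    intro hgr P hP
    ext b
    simp only [Set.mem_setOf_eq]
    constructor
    swap
    · intro h n _
      exact h n
    intro hb
    -- the property of "killing b from the right through S"
    set Q : M → Prop := fun m => m ≠ 0 ∧ ∀ s : S, op (s * b) • m = 0 with hQdef
    obtain ⟨p, hpP, hp0⟩ := Submodule.ne_bot_iff P |>.mp hP
    have hQp : Q p := by
      refine ⟨hp0, fun s => ?_⟩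
      rw [← opSmulOpSmul b s p]
      exact hb _ (P.smul_mem (op s) hpP)
    -- choose n with Q n minimizing the support cardinality
    have hex : ∃ k : ℕ, ∃ m : M, Q m ∧ (suppd hMdir m).card ≤ k :=
      ⟨(suppd hMdir p).card, p, hQp, le_rfl⟩
    set k := Nat.find hex with hk
    obtain ⟨n, hQn, hnk⟩ := Nat.find_spec hex
    have hmin : ∀ m : M, Q m → k ≤ (suppd hMdir m).card := by
      intro m hQm
      by_contra hlt
      exact Nat.find_min hex (not_le.mp hlt) ⟨m, hQm, le_rfl⟩
    set X : Finset G := suppd hMdir n with hX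
    set Y : Finset G := suppd hSdir b with hY
    have hXne : X.Nonempty := by
      rw [Finset.nonempty_iff_ne_empty, hX, Ne, suppd_eq_empty]
      exact hQn.1
    -- components of b
    set bY : G → S := fun y => proj hSdir y b with hbY
    -- "live together": if one component of n is killed by homogeneous c, all of n is
    have live : ∀ (h : G) (c : S), c ∈ 𝒮 h →
        (∃ x ∈ X, op c • (proj hMdir x n) = 0) → op c • n = 0 := by
      rintro h c hc ⟨x₀, hx₀, hx₀0⟩
      by_contra hne
      have hQ' : Q (op c • n) := by
        refine ⟨hne, fun s => ?_⟩
        rw [opSmulOpSmul, ← mul_assoc]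
        exact hQn.2 (c * s)
      have hkle := hmin _ hQ'
      have hdec : op c • n = ∑ x ∈ X.erase x₀, op c • (proj hMdir x n) := by
        conv_lhs => rw [← sum_proj hMdir n, Finset.smul_sum]
        exact (Finset.sum_erase (f := fun x => op c • proj hMdir x n) X hx₀0).symm
      have hsub : suppd hMdir (op c • n) ⊆ (X.erase x₀).image (· * h) := by
        rw [hdec]
        exact suppd_sum_subset hMdir fun x _ => hsmul (proj_mem hMdir x n) hc
      have h1 : (suppd hMdir (op c • n)).card ≤ (X.erase x₀).card :=
        le_trans (Finset.card_le_card hsub) Finset.card_image_le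
      have h2 : (X.erase x₀).card < X.card := Finset.card_erase_lt_of_mem hx₀
      omega
    -- homogeneous kill of n kills each component of n
    have compvan : ∀ (h : G) (c : S), c ∈ 𝒮 h → op c • n = 0 →
        ∀ x ∈ X, op c • (proj hMdir x n) = 0 := by
      intro h c hc h0 x hx
      have hsum : ∑ x ∈ X, op c • (proj hMdir x n) = 0 := by
        rw [← Finset.smul_sum, sum_proj hMdir n]
        exact h0
      have heq := proj_sum_eq hMdir (f := fun x => x * h)
        (v := fun x => op c • (proj hMdir x n))
        (fun i _ => hsmul (proj_mem hMdir i n) hc)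
        (fun i _ j _ hij => upm_right_cancel hUP hij) hx
      rw [hsum, proj_zero] at heq
      exact heq.symm
    -- main combinatorial step using unique products
    have mainstep : ∀ (g : G) (y : G), y ∈ Y → ∀ s ∈ 𝒮 g, op (s * bY y) • n = 0 := by
      intro g
      by_contra hcon
      push_neg at hcon
      set Y' : Finset G := Y.filter
        (fun y => ¬ ∀ s ∈ 𝒮 g, op (s * bY y) • n = 0) with hY'
      have hY'ne : Y'.Nonempty := by
        obtain ⟨y, hy, s, hs, hns⟩ := hcon
        exact ⟨y, Finset.mem_filter.mpr ⟨hy, by push_neg; exact ⟨s, hs, hns⟩⟩⟩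
      have hZne : (Y'.image (g * ·)).Nonempty := hY'ne.image _
      obtain ⟨x₀, hx₀, z₀, hz₀, hu⟩ := hUP X (Y'.image (g * ·)) hXne hZne
      obtain ⟨y₀, hy₀, rfl⟩ := Finset.mem_image.mp hz₀
      have hy₀good : ∀ s ∈ 𝒮 g, op (s * bY y₀) • n = 0 := by
        intro s hs
        -- Σ_{y ∈ Y'} op (s * bY y) • n = 0
        have hzero : ∑ y ∈ Y', op (s * bY y) • n = 0 := by
          have hall : ∑ y ∈ Y, op (s * bY y) • n = 0 := by
            have : op (s * b) • n = 0 := hQn.2 s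
            conv_rhs => rw [← this]
            conv_rhs => rw [← sum_proj hSdir b, Finset.mul_sum, op_sum_smul]
          rw [← Finset.sum_filter_add_sum_filter_not Y
            (fun y => ¬ ∀ s ∈ 𝒮 g, op (s * bY y) • n = 0)] at hall
          have hz2 : ∑ y ∈ Y.filter
              (fun y => ¬¬ ∀ s ∈ 𝒮 g, op (s * bY y) • n = 0),
              op (s * bY y) • n = 0 := by
            refine Finset.sum_eq_zero fun y hy => ?_
            have := (Finset.mem_filter.mp hy).2
            rw [not_not] at this
            exact this s hs
          rw [hz2, add_zero] at hall
          exact hall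
        -- expand each n into components
        have hdouble : ∑ y ∈ Y', ∑ x ∈ X, op (s * bY y) • (proj hMdir x n) = 0 := by
          rw [← hzero]
          refine Finset.sum_congr rfl fun y _ => ?_
          rw [← Finset.smul_sum, sum_proj hMdir n]
        -- project onto the unique-product degree
        have hproj := congrArg (proj hMdir (x₀ * (g * y₀))) hdouble
        rw [proj_zero, proj_finsum hMdir] at hproj
        have hterm : ∀ y ∈ Y',
            proj hMdir (x₀ * (g * y₀)) (∑ x ∈ X, op (s * bY y) • (proj hMdir x n)) =
            if y = y₀ then op (s * bY y₀) • (proj hMdir x₀ n) else 0 := by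
          intro y hy
          rw [proj_finsum hMdir]
          by_cases hyy : y = y₀
          · subst hyy
            rw [if_pos rfl]
            have hz : ∀ x ∈ X, x ≠ x₀ →
                proj hMdir (x₀ * (g * y)) (op (s * bY y) • proj hMdir x n) = 0 := by
              intro x hx hxne
              refine proj_of_mem_ne hMdir
                (hsmul (proj_mem hMdir x n) (hmul hs (proj_mem hSdir y b))) ?_
              intro hdeq
              exact hxne (hu x hx (g * y) (Finset.mem_image.mpr ⟨y, hy, rfl⟩)
                hdeq.symm).1
            rw [Finset.sum_eq_single_of_mem x₀ hx₀ hz]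
            exact proj_of_mem_same hMdir
              (hsmul (proj_mem hMdir x₀ n) (hmul hs (proj_mem hSdir y b)))
          · rw [if_neg hyy]
            refine Finset.sum_eq_zero fun x hx => ?_
            refine proj_of_mem_ne hMdir
              (hsmul (proj_mem hMdir x n) (hmul hs (proj_mem hSdir y b))) ?_
            intro hdeq
            have := (hu x hx (g * y) (Finset.mem_image.mpr ⟨y, hy, rfl⟩) hdeq.symm).2
            exact hyy (upm_left_cancel hUP this)
        rw [Finset.sum_congr rfl hterm, Finset.sum_ite_eq' Y' y₀, if_pos hy₀] at hproj
        -- hproj : 0 = op (s * bY y₀) • proj hMdir x₀ n  (up to orientation)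
        have hx₀kill : op (s * bY y₀) • (proj hMdir x₀ n) = 0 := by
          rw [← hproj]
        -- fix the projection value: proj of the single term
        have hproj₀ : proj hMdir (x₀ * (g * y₀)) (op (s * bY y₀) • (proj hMdir x₀ n))
            = op (s * bY y₀) • (proj hMdir x₀ n) :=
          proj_of_mem_same hMdir
            (hsmul (proj_mem hMdir x₀ n) (hmul hs (proj_mem hSdir y₀ b)))
        exact live (g * y₀) (s * bY y₀) (hmul hs (proj_mem hSdir y₀ b))
          ⟨x₀, hx₀, hx₀kill⟩
      have : y₀ ∉ Y' := by
        rw [hY', Finset.mem_filter]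
        push_neg
        intro _
        exact hy₀good
      exact this hy₀
    -- conclude using the graded primeness hypothesis
    obtain ⟨x₀, hx₀⟩ := hXne
    have hMby : ∀ y ∈ Y, ∀ m' : M, op (bY y) • m' = 0 := by
      intro y hy
      have happ := hgr x₀ (proj hMdir x₀ n) (proj_mem hMdir x₀ n) y (bY y)
        (proj_mem hSdir y b) ?_
      · rcases happ with h0 | h
        · exact absurd h0 (proj_ne_zero hMdir hx₀)
        · exact h
      · intro g s hs
        exact compvan (g * y) (s * bY y) (hmul hs (proj_mem hSdir y b))
          (mainstep g y hy s hs) x₀ hx₀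
    intro m'
    conv_lhs => rw [← sum_proj hSdir b, op_sum_smul]
    exact Finset.sum_eq_zero fun y hy => hMby y hy m'
end

section
/- Let G be a unique product group, S a strongly G-graded ring with R = S_e, and I a G-invariant ideal of R. Then IS is a prime ideal of S if and only if whenever A, B are G-invariant ideals of R with AB ⊆ I, we have A ⊆ I or B ⊆ I. -/
open Pointwise

set_option linter.unusedSectionVars false
set_option linter.unusedVariables false

section Proj
variable {G : Type*} [DecidableEq G] {S : Type*} [Ring S] (𝒮 : G → AddSubgroup S)

noncomputable def gdecomp (hSdir : DirectSum.IsInternal 𝒮) : S ≃+ DirectSum G fun g => ↥(𝒮 g) :=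
  (AddEquiv.ofBijective (DirectSum.coeAddMonoidHom 𝒮) hSdir).symm

noncomputable def gproj (hSdir : DirectSum.IsInternal 𝒮) (g : G) : S →+ S :=
  AddMonoidHom.mk' (fun x => (gdecomp 𝒮 hSdir x g : S)) (by
    intro a b
    show ((gdecomp 𝒮 hSdir (a + b)) g : S) = _
    rw [map_add, DirectSum.add_apply]
    rfl)

variable (hSdir : DirectSum.IsInternal 𝒮)

theorem gproj_mem (g : G) (x : S) : gproj 𝒮 hSdir g x ∈ 𝒮 g := (gdecomp 𝒮 hSdir x g).2

theorem gdecomp_of_mem {g : G} {x : S} (hx : x ∈ 𝒮 g) :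
    gdecomp 𝒮 hSdir x = DirectSum.of (fun i => 𝒮 i) g ⟨x, hx⟩ := by
  have : DirectSum.coeAddMonoidHom 𝒮 (DirectSum.of (fun i => 𝒮 i) g ⟨x, hx⟩) = x :=
    DirectSum.coeAddMonoidHom_of 𝒮 g ⟨x, hx⟩
  apply (AddEquiv.ofBijective (DirectSum.coeAddMonoidHom 𝒮) hSdir).injective
  show (AddEquiv.ofBijective (DirectSum.coeAddMonoidHom 𝒮) hSdir)
    ((AddEquiv.ofBijective (DirectSum.coeAddMonoidHom 𝒮) hSdir).symm x) = _
  rw [AddEquiv.apply_symm_apply]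
  exact this.symm

theorem gproj_of_mem_same {g : G} {x : S} (hx : x ∈ 𝒮 g) : gproj 𝒮 hSdir g x = x := by
  show ((gdecomp 𝒮 hSdir x) g : S) = x
  rw [gdecomp_of_mem 𝒮 hSdir hx, DirectSum.of_eq_same]

theorem gproj_of_mem_ne {g h : G} {x : S} (hx : x ∈ 𝒮 h) (hne : g ≠ h) :
    gproj 𝒮 hSdir g x = 0 := by
  show ((gdecomp 𝒮 hSdir x) g : S) = 0
  rw [gdecomp_of_mem 𝒮 hSdir hx, DirectSum.of_eq_of_ne _ _ _ hne]
  rfl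

theorem gsum_proj (x : S) :
    ∃ F : Finset G, (x = ∑ g ∈ F, gproj 𝒮 hSdir g x) ∧
      ∀ g ∉ F, gproj 𝒮 hSdir g x = 0 := by
  classical
  refine ⟨(gdecomp 𝒮 hSdir x).support, ?_, ?_⟩
  case refine_2 =>
    intro g hg
    show ((gdecomp 𝒮 hSdir x) g : S) = 0
    rw [DFinsupp.notMem_support_iff.mp hg]
    rfl
  conv_lhs => rw [← AddEquiv.apply_symm_apply
    (AddEquiv.ofBijective (DirectSum.coeAddMonoidHom 𝒮) hSdir) x]
  show DirectSum.coeAddMonoidHom 𝒮 (gdecomp 𝒮 hSdir x) = _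
  rw [DirectSum.coeAddMonoidHom_eq_dfinsuppSum]
  rfl

/-- projection of a sum of homogeneous elements -/
theorem gproj_sum {γ : Type*} (F : Finset γ) (c : γ → S) (ι : γ → G)
    (hc : ∀ i ∈ F, c i ∈ 𝒮 (ι i)) (d : G) [DecidablePred fun i => ι i = d] :
    gproj 𝒮 hSdir d (∑ i ∈ F, c i) = ∑ i ∈ F.filter (fun i => ι i = d), c i := by
  rw [map_sum, Finset.sum_filter]
  apply Finset.sum_congr rfl
  intro i hi
  by_cases h : ι i = d
  · simp only [if_pos h]
    exact gproj_of_mem_same 𝒮 hSdir (h ▸ hc i hi)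
  · simp only [if_neg h]
    exact gproj_of_mem_ne 𝒮 hSdir (hc i hi) (fun e => h e.symm)

end Proj

section JLayer
variable {G : Type*} [Group G] [DecidableEq G] {S : Type*} [Ring S] {𝒮 : G → AddSubgroup S}
  (hSdir : DirectSum.IsInternal 𝒮)
  {I : AddSubgroup S}

/-- notation for J = IS -/
def JIdeal (I : AddSubgroup S) : AddSubgroup S :=
  AddSubgroup.closure ((I : Set S) * (Set.univ : Set S))

theorem mem_J_of_mul {i : S} (hi : i ∈ I) (s : S) : i * s ∈ JIdeal I :=
  AddSubgroup.subset_closure ⟨i, hi, s, trivial, rfl⟩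

theorem I_le_J {i : S} (hi : i ∈ I) : i ∈ JIdeal I := by
  have := mem_J_of_mul hi 1
  rwa [mul_one] at this

theorem J_right {x : S} (hx : x ∈ JIdeal I) (s : S) : x * s ∈ JIdeal I := by
  induction hx using AddSubgroup.closure_induction with
  | mem x hx =>
    obtain ⟨i, hi, u, -, rfl⟩ := hx
    rw [mul_assoc]
    exact mem_J_of_mul hi _
  | zero => rw [zero_mul]; exact zero_mem _
  | add x y _ _ hx hy => rw [add_mul]; exact add_mem hx hy
  | neg x _ hx => rw [neg_mul]; exact neg_mem hx

variable (hmul : ∀ {g h : G} {a b : S}, a ∈ 𝒮 g → b ∈ 𝒮 h → a * b ∈ 𝒮 (g * h))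
  (hIR : I ≤ 𝒮 1)
  (hIl : ∀ r ∈ 𝒮 1, ∀ a ∈ I, r * a ∈ I) (hIr : ∀ r ∈ 𝒮 1, ∀ a ∈ I, a * r ∈ I)
  (hGinv : ∀ g : G,
      AddSubgroup.closure ((𝒮 g : Set S) * (I : Set S) * (𝒮 g⁻¹ : Set S)) = I)

include hmul hIl hGinv in
theorem hom_mul_I {g : G} {t : S} (ht : t ∈ 𝒮 g) {i : S} (hi : i ∈ I) :
    t * i ∈ JIdeal I := by
  have hi' : i ∈ AddSubgroup.closure ((𝒮 g⁻¹ : Set S) * (I : Set S) * (𝒮 g : Set S)) := by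
    have h2 := hGinv g⁻¹
    rw [inv_inv] at h2
    rw [h2]; exact hi
  clear hi
  induction hi' using AddSubgroup.closure_induction with
  | mem x hx =>
    obtain ⟨p, hp, v, hv, rfl⟩ := hx
    obtain ⟨u, hu, j, hj, rfl⟩ := hp
    have h1 : t * (u * j * v) = ((t * u) * j) * v := by
      rw [mul_assoc (t*u) j v, mul_assoc u j v, ← mul_assoc]
    rw [h1]
    have htu : t * u ∈ 𝒮 1 := by
      have := hmul ht hu
      rwa [mul_inv_cancel] at this
    exact mem_J_of_mul (hIl _ htu _ hj) v
  | zero => rw [mul_zero]; exact zero_mem _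
  | add x y _ _ hx hy => rw [mul_add]; exact add_mem hx hy
  | neg x _ hx => rw [mul_neg]; exact neg_mem hx

include hmul hIl hGinv in
theorem hom_mul_J {g : G} {t : S} (ht : t ∈ 𝒮 g) {x : S} (hx : x ∈ JIdeal I) :
    t * x ∈ JIdeal I := by
  induction hx using AddSubgroup.closure_induction with
  | mem x hx =>
    obtain ⟨i, hi, u, -, rfl⟩ := hx
    rw [← mul_assoc]
    exact J_right (hom_mul_I hmul hIl hGinv ht hi) u
  | zero => rw [mul_zero]; exact zero_mem _
  | add x y _ _ hx hy => rw [mul_add]; exact add_mem hx hy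
  | neg x _ hx => rw [mul_neg]; exact neg_mem hx

include hSdir hmul hIl hGinv in
theorem J_left (s : S) {x : S} (hx : x ∈ JIdeal I) : s * x ∈ JIdeal I := by
  obtain ⟨F, hF, -⟩ := gsum_proj 𝒮 hSdir s
  rw [hF, Finset.sum_mul]
  exact AddSubgroup.sum_mem _ fun g _ =>
    hom_mul_J hmul hIl hGinv (gproj_mem 𝒮 hSdir g s) hx

include hSdir hmul hIR in
theorem J_graded {x : S} (hx : x ∈ JIdeal I) (d : G) :
    gproj 𝒮 hSdir d x ∈ JIdeal I := by
  classical
  induction hx using AddSubgroup.closure_induction with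
  | mem x hx =>
    obtain ⟨i, hi, u, -, rfl⟩ := hx
    obtain ⟨F, hF, -⟩ := gsum_proj 𝒮 hSdir u
    have hrw : i * u = ∑ g ∈ F, i * gproj 𝒮 hSdir g u := by
      rw [← Finset.mul_sum, ← hF]
    have hc : ∀ g ∈ F, i * gproj 𝒮 hSdir g u ∈ 𝒮 ((fun g => g) g) := by
      intro g _
      have := hmul (hIR hi) (gproj_mem 𝒮 hSdir g u)
      rwa [one_mul] at this
    show (gproj 𝒮 hSdir d) (i * u) ∈ JIdeal I
    rw [hrw, gproj_sum 𝒮 hSdir F _ _ hc d]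
    exact AddSubgroup.sum_mem _ fun g _ => mem_J_of_mul hi _
  | zero => rw [map_zero]; exact zero_mem _
  | add x y _ _ hx hy => rw [map_add]; exact add_mem hx hy
  | neg x _ hx => rw [map_neg]; exact neg_mem hx

include hSdir hmul hIR hIr in
theorem proj1_J {x : S} (hx : x ∈ JIdeal I) : gproj 𝒮 hSdir 1 x ∈ I := by
  classical
  induction hx using AddSubgroup.closure_induction with
  | mem x hx =>
    obtain ⟨i, hi, u, -, rfl⟩ := hx
    obtain ⟨F, hF, -⟩ := gsum_proj 𝒮 hSdir u
    have hrw : i * u = ∑ g ∈ F, i * gproj 𝒮 hSdir g u := by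
      rw [← Finset.mul_sum, ← hF]
    have hc : ∀ g ∈ F, i * gproj 𝒮 hSdir g u ∈ 𝒮 ((fun g => g) g) := by
      intro g _
      have := hmul (hIR hi) (gproj_mem 𝒮 hSdir g u)
      rwa [one_mul] at this
    show (gproj 𝒮 hSdir 1) (i * u) ∈ I
    rw [hrw, gproj_sum 𝒮 hSdir F _ _ hc 1]
    refine AddSubgroup.sum_mem _ fun g hg => ?_
    have hg1 : g = (1 : G) := (Finset.mem_filter.mp hg).2
    subst hg1
    exact hIr _ (gproj_mem 𝒮 hSdir 1 u) _ hi
  | zero => rw [map_zero]; exact zero_mem _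
  | add x y _ _ hx hy => rw [map_add]; exact add_mem hx hy
  | neg x _ hx => rw [map_neg]; exact neg_mem hx

include hSdir hmul hIR hIr in
theorem J_cap_R {x : S} (hx : x ∈ JIdeal I) (hx1 : x ∈ 𝒮 1) : x ∈ I := by
  have := proj1_J hSdir hmul hIR hIr hx
  rwa [gproj_of_mem_same 𝒮 hSdir hx1] at this

end JLayer

section InvClos
variable {G : Type*} [Group G] [DecidableEq G] {S : Type*} [Ring S] {𝒮 : G → AddSubgroup S}
  (hSdir : DirectSum.IsInternal 𝒮)
  {I : AddSubgroup S}

/-- the `G`-invariant ideal of `R` generated by a homogeneous element `α` of degree `x`: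
generators `u * α * v` with `u ∈ 𝒮 (k * x⁻¹)`, `v ∈ 𝒮 k⁻¹`. -/
def invClos (𝒮 : G → AddSubgroup S) (x : G) (α : S) : AddSubgroup S :=
  AddSubgroup.closure (⋃ k : G, (𝒮 (k * x⁻¹) : Set S) * ({α} : Set S) * (𝒮 k⁻¹ : Set S))

theorem invClos_gen {x : G} (α : S) (k : G) {u v : S} (hu : u ∈ 𝒮 (k * x⁻¹))
    (hv : v ∈ 𝒮 k⁻¹) : u * α * v ∈ invClos 𝒮 x α :=
  AddSubgroup.subset_closure (Set.mem_iUnion.mpr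
    ⟨k, ⟨u * α, ⟨u, hu, α, rfl, rfl⟩, v, hv, rfl⟩⟩)

theorem invClos_mem_cases {x : G} {α : S} {w : S}
    (hw : w ∈ ⋃ k : G, (𝒮 (k * x⁻¹) : Set S) * ({α} : Set S) * (𝒮 k⁻¹ : Set S)) :
    ∃ k u v, u ∈ 𝒮 (k * x⁻¹) ∧ v ∈ 𝒮 k⁻¹ ∧ w = u * α * v := by
  obtain ⟨Sk, ⟨k, rfl⟩, hw⟩ := hw
  obtain ⟨p, ⟨u, hu, α', hα', rfl⟩, v, hv, rfl⟩ := hw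
  obtain rfl : α' = α := hα'
  exact ⟨k, u, v, hu, hv, rfl⟩

variable (hmul : ∀ {g h : G} {a b : S}, a ∈ 𝒮 g → b ∈ 𝒮 h → a * b ∈ 𝒮 (g * h))

include hmul in
theorem invClos_le {x : G} {α : S} (hα : α ∈ 𝒮 x) : invClos 𝒮 x α ≤ 𝒮 1 := by
  rw [invClos, AddSubgroup.closure_le]
  intro w hw
  obtain ⟨k, u, v, hu, hv, rfl⟩ := invClos_mem_cases hw
  have := hmul (hmul hu hα) hv
  rwa [show k * x⁻¹ * x * k⁻¹ = 1 by group] at this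

include hmul in
theorem invClos_conj {x : G} {α : S} (g : G) {p a q : S} (hp : p ∈ 𝒮 g)
    (ha : a ∈ invClos 𝒮 x α) (hq : q ∈ 𝒮 g⁻¹) : p * a * q ∈ invClos 𝒮 x α := by
  induction ha using AddSubgroup.closure_induction with
  | mem w hw =>
    obtain ⟨k, u, v, hu, hv, rfl⟩ := invClos_mem_cases hw
    have h1 : p * (u * α * v) * q = (p * u) * α * (v * q) := by
      simp only [mul_assoc]
    rw [h1]
    have hpu : p * u ∈ 𝒮 (g * k * x⁻¹) := by
      have := hmul hp hu
      rwa [show g * (k * x⁻¹) = g * k * x⁻¹ by group] at this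
    have hvq : v * q ∈ 𝒮 ((g * k)⁻¹) := by
      have := hmul hv hq
      rwa [show k⁻¹ * g⁻¹ = (g * k)⁻¹ by group] at this
    exact invClos_gen α (g * k) hpu hvq
  | zero => rw [mul_zero, zero_mul]; exact zero_mem _
  | add y z _ _ hy hz => rw [mul_add, add_mul]; exact add_mem hy hz
  | neg y _ hy => rw [mul_neg, neg_mul]; exact neg_mem hy

include hmul in
theorem invClos_bimod {x : G} {α : S} (hone : (1 : S) ∈ 𝒮 1) :
    ∀ r ∈ 𝒮 1, ∀ a ∈ invClos 𝒮 x α, r * a ∈ invClos 𝒮 x α ∧ a * r ∈ invClos 𝒮 x α := by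
  intro r hr a ha
  have h1inv : (1 : S) ∈ 𝒮 ((1 : G)⁻¹) := by rwa [inv_one]
  have hrinv : r ∈ 𝒮 ((1 : G)⁻¹) := by rwa [inv_one]
  constructor
  · have := invClos_conj hmul 1 hr ha h1inv
    rwa [mul_one] at this
  · have := invClos_conj hmul 1 hone ha hrinv
    rwa [one_mul] at this

variable (hstrong : ∀ g h : G,
      AddSubgroup.closure ((𝒮 g : Set S) * (𝒮 h : Set S)) = 𝒮 (g * h))
  (hone : (1 : S) ∈ 𝒮 1)

include hstrong hone in
theorem one_mem_clos (g h : G) (hgh : g * h = 1) :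
    (1 : S) ∈ AddSubgroup.closure ((𝒮 g : Set S) * (𝒮 h : Set S)) := by
  rw [hstrong g h, hgh]; exact hone

include hmul hstrong hone in
theorem invClos_invariant {x : G} {α : S} (g : G) :
    AddSubgroup.closure ((𝒮 g : Set S) * (invClos 𝒮 x α : Set S) * (𝒮 g⁻¹ : Set S))
      = invClos 𝒮 x α := by
  apply le_antisymm
  · rw [AddSubgroup.closure_le]
    rintro w ⟨pa, ⟨p, hp, a, ha, rfl⟩, q, hq, rfl⟩
    exact invClos_conj hmul g hp ha hq
  · intro a ha
    have claim : ∀ u ∈ AddSubgroup.closure ((𝒮 g : Set S) * (𝒮 g⁻¹ : Set S)),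
        ∀ v ∈ AddSubgroup.closure ((𝒮 g : Set S) * (𝒮 g⁻¹ : Set S)),
        u * a * v ∈ AddSubgroup.closure
          ((𝒮 g : Set S) * (invClos 𝒮 x α : Set S) * (𝒮 g⁻¹ : Set S)) := by
      intro u hu
      induction hu using AddSubgroup.closure_induction with
      | mem u hu =>
        intro v hv
        induction hv using AddSubgroup.closure_induction with
        | mem v hv =>
          obtain ⟨p, hp, q, hq, rfl⟩ := hu
          obtain ⟨p', hp', q', hq', rfl⟩ := hv
          have hqap' : q * a * p' ∈ invClos 𝒮 x α := by
            have hp'' : p' ∈ 𝒮 ((g⁻¹)⁻¹) := by rwa [inv_inv]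
            exact invClos_conj hmul g⁻¹ hq ha hp''
          have h1 : p * q * a * (p' * q') = p * (q * a * p') * q' := by
            simp only [mul_assoc]
          rw [h1]
          exact AddSubgroup.subset_closure
            ⟨p * (q * a * p'), ⟨p, hp, q * a * p', hqap', rfl⟩, q', hq', rfl⟩
        | zero => rw [mul_zero]; exact zero_mem _
        | add y z _ _ hy hz => rw [mul_add]; exact add_mem hy hz
        | neg y _ hy => rw [mul_neg]; exact neg_mem hy
      | zero =>
        intro v _
        rw [zero_mul, zero_mul]; exact zero_mem _
      | add y z _ _ hy hz =>
        intro v hv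
        rw [add_mul, add_mul]; exact add_mem (hy v hv) (hz v hv)
      | neg y _ hy =>
        intro v hv
        rw [neg_mul, neg_mul]; exact neg_mem (hy v hv)
    have h1 := one_mem_clos hstrong hone g g⁻¹ (mul_inv_cancel g)
    have := claim 1 h1 1 h1
    rwa [mul_one, one_mul] at this

include hmul hstrong hone in
theorem invClos_escape_left {x : G} {α : S} (hα : α ∈ 𝒮 x)
    (hle : invClos 𝒮 x α ≤ I) : α ∈ JIdeal I := by
  have h1 := one_mem_clos hstrong hone x⁻¹ x (inv_mul_cancel x)
  have claim : ∀ w ∈ AddSubgroup.closure ((𝒮 x⁻¹ : Set S) * (𝒮 x : Set S)),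
      α * w ∈ JIdeal I := by
    intro w hw
    induction hw using AddSubgroup.closure_induction with
    | mem w hw =>
      obtain ⟨c, hc, d, hd, rfl⟩ := hw
      have hαc : α * c ∈ invClos 𝒮 x α := by
        have h1x : (1 : S) ∈ 𝒮 (x * x⁻¹) := by rwa [mul_inv_cancel]
        have := invClos_gen (𝒮 := 𝒮) α x h1x hc
        rwa [one_mul] at this
      rw [← mul_assoc]
      exact mem_J_of_mul (hle hαc) d
    | zero => rw [mul_zero]; exact zero_mem _
    | add y z _ _ hy hz => rw [mul_add]; exact add_mem hy hz
    | neg y _ hy => rw [mul_neg]; exact neg_mem hy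
  have := claim 1 h1
  rwa [mul_one] at this

variable (hIl : ∀ r ∈ 𝒮 1, ∀ a ∈ I, r * a ∈ I) (hIr : ∀ r ∈ 𝒮 1, ∀ a ∈ I, a * r ∈ I)
  (hGinv : ∀ g : G,
      AddSubgroup.closure ((𝒮 g : Set S) * (I : Set S) * (𝒮 g⁻¹ : Set S)) = I)

include hmul hstrong hone hIl hGinv in
theorem invClos_escape_right {y : G} {β : S} (hβ : β ∈ 𝒮 y)
    (hle : invClos 𝒮 y β ≤ I) : β ∈ JIdeal I := by
  have h1 := one_mem_clos hstrong hone y y⁻¹ (mul_inv_cancel y)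
  have claim : ∀ w ∈ AddSubgroup.closure ((𝒮 y : Set S) * (𝒮 y⁻¹ : Set S)),
      w * β ∈ JIdeal I := by
    intro w hw
    induction hw using AddSubgroup.closure_induction with
    | mem w hw =>
      obtain ⟨p, hp, q, hq, rfl⟩ := hw
      have hqβ : q * β ∈ invClos 𝒮 y β := by
        have h1y : (1 : S) ∈ 𝒮 ((1 : G)⁻¹) := by rwa [inv_one]
        have hq' : q ∈ 𝒮 (1 * y⁻¹) := by rwa [one_mul]
        have := invClos_gen (𝒮 := 𝒮) β 1 hq' h1y
        rwa [mul_one] at this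
      rw [mul_assoc]
      exact hom_mul_J hmul hIl hGinv hp (I_le_J (hle hqβ))
    | zero => rw [zero_mul]; exact zero_mem _
    | add y z _ _ hy hz => rw [add_mul]; exact add_mem hy hz
    | neg y _ hy => rw [neg_mul]; exact neg_mem hy
  have := claim 1 h1
  rwa [one_mul] at this

end InvClos

section IdealStep
variable {G : Type*} [Group G] [DecidableEq G] {S : Type*} [Ring S] {𝒮 : G → AddSubgroup S}
  {I : AddSubgroup S}
  (hSdir : DirectSum.IsInternal 𝒮)
  (hmul : ∀ {g h : G} {a b : S}, a ∈ 𝒮 g → b ∈ 𝒮 h → a * b ∈ 𝒮 (g * h))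
  (hstrong : ∀ g h : G,
      AddSubgroup.closure ((𝒮 g : Set S) * (𝒮 h : Set S)) = 𝒮 (g * h))
  (hone : (1 : S) ∈ 𝒮 1)
  (hIR : I ≤ 𝒮 1)
  (hIl : ∀ r ∈ 𝒮 1, ∀ a ∈ I, r * a ∈ I) (hIr : ∀ r ∈ 𝒮 1, ∀ a ∈ I, a * r ∈ I)
  (hGinv : ∀ g : G,
      AddSubgroup.closure ((𝒮 g : Set S) * (I : Set S) * (𝒮 g⁻¹ : Set S)) = I)

include hSdir hmul hIR hIl hIr hGinv in
theorem invClos_mul {x y : G} {α β : S} (hα : α ∈ 𝒮 x) (hβ : β ∈ 𝒮 y)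
    (hC : ∀ g : G, ∀ s ∈ 𝒮 g, α * s * β ∈ JIdeal I) :
    ∀ a ∈ invClos 𝒮 x α, ∀ b ∈ invClos 𝒮 y β, a * b ∈ I := by
  have key : ∀ a ∈ invClos 𝒮 x α, ∀ b ∈ invClos 𝒮 y β, a * b ∈ JIdeal I := by
    intro a ha
    induction ha using AddSubgroup.closure_induction with
    | mem a ha =>
      intro b hb
      induction hb using AddSubgroup.closure_induction with
      | mem b hb =>
        obtain ⟨k, u, v, hu, hv, rfl⟩ := invClos_mem_cases ha
        obtain ⟨l, u', v', hu', hv', rfl⟩ := invClos_mem_cases hb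
        have hm : v * u' ∈ 𝒮 (k⁻¹ * (l * y⁻¹)) := hmul hv hu'
        have hmid : α * (v * u') * β ∈ JIdeal I := hC _ _ hm
        have h1 : u * α * v * (u' * β * v') = u * ((α * (v * u') * β) * v') := by
          simp only [mul_assoc]
        rw [h1]
        exact hom_mul_J hmul hIl hGinv hu (J_right hmid v')
      | zero => rw [mul_zero]; exact zero_mem _
      | add y z _ _ hy hz => rw [mul_add]; exact add_mem hy hz
      | neg y _ hy => rw [mul_neg]; exact neg_mem hy
    | zero =>
      intro b _; rw [zero_mul]; exact zero_mem _
    | add y z _ _ hy hz =>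
      intro b hb; rw [add_mul]; exact add_mem (hy b hb) (hz b hb)
    | neg y _ hy =>
      intro b hb; rw [neg_mul]; exact neg_mem (hy b hb)
  intro a ha b hb
  have hab1 : a * b ∈ 𝒮 1 := by
    have := hmul (invClos_le hmul hα ha) (invClos_le hmul hβ hb)
    rwa [one_mul] at this
  exact J_cap_R hSdir hmul hIR hIr (key a ha b hb) hab1

include hSdir hmul hstrong hone hIR hIl hIr hGinv in
theorem idealstep
    (hRHS : ∀ A B : AddSubgroup S,
      A ≤ 𝒮 1 → (∀ r ∈ 𝒮 1, ∀ a ∈ A, r * a ∈ A ∧ a * r ∈ A) →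
      (∀ g : G, AddSubgroup.closure ((𝒮 g : Set S) * (A : Set S) * (𝒮 g⁻¹ : Set S)) = A) →
      B ≤ 𝒮 1 → (∀ r ∈ 𝒮 1, ∀ b ∈ B, r * b ∈ B ∧ b * r ∈ B) →
      (∀ g : G, AddSubgroup.closure ((𝒮 g : Set S) * (B : Set S) * (𝒮 g⁻¹ : Set S)) = B) →
      (∀ a ∈ A, ∀ b ∈ B, a * b ∈ I) → A ≤ I ∨ B ≤ I)
    {x y : G} {α β : S} (hα : α ∈ 𝒮 x) (hβ : β ∈ 𝒮 y)
    (hαJ : α ∉ JIdeal I) (hβJ : β ∉ JIdeal I) :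
    ∃ g : G, ∃ s ∈ 𝒮 g, α * s * β ∉ JIdeal I := by
  by_contra hC
  push_neg at hC
  have := hRHS (invClos 𝒮 x α) (invClos 𝒮 y β)
    (invClos_le hmul hα) (invClos_bimod hmul hone)
    (invClos_invariant hmul hstrong hone)
    (invClos_le hmul hβ) (invClos_bimod hmul hone)
    (invClos_invariant hmul hstrong hone)
    (invClos_mul hSdir hmul hIR hIl hIr hGinv hα hβ hC)
  rcases this with h | h
  · exact hαJ (invClos_escape_left hmul hstrong hone hα h)
  · exact hβJ (invClos_escape_right hmul hstrong hone hIl hGinv hβ h)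

end IdealStep

section Sums
variable {G : Type*} [Group G] [DecidableEq G] {S : Type*} [Ring S] {𝒮 : G → AddSubgroup S}
  {I : AddSubgroup S}
  (hSdir : DirectSum.IsInternal 𝒮)

theorem gproj_sum_inj {γ : Type*} {F : Finset γ} {c : γ → S} {ι : γ → G}
    (hc : ∀ i ∈ F, c i ∈ 𝒮 (ι i)) (hinj : Set.InjOn ι F) {i : γ} (hi : i ∈ F) :
    gproj 𝒮 hSdir (ι i) (∑ j ∈ F, c j) = c i := by
  classical
  rw [gproj_sum 𝒮 hSdir F c ι hc (ι i)]
  have hfil : F.filter (fun j => ι j = ι i) = {i} := by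
    ext j
    simp only [Finset.mem_filter, Finset.mem_singleton]
    constructor
    · rintro ⟨hj, e⟩
      exact hinj hj hi e
    · rintro rfl
      exact ⟨hi, rfl⟩
  rw [hfil, Finset.sum_singleton]

theorem projJ_sum {γ : Type*} {F : Finset γ} {c : γ → S} {ι : γ → G}
    (hc : ∀ i ∈ F, c i ∈ 𝒮 (ι i)) (d : G)
    (hd : ∀ i ∈ F, ι i = d → c i ∈ JIdeal I) :
    gproj 𝒮 hSdir d (∑ j ∈ F, c j) ∈ JIdeal I := by
  classical
  rw [gproj_sum 𝒮 hSdir F c ι hc d]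
  refine AddSubgroup.sum_mem _ fun i hi => ?_
  obtain ⟨hiF, hid⟩ := Finset.mem_filter.mp hi
  exact hd i hiF hid

theorem mem_J_of_all_proj {p : S} (h : ∀ g, gproj 𝒮 hSdir g p ∈ JIdeal I) :
    p ∈ JIdeal I := by
  obtain ⟨F, hF, -⟩ := gsum_proj 𝒮 hSdir p
  rw [hF]
  exact AddSubgroup.sum_mem _ fun g _ => h g

theorem exists_JSupp (p : S) :
    ∃ F : Finset G, ∀ g, gproj 𝒮 hSdir g p ∉ JIdeal I ↔ g ∈ F := by
  classical
  refine ⟨(gdecomp 𝒮 hSdir p).support.filter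
    (fun g => gproj 𝒮 hSdir g p ∉ JIdeal I), fun g => ?_⟩
  simp only [Finset.mem_filter]
  constructor
  · intro h
    refine ⟨?_, h⟩
    by_contra hg
    apply h
    show ((gdecomp 𝒮 hSdir p) g : S) ∈ JIdeal I
    rw [DFinsupp.notMem_support_iff.mp hg]
    exact zero_mem _
  · exact fun h => h.2

end Sums

section PQ
variable {G : Type*} [Group G] [DecidableEq G] {S : Type*} [Ring S] {𝒮 : G → AddSubgroup S}
  {I : AddSubgroup S}
  (hSdir : DirectSum.IsInternal 𝒮)
  (hmul : ∀ {g h : G} {a b : S}, a ∈ 𝒮 g → b ∈ 𝒮 h → a * b ∈ 𝒮 (g * h))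
  (hIl : ∀ r ∈ 𝒮 1, ∀ a ∈ I, r * a ∈ I)
  (hGinv : ∀ g : G,
      AddSubgroup.closure ((𝒮 g : Set S) * (I : Set S) * (𝒮 g⁻¹ : Set S)) = I)

/-- the ideal of `S` generated by `a₀` together with `J`. -/
def PIdeal (I : AddSubgroup S) (a₀ : S) : AddSubgroup S :=
  AddSubgroup.closure ((JIdeal I : Set S) ∪
    ((Set.univ : Set S) * ({a₀} : Set S) * (Set.univ : Set S)))

theorem mem_P_self (a₀ : S) : a₀ ∈ PIdeal I a₀ :=
  AddSubgroup.subset_closure (Or.inr ⟨1 * a₀, ⟨1, trivial, a₀, rfl, rfl⟩, 1, trivial, by simp⟩)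

theorem J_le_P (a₀ : S) : JIdeal I ≤ PIdeal I a₀ :=
  fun _ hx => AddSubgroup.subset_closure (Or.inl hx)

theorem P_gen_cases {a₀ w : S}
    (hw : w ∈ (JIdeal I : Set S) ∪
      ((Set.univ : Set S) * ({a₀} : Set S) * (Set.univ : Set S))) :
    w ∈ JIdeal I ∨ ∃ u v, w = u * a₀ * v := by
  rcases hw with h | ⟨p, ⟨u, -, α', hα', rfl⟩, v, -, rfl⟩
  · exact Or.inl h
  · obtain rfl : α' = a₀ := hα'
    exact Or.inr ⟨u, v, rfl⟩

include hSdir hmul hIl hGinv in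
theorem P_mul_left {a₀ : S} (s : S) {p : S} (hp : p ∈ PIdeal I a₀) :
    s * p ∈ PIdeal I a₀ := by
  induction hp using AddSubgroup.closure_induction with
  | mem w hw =>
    rcases P_gen_cases hw with h | ⟨u, v, rfl⟩
    · exact J_le_P a₀ (J_left hSdir hmul hIl hGinv s h)
    · have h1 : s * (u * a₀ * v) = (s * u) * a₀ * v := by simp only [mul_assoc]
      rw [h1]
      exact AddSubgroup.subset_closure
        (Or.inr ⟨(s * u) * a₀, ⟨s * u, trivial, a₀, rfl, rfl⟩, v, trivial, rfl⟩)
  | zero => rw [mul_zero]; exact zero_mem _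
  | add y z _ _ hy hz => rw [mul_add]; exact add_mem hy hz
  | neg y _ hy => rw [mul_neg]; exact neg_mem hy

theorem P_mul_right {a₀ : S} {p : S} (hp : p ∈ PIdeal I a₀) (s : S) :
    p * s ∈ PIdeal I a₀ := by
  induction hp using AddSubgroup.closure_induction with
  | mem w hw =>
    rcases P_gen_cases hw with h | ⟨u, v, rfl⟩
    · exact J_le_P a₀ (J_right h s)
    · have h1 : (u * a₀ * v) * s = u * a₀ * (v * s) := by simp only [mul_assoc]
      rw [h1]
      exact AddSubgroup.subset_closure
        (Or.inr ⟨u * a₀, ⟨u, trivial, a₀, rfl, rfl⟩, v * s, trivial, rfl⟩)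
  | zero => rw [zero_mul]; exact zero_mem _
  | add y z _ _ hy hz => rw [add_mul]; exact add_mem hy hz
  | neg y _ hy => rw [neg_mul]; exact neg_mem hy

include hSdir hmul hIl hGinv in
theorem PQ_mul {a₀ b₀ : S} (hab : ∀ s : S, a₀ * s * b₀ ∈ JIdeal I)
    {p : S} (hp : p ∈ PIdeal I a₀) (s : S) {q : S} (hq : q ∈ PIdeal I b₀) :
    p * s * q ∈ JIdeal I := by
  induction hp using AddSubgroup.closure_induction generalizing q with
  | mem w hw =>
    rcases P_gen_cases hw with h | ⟨u, v, rfl⟩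
    · exact J_right (J_right h s) q
    · induction hq using AddSubgroup.closure_induction with
      | mem w' hw' =>
        rcases P_gen_cases hw' with h' | ⟨u', v', rfl⟩
        · exact J_left hSdir hmul hIl hGinv _ h'
        · have h1 : u * a₀ * v * s * (u' * b₀ * v') =
              u * ((a₀ * (v * s * u') * b₀) * v') := by simp only [mul_assoc]
          rw [h1]
          exact J_left hSdir hmul hIl hGinv u (J_right (hab _) v')
      | zero => rw [mul_zero]; exact zero_mem _
      | add y z _ _ hy hz => rw [mul_add]; exact add_mem hy hz
      | neg y _ hy => rw [mul_neg]; exact neg_mem hy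
  | zero => rw [zero_mul, zero_mul]; exact zero_mem _
  | add y z _ _ hy hz => rw [add_mul, add_mul]; exact add_mem (hy hq) (hz hq)
  | neg y _ hy => rw [neg_mul, neg_mul]; exact neg_mem (hy hq)

end PQ

/-- Let `G` be a unique product group, `S` a strongly `G`-graded ring with identity
component `R = S_e`, and `I` a proper `G`-invariant ideal of `R`.  Then `IS` is a
prime ideal of `S` iff whenever `A, B` are `G`-invariant ideals of `R` with
`AB ⊆ I`, we have `A ⊆ I` or `B ⊆ I`. -/
theorem stmt14 {G : Type*} [Group G] [DecidableEq G] (hUP : IsUPM G)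
    {S : Type*} [Ring S] (𝒮 : G → AddSubgroup S)
    (hSdir : DirectSum.IsInternal 𝒮) (hone : (1 : S) ∈ 𝒮 1)
    (hmul : ∀ {g h : G} {a b : S}, a ∈ 𝒮 g → b ∈ 𝒮 h → a * b ∈ 𝒮 (g * h))
    (hstrong : ∀ g h : G,
      AddSubgroup.closure ((𝒮 g : Set S) * (𝒮 h : Set S)) = 𝒮 (g * h))
    (I : AddSubgroup S) (hIR : I ≤ 𝒮 1)
    (hIl : ∀ r ∈ 𝒮 1, ∀ a ∈ I, r * a ∈ I) (hIr : ∀ r ∈ 𝒮 1, ∀ a ∈ I, a * r ∈ I)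
    (hGinv : ∀ g : G,
      AddSubgroup.closure ((𝒮 g : Set S) * (I : Set S) * (𝒮 g⁻¹ : Set S)) = I)
    (h1 : (1 : S) ∉ I) :
    ((1 : S) ∉ AddSubgroup.closure ((I : Set S) * (Set.univ : Set S)) ∧
      ∀ a b : S,
        (∀ s : S, a * s * b ∈ AddSubgroup.closure ((I : Set S) * (Set.univ : Set S))) →
        a ∈ AddSubgroup.closure ((I : Set S) * (Set.univ : Set S)) ∨
        b ∈ AddSubgroup.closure ((I : Set S) * (Set.univ : Set S))) ↔
    (∀ A B : AddSubgroup S,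
      A ≤ 𝒮 1 → (∀ r ∈ 𝒮 1, ∀ a ∈ A, r * a ∈ A ∧ a * r ∈ A) →
      (∀ g : G, AddSubgroup.closure ((𝒮 g : Set S) * (A : Set S) * (𝒮 g⁻¹ : Set S)) = A) →
      B ≤ 𝒮 1 → (∀ r ∈ 𝒮 1, ∀ b ∈ B, r * b ∈ B ∧ b * r ∈ B) →
      (∀ g : G, AddSubgroup.closure ((𝒮 g : Set S) * (B : Set S) * (𝒮 g⁻¹ : Set S)) = B) →
      (∀ a ∈ A, ∀ b ∈ B, a * b ∈ I) → A ≤ I ∨ B ≤ I) := by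
  classical
  constructor
  · -- primeness of J implies G-primeness of I
    rintro ⟨-, hprime⟩ A B hA1 hAbi hAinv hB1 hBbi hBinv hABI
    by_contra hcon
    push_neg at hcon
    obtain ⟨hnA, hnB⟩ := hcon
    obtain ⟨α, hαA, hαI⟩ := SetLike.not_le_iff_exists.mp hnA
    obtain ⟨β, hβB, hβI⟩ := SetLike.not_le_iff_exists.mp hnB
    have hmid : ∀ s : S, α * s * β ∈ JIdeal I := by
      intro s
      obtain ⟨F, hF, -⟩ := gsum_proj 𝒮 hSdir s
      have hrw : α * s * β = ∑ g ∈ F, α * gproj 𝒮 hSdir g s * β := by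
        conv_lhs => rw [hF]
        rw [Finset.mul_sum, Finset.sum_mul]
      rw [hrw]
      clear hrw
      refine AddSubgroup.sum_mem _ fun g _ => ?_
      have htg : gproj 𝒮 hSdir g s ∈ 𝒮 g := gproj_mem 𝒮 hSdir g s
      have hβ' : β ∈ AddSubgroup.closure
          ((𝒮 g⁻¹ : Set S) * (B : Set S) * (𝒮 g : Set S)) := by
        have h2 := hBinv g⁻¹
        rw [inv_inv] at h2
        rw [h2]; exact hβB
      clear hβB hβI
      induction hβ' using AddSubgroup.closure_induction with
      | mem w hw =>
        obtain ⟨p', ⟨u, hu, c, hc, rfl⟩, v, hv, rfl⟩ := hw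
        have htu : gproj 𝒮 hSdir g s * u ∈ 𝒮 1 := by
          have := hmul htg hu
          rwa [mul_inv_cancel] at this
        have hc2 : (gproj 𝒮 hSdir g s * u) * c ∈ B := (hBbi _ htu c hc).1
        have hαc : α * ((gproj 𝒮 hSdir g s * u) * c) ∈ I := hABI α hαA _ hc2
        have hassoc : α * gproj 𝒮 hSdir g s * (u * c * v) =
            (α * ((gproj 𝒮 hSdir g s * u) * c)) * v := by simp only [mul_assoc]
        rw [hassoc]
        exact mem_J_of_mul hαc v
      | zero => rw [mul_zero]; exact zero_mem _
      | add y z _ _ hy hz => rw [mul_add]; exact add_mem hy hz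
      | neg y _ hy => rw [mul_neg]; exact neg_mem hy
    rcases hprime α β hmid with h | h
    · exact hαI (J_cap_R hSdir hmul hIR hIr h (hA1 hαA))
    · exact hβI (J_cap_R hSdir hmul hIR hIr h (hB1 hβB))
  · -- G-primeness of I implies primeness of J
    intro hRHS
    constructor
    · intro h1J
      exact h1 (J_cap_R hSdir hmul hIR hIr h1J hone)
    intro a₀ b₀ hab
    by_contra hcon
    push_neg at hcon
    obtain ⟨ha₀, hb₀⟩ := hcon
    -- minimal counterexamples in the ideals generated by a₀ and b₀
    have hPex : ∃ k : ℕ, ∃ (p : S) (F : Finset G), p ∈ PIdeal I a₀ ∧ p ∉ JIdeal I ∧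
        (∀ g, gproj 𝒮 hSdir g p ∉ JIdeal I ↔ g ∈ F) ∧ F.card = k := by
      obtain ⟨F, hF⟩ := exists_JSupp (I := I) hSdir a₀
      exact ⟨F.card, a₀, F, mem_P_self a₀, ha₀, hF, rfl⟩
    have hQex : ∃ k : ℕ, ∃ (p : S) (F : Finset G), p ∈ PIdeal I b₀ ∧ p ∉ JIdeal I ∧
        (∀ g, gproj 𝒮 hSdir g p ∉ JIdeal I ↔ g ∈ F) ∧ F.card = k := by
      obtain ⟨F, hF⟩ := exists_JSupp (I := I) hSdir b₀
      exact ⟨F.card, b₀, F, mem_P_self b₀, hb₀, hF, rfl⟩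
    set n := Nat.find hPex with hn
    set m := Nat.find hQex with hm
    obtain ⟨a, X, haP, haJ, haiff, hacard⟩ := Nat.find_spec hPex
    obtain ⟨b, Y, hbQ, hbJ, hbiff, hbcard⟩ := Nat.find_spec hQex
    have hminP : ∀ p (F : Finset G), p ∈ PIdeal I a₀ → p ∉ JIdeal I →
        (∀ g, gproj 𝒮 hSdir g p ∉ JIdeal I ↔ g ∈ F) → n ≤ F.card :=
      fun p F hp1 hp2 hp3 => Nat.find_min' hPex ⟨p, F, hp1, hp2, hp3, rfl⟩
    have hminQ : ∀ p (F : Finset G), p ∈ PIdeal I b₀ → p ∉ JIdeal I →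
        (∀ g, gproj 𝒮 hSdir g p ∉ JIdeal I ↔ g ∈ F) → m ≤ F.card :=
      fun p F hp1 hp2 hp3 => Nat.find_min' hQex ⟨p, F, hp1, hp2, hp3, rfl⟩
    -- trim a and b to their J-supports
    obtain ⟨Fa, hFa, hFa0⟩ := gsum_proj 𝒮 hSdir a
    have hXFa : X ⊆ Fa := by
      intro x hx
      by_contra hxF
      exact ((haiff x).mpr hx) (hFa0 x hxF ▸ zero_mem _)
    set a' := ∑ x ∈ X, gproj 𝒮 hSdir x a with ha'def
    have hsubA : a - a' ∈ JIdeal I := by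
      have hsplit : a = (∑ g ∈ Fa \ X, gproj 𝒮 hSdir g a) + a' := by
        rw [ha'def, Finset.sum_sdiff hXFa]; exact hFa
      rw [hsplit, add_sub_cancel_right]
      refine AddSubgroup.sum_mem _ fun g hg => ?_
      have hgX : g ∉ X := (Finset.mem_sdiff.mp hg).2
      by_contra hgJ
      exact hgX ((haiff g).mp hgJ)
    have ha'P : a' ∈ PIdeal I a₀ := by
      have := sub_mem haP (J_le_P a₀ hsubA)
      rwa [sub_sub_cancel] at this
    have ha'J : a' ∉ JIdeal I := by
      intro h
      apply haJ
      have := add_mem h hsubA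
      rwa [add_sub_cancel] at this
    obtain ⟨Fb, hFb, hFb0⟩ := gsum_proj 𝒮 hSdir b
    have hYFb : Y ⊆ Fb := by
      intro y hy
      by_contra hyF
      exact ((hbiff y).mpr hy) (hFb0 y hyF ▸ zero_mem _)
    set b' := ∑ y ∈ Y, gproj 𝒮 hSdir y b with hb'def
    have hsubB : b - b' ∈ JIdeal I := by
      have hsplit : b = (∑ g ∈ Fb \ Y, gproj 𝒮 hSdir g b) + b' := by
        rw [hb'def, Finset.sum_sdiff hYFb]; exact hFb
      rw [hsplit, add_sub_cancel_right]
      refine AddSubgroup.sum_mem _ fun g hg => ?_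
      have hgY : g ∉ Y := (Finset.mem_sdiff.mp hg).2
      by_contra hgJ
      exact hgY ((hbiff g).mp hgJ)
    have hb'Q : b' ∈ PIdeal I b₀ := by
      have := sub_mem hbQ (J_le_P b₀ hsubB)
      rwa [sub_sub_cancel] at this
    -- nonemptiness of the supports
    have hXne : X.Nonempty := by
      rcases X.eq_empty_or_nonempty with h | h
      · exfalso
        apply haJ
        apply mem_J_of_all_proj hSdir
        intro g
        by_contra hg
        have := (haiff g).mp hg
        rw [h] at this
        exact absurd this (Finset.notMem_empty g)
      · exact h
    have hYne : Y.Nonempty := by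
      rcases Y.eq_empty_or_nonempty with h | h
      · exfalso
        apply hbJ
        apply mem_J_of_all_proj hSdir
        intro g
        by_contra hg
        have := (hbiff g).mp hg
        rw [h] at this
        exact absurd this (Finset.notMem_empty g)
      · exact h
    obtain ⟨x₁, hx₁⟩ := hXne
    obtain ⟨y₁, hy₁⟩ := hYne
    have hα : gproj 𝒮 hSdir x₁ a ∈ 𝒮 x₁ := gproj_mem 𝒮 hSdir x₁ a
    have hβ : gproj 𝒮 hSdir y₁ b ∈ 𝒮 y₁ := gproj_mem 𝒮 hSdir y₁ b
    have hαJ : gproj 𝒮 hSdir x₁ a ∉ JIdeal I := (haiff x₁).mpr hx₁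
    have hβJ : gproj 𝒮 hSdir y₁ b ∉ JIdeal I := (hbiff y₁).mpr hy₁
    obtain ⟨g, s, hs, hnJ⟩ := idealstep hSdir hmul hstrong hone hIR hIl hIr hGinv
      hRHS hα hβ hαJ hβJ
    -- Step B : all of  gproj x₁ a * s * gproj y b  (y ∈ Y) avoid J
    have hb'rw : gproj 𝒮 hSdir x₁ a * s * b' =
        ∑ y ∈ Y, gproj 𝒮 hSdir x₁ a * s * gproj 𝒮 hSdir y b := by
      rw [hb'def, Finset.mul_sum]
    have hcB : ∀ y ∈ Y, gproj 𝒮 hSdir x₁ a * s * gproj 𝒮 hSdir y b ∈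
        𝒮 (x₁ * g * y) := fun y _ => hmul (hmul hα hs) (gproj_mem 𝒮 hSdir y b)
    have hinjB : Set.InjOn (fun y => x₁ * g * y) (Y : Set G) :=
      fun y1 _ y2 _ h => mul_left_cancel h
    have hfQ : gproj 𝒮 hSdir x₁ a * s * b' ∈ PIdeal I b₀ :=
      P_mul_left hSdir hmul hIl hGinv (gproj 𝒮 hSdir x₁ a * s) hb'Q
    have hfproj : gproj 𝒮 hSdir (x₁ * g * y₁) (gproj 𝒮 hSdir x₁ a * s * b') =
        gproj 𝒮 hSdir x₁ a * s * gproj 𝒮 hSdir y₁ b := by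
      rw [hb'rw]
      exact gproj_sum_inj hSdir (ι := fun y => x₁ * g * y) hcB hinjB hy₁
    have hfJ : gproj 𝒮 hSdir x₁ a * s * b' ∉ JIdeal I := by
      intro h
      exact hnJ (hfproj ▸ J_graded hSdir hmul hIR h (x₁ * g * y₁))
    obtain ⟨Ff, hFfiff⟩ := exists_JSupp (I := I) hSdir (gproj 𝒮 hSdir x₁ a * s * b')
    have hm1 : m ≤ Ff.card := hminQ _ _ hfQ hfJ hFfiff
    have hFfsub : Ff ⊆ (Y.filter
        (fun y => gproj 𝒮 hSdir x₁ a * s * gproj 𝒮 hSdir y b ∉ JIdeal I)).image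
        (fun y => x₁ * g * y) := by
      intro d hd
      have hdJ : gproj 𝒮 hSdir d (gproj 𝒮 hSdir x₁ a * s * b') ∉ JIdeal I :=
        (hFfiff d).mpr hd
      by_contra hdim
      apply hdJ
      rw [hb'rw]
      refine projJ_sum hSdir (ι := fun y => x₁ * g * y) hcB d ?_
      intro y hy hyd
      by_contra hcy
      exact hdim (Finset.mem_image.mpr ⟨y, Finset.mem_filter.mpr ⟨hy, hcy⟩, hyd⟩)
    have hfilY : Y.filter
        (fun y => gproj 𝒮 hSdir x₁ a * s * gproj 𝒮 hSdir y b ∉ JIdeal I) = Y := by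
      apply Finset.eq_of_subset_of_card_le (Finset.filter_subset _ _)
      calc Y.card = m := hbcard
        _ ≤ Ff.card := hm1
        _ ≤ _ := Finset.card_le_card hFfsub
        _ ≤ _ := Finset.card_image_le
    have hBall : ∀ y ∈ Y, gproj 𝒮 hSdir x₁ a * s * gproj 𝒮 hSdir y b ∉ JIdeal I := by
      intro y hy
      rw [← hfilY] at hy
      exact (Finset.mem_filter.mp hy).2
    -- Step C : unique product
    obtain ⟨x', hx', z, hz, huniq⟩ := hUP X (Y.image (fun y => g * y)) ⟨x₁, hx₁⟩
      (Finset.Nonempty.image ⟨y₁, hy₁⟩ _)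
    obtain ⟨y', hy', rfl⟩ := Finset.mem_image.mp hz
    have habrw : a' * s * b' = ∑ p ∈ X ×ˢ Y,
        gproj 𝒮 hSdir p.1 a * s * gproj 𝒮 hSdir p.2 b := by
      calc a' * s * b' = ∑ x ∈ X, ∑ y ∈ Y,
          gproj 𝒮 hSdir x a * s * gproj 𝒮 hSdir y b := by
            rw [ha'def, Finset.sum_mul, hb'def, Finset.sum_mul_sum]
        _ = _ := (Finset.sum_product X Y
          (fun p => gproj 𝒮 hSdir p.1 a * s * gproj 𝒮 hSdir p.2 b)).symm
    have hccC : ∀ p ∈ X ×ˢ Y, gproj 𝒮 hSdir p.1 a * s * gproj 𝒮 hSdir p.2 b ∈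
        𝒮 (p.1 * g * p.2) := fun p _ =>
      hmul (hmul (gproj_mem 𝒮 hSdir p.1 a) hs) (gproj_mem 𝒮 hSdir p.2 b)
    have hd₀ : gproj 𝒮 hSdir (x' * g * y') (a' * s * b') =
        gproj 𝒮 hSdir x' a * s * gproj 𝒮 hSdir y' b := by
      rw [habrw, gproj_sum 𝒮 hSdir _ _ (fun p => p.1 * g * p.2) hccC (x' * g * y')]
      have hfil : (X ×ˢ Y).filter (fun p => p.1 * g * p.2 = x' * g * y') =
          {(x', y')} := by
        ext p
        rcases p with ⟨p1, p2⟩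
        simp only [Finset.mem_filter, Finset.mem_singleton, Finset.mem_product,
          Prod.mk.injEq]
        constructor
        · rintro ⟨⟨hp1, hp2⟩, he⟩
          have he' : p1 * (g * p2) = x' * (g * y') := by
            rw [← mul_assoc, ← mul_assoc]; exact he
          obtain ⟨e1, e2⟩ := huniq p1 hp1 (g * p2)
            (Finset.mem_image_of_mem _ hp2) he'
          exact ⟨e1, mul_left_cancel e2⟩
        · rintro ⟨rfl, rfl⟩
          exact ⟨⟨hx', hy'⟩, rfl⟩
      rw [hfil, Finset.sum_singleton]
    have hCJ : gproj 𝒮 hSdir x' a * s * gproj 𝒮 hSdir y' b ∈ JIdeal I := by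
      rw [← hd₀]
      exact J_graded hSdir hmul hIR (PQ_mul hSdir hmul hIl hGinv hab ha'P s hb'Q) _
    -- Step D : the element a' * s * (gproj y' b) lies in J by minimality
    have herw : a' * s * gproj 𝒮 hSdir y' b =
        ∑ x ∈ X, gproj 𝒮 hSdir x a * s * gproj 𝒮 hSdir y' b := by
      rw [ha'def, Finset.sum_mul, Finset.sum_mul]
    have hcD : ∀ x ∈ X, gproj 𝒮 hSdir x a * s * gproj 𝒮 hSdir y' b ∈
        𝒮 (x * g * y') := fun x _ =>
      hmul (hmul (gproj_mem 𝒮 hSdir x a) hs) (gproj_mem 𝒮 hSdir y' b)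
    have hinjD : Set.InjOn (fun x => x * g * y') (X : Set G) :=
      fun u _ v _ h => mul_right_cancel (mul_right_cancel h)
    have heP : a' * s * gproj 𝒮 hSdir y' b ∈ PIdeal I a₀ :=
      P_mul_right (P_mul_right ha'P s) _
    have heJ : a' * s * gproj 𝒮 hSdir y' b ∈ JIdeal I := by
      by_contra heJ
      obtain ⟨Fe, hFeiff⟩ := exists_JSupp (I := I) hSdir (a' * s * gproj 𝒮 hSdir y' b)
      have hn1 : n ≤ Fe.card := hminP _ _ heP heJ hFeiff
      have hFesub : Fe ⊆ (X.filter
          (fun x => gproj 𝒮 hSdir x a * s * gproj 𝒮 hSdir y' b ∉ JIdeal I)).image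
          (fun x => x * g * y') := by
        intro d hd
        have hdJ : gproj 𝒮 hSdir d (a' * s * gproj 𝒮 hSdir y' b) ∉ JIdeal I :=
          (hFeiff d).mpr hd
        by_contra hdim
        apply hdJ
        rw [herw]
        refine projJ_sum hSdir (ι := fun x => x * g * y') hcD d ?_
        intro x hx hxd
        by_contra hcx
        exact hdim (Finset.mem_image.mpr ⟨x, Finset.mem_filter.mpr ⟨hx, hcx⟩, hxd⟩)
      have hfilX : X.filter
          (fun x => gproj 𝒮 hSdir x a * s * gproj 𝒮 hSdir y' b ∉ JIdeal I) = X := by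
        apply Finset.eq_of_subset_of_card_le (Finset.filter_subset _ _)
        calc X.card = n := hacard
          _ ≤ Fe.card := hn1
          _ ≤ _ := Finset.card_le_card hFesub
          _ ≤ _ := Finset.card_image_le
      rw [← hfilX] at hx'
      exact (Finset.mem_filter.mp hx').2 hCJ
    -- final contradiction
    have hfinal : gproj 𝒮 hSdir (x₁ * g * y') (a' * s * gproj 𝒮 hSdir y' b) =
        gproj 𝒮 hSdir x₁ a * s * gproj 𝒮 hSdir y' b := by
      rw [herw]
      exact gproj_sum_inj hSdir (ι := fun x => x * g * y') hcD hinjD hx₁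
    exact hBall y' hy' (hfinal ▸ J_graded hSdir hmul hIR heJ (x₁ * g * y'))
end

section
/- Let G be a unique product monoid and S = R*G a crossed product with action σ. Let M be a right R-module with annihilator J in R, and let J_G = {r ∈ R : σ(g)(r) ∈ J for all g ∈ G}. Then the annihilator in S of the induced module M*G = ⊕_{g∈G} M x̄_g is J_G * G = ⊕_{g∈G} J_G x̄_g. -/
/-!
Write `s ∈ S` as `∑ r_g x̄_g`. On a generator, `(m x̄_h) s = ∑_g m σ(h)(r_g) c(h,g) x̄_{hg}`.
A unique product monoid is left cancellative, so the indices `hg` are distinct and, `M*G`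
being free over the `x̄_g`, `s` kills `m x̄_h` exactly when every `m σ(h)(r_g) c(h,g)`
vanishes; as `c(h,g)` is a unit this says `σ(h)(r_g) ∈ ann M` for all `h`, i.e. `r_g ∈ J_G`.
-/

theorem IsUPM.mul_left_injective {G : Type*} [Monoid G] (hUP : IsUPM G) (h : G) :
    Function.Injective (h * ·) := by
  classical
  intro a b (hab : h * a = h * b)
  obtain ⟨x, hx, y, hy, huniq⟩ :=
    hUP {h} {a, b} (Finset.singleton_nonempty h) (Finset.insert_nonempty a {b})
  obtain rfl := Finset.mem_singleton.1 hx
  have hxy : x * a = x * y ∧ x * b = x * y := by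
    rcases Finset.mem_insert.1 hy with rfl | hy
    · exact ⟨rfl, hab.symm⟩
    · obtain rfl := Finset.mem_singleton.1 hy
      exact ⟨hab, rfl⟩
  have hxx := Finset.mem_singleton_self x
  exact (huniq x hxx a (by simp) hxy.1).2.trans (huniq x hxx b (by simp) hxy.2).2.symm

theorem eq_zero_of_sum_comp_injective_eq_zero {ι M N α : Type*} [AddCommMonoid M]
    [AddCommMonoid N] (j : ι → M →+ N)
    (hj : Function.Injective fun f : ι →₀ M => f.sum fun i m => j i m)
    {e : α → ι} (he : Function.Injective e) {Y : Finset α} {m : α → M}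
    (hsum : ∑ a ∈ Y, j (e a) (m a) = 0) : ∀ a ∈ Y, m a = 0 := by
  classical
  have hF : ∑ a ∈ Y, Finsupp.single (e a) (m a) = 0 := by
    apply hj
    change Finsupp.liftAddHom j _ = Finsupp.liftAddHom j 0
    simpa [map_sum, Finsupp.liftAddHom_apply_single] using hsum
  intro a ha
  simpa [Finsupp.finsetSum_apply, Finsupp.single_apply, he.eq_iff, ha] using
    DFunLike.congr_fun hF (e a)

section CrossedProduct

open MulOpposite

variable {G R S M N : Type*} [Monoid G] [Ring R] [Ring S] [AddCommGroup M] [Module Rᵐᵒᵖ M]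
  [AddCommGroup N] [Module Sᵐᵒᵖ N] {ι : R →+* S} {σ : G → R →+* R} {c : G → G → Rˣ}
  {xb : G → S} {j : G → M →+ N}

theorem op_sum_smul_induced_eq_sum
    (hact : ∀ (g h : G) (m : M) (r : R),
      op (ι r * xb h) • j g m = j (g * h) (op (σ g r * (c g h : R)) • m))
    (f : G →₀ R) (h : G) (m : M) :
    op (f.sum fun g r => ι r * xb g) • j h m =
      ∑ g ∈ f.support, j (h * g) (op (σ h (f g) * (c h g : R)) • m) := by
  rw [Finsupp.sum, Finset.op_sum, Finset.sum_smul]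
  exact Finset.sum_congr rfl fun g _ => hact h g m (f g)

theorem op_sum_smul_eq_zero_of_forall_mem_annihilator
    (hact : ∀ (g h : G) (m : M) (r : R),
      op (ι r * xb h) • j g m = j (g * h) (op (σ g r * (c g h : R)) • m))
    (hNsurj : Function.Surjective fun f : G →₀ M => f.sum fun g m => j g m)
    {f : G →₀ R} (hf : ∀ g h : G, ∀ m : M, op (σ h (f g)) • m = 0) (n : N) :
    op (f.sum fun g r => ι r * xb g) • n = 0 := by
  obtain ⟨F, rfl⟩ := hNsurj n
  beta_reduce
  rw [Finsupp.smul_sum]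
  refine Finset.sum_eq_zero fun h _ => ?_
  beta_reduce
  rw [op_sum_smul_induced_eq_sum hact]
  refine Finset.sum_eq_zero fun g _ => ?_
  rw [op_mul, mul_smul, hf g h, smul_zero, map_zero]

theorem op_sigma_smul_eq_zero_of_forall_op_sum_smul_eq_zero (hUP : IsUPM G)
    (hact : ∀ (g h : G) (m : M) (r : R),
      op (ι r * xb h) • j g m = j (g * h) (op (σ g r * (c g h : R)) • m))
    (hNinj : Function.Injective fun f : G →₀ M => f.sum fun g m => j g m)
    {f : G →₀ R} (hs : ∀ n : N, op (f.sum fun g r => ι r * xb g) • n = 0) (g h : G) (m : M) :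
    op (σ h (f g)) • m = 0 := by
  by_cases hg : g ∈ f.support
  · have hgm := eq_zero_of_sum_comp_injective_eq_zero j hNinj (hUP.mul_left_injective h)
      (by rw [← op_sum_smul_induced_eq_sum hact]; exact hs (j h m)) g hg
    rwa [op_mul, mul_smul, (c h g).isUnit.op.smul_eq_zero] at hgm
  · rw [Finsupp.notMem_support_iff.mp hg, map_zero, op_zero, zero_smul]

end CrossedProduct

theorem stmt17_general {G : Type*} [Monoid G] (hUP : IsUPM G)
    {R S : Type*} [Ring R] [Ring S]
    (ι : R →+* S) (σ : G → R →+* R) (c : G → G → Rˣ) (xb : G → S)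
    (hfree : Function.Bijective fun f : G →₀ R => f.sum fun g r => ι r * xb g)
    {M : Type*} [AddCommGroup M] [Module Rᵐᵒᵖ M]
    {N : Type*} [AddCommGroup N] [Module Sᵐᵒᵖ N] (j : G → M →+ N)
    (hact : ∀ (g h : G) (m : M) (r : R),
      MulOpposite.op (ι r * xb h) • j g m =
        j (g * h) (MulOpposite.op (σ g r * (c g h : R)) • m))
    (hNfree : Function.Bijective fun f : G →₀ M => f.sum fun g m => j g m) :
    {s : S | ∀ n : N, MulOpposite.op s • n = 0} =
      {s : S | ∃ f : G →₀ R,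
        (∀ g : G, f g ∈ {r : R | ∀ h : G, ∀ m : M, MulOpposite.op (σ h r) • m = 0}) ∧
        s = f.sum fun g r => ι r * xb g} := by
  ext s
  constructor
  · intro hs
    obtain ⟨f, rfl⟩ := hfree.surjective s
    exact ⟨f, op_sigma_smul_eq_zero_of_forall_op_sum_smul_eq_zero hUP hact hNfree.injective hs,
      rfl⟩
  · rintro ⟨f, hf, rfl⟩
    exact op_sum_smul_eq_zero_of_forall_mem_annihilator hact hNfree.surjective hf

/-- Let `G` be a unique product monoid and `S = R*G` a crossed product with action
`σ` and unit-valued cocycle `c`.  Let `M` be a right `R`-module with annihilator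
`J`, and let `N = M*G = ⊕_g M x̄_g` be the induced right `S`-module, given by
additive maps `j g : M →+ N` (`m ↦ m x̄_g`) with
`(m x̄_g)(r x̄_h) = m σ(g)(r) c(g,h) x̄_{gh}` and with
`(f : G →₀ M) ↦ ∑ j g (f g)` bijective.  Then the annihilator of `N` in `S` is
`J_G * G = ⊕_g J_G x̄_g`, where `J_G = {r : σ(g)(r) ∈ J for all g}`. -/
theorem stmt17 {G : Type*} [Monoid G] (hUP : IsUPM G)
    {R S : Type*} [Ring R] [Ring S]
    (ι : R →+* S) (σ : G → R →+* R) (c : G → G → Rˣ) (xb : G → S)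
    (hσe : σ 1 = RingHom.id R) (hxe : xb 1 = 1)
    (hxr : ∀ (g : G) (r : R), xb g * ι r = ι (σ g r) * xb g)
    (hxx : ∀ g h : G, xb g * xb h = ι (c g h : R) * xb (g * h))
    (hfree : Function.Bijective fun f : G →₀ R => f.sum fun g r => ι r * xb g)
    {M : Type*} [AddCommGroup M] [Module Rᵐᵒᵖ M]
    {N : Type*} [AddCommGroup N] [Module Sᵐᵒᵖ N] (j : G → M →+ N)
    (hact : ∀ (g h : G) (m : M) (r : R),
      MulOpposite.op (ι r * xb h) • j g m =
        j (g * h) (MulOpposite.op (σ g r * (c g h : R)) • m))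
    (hNfree : Function.Bijective fun f : G →₀ M => f.sum fun g m => j g m) :
    {s : S | ∀ n : N, MulOpposite.op s • n = 0} =
      {s : S | ∃ f : G →₀ R,
        (∀ g : G, f g ∈ {r : R | ∀ h : G, ∀ m : M, MulOpposite.op (σ h r) • m = 0}) ∧
        s = f.sum fun g r => ι r * xb g} :=
  stmt17_general hUP ι σ c xb hfree j hact hNfree
end

section
/- Let G be a unique product monoid and S = R*G a crossed product with action σ. A nonzero right R-module M is S-prime (i.e., the induced module M*G is a prime S-module) if and only if for all m ∈ M and every ideal B of R with σ(h)(B) ⊆ B for all h ∈ G, whenever m·σ(g)(B) = 0 for some g ∈ G, we have m = 0 or MB = 0. -/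
/-- A two-sided ideal of a ring, as a set. -/
def IsIdealSet {R : Type*} [Ring R] (I : Set R) : Prop :=
  (0 : R) ∈ I ∧ (∀ a ∈ I, ∀ b ∈ I, a + b ∈ I) ∧ (∀ a ∈ I, -a ∈ I) ∧
    (∀ a ∈ I, ∀ r : R, r * a ∈ I ∧ a * r ∈ I)

/-!
If `m σ(g)(B) = 0` with `m ≠ 0`, each `b ∈ B` annihilates the nonzero submodule generated by
`m x̄_g`, hence all of `M*G` by primeness, and in particular `M x̄_1`.

Conversely, let `s = ∑ ι(t_y) x̄_y` annihilate a nonzero submodule `P`, and pick `f ∈ P` of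
minimal support. Minimality makes the coefficients of `f · ι(γ)` vanish all at once or not at
all, and a unique-product argument then puts every `t_y` into the largest `G`-stable ideal `B`
with `f_x σ(x)(B) = 0`. The hypothesis gives `MB = 0`, so `s` annihilates `M*G`.
-/

open scoped RightActions
open Finset

lemma IsUPM.mul_left_cancel {G : Type*} [Monoid G] (hG : IsUPM G) {a b b' : G}
    (h : a * b = a * b') : b = b' := by
  classical
  obtain ⟨x, hx, y, hy, huniq⟩ := hG {a} {b, b'} (singleton_nonempty a) (insert_nonempty b {b'})
  rw [mem_singleton] at hx
  subst hx
  rcases mem_insert.mp hy with rfl | hy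
  · exact (huniq _ (mem_singleton_self _) b' (by simp) h.symm).2.symm
  · obtain rfl := mem_singleton.mp hy
    exact (huniq _ (mem_singleton_self _) b (by simp) h).2

lemma Finsupp.finsetSum_single_apply_of_unique {α ι M : Type*} [AddCommMonoid M]
    (s : Finset ι) (k : ι → α) (W : ι → M) {i₀ : ι} (hi₀ : i₀ ∈ s)
    (huniq : ∀ i ∈ s, k i = k i₀ → i = i₀) :
    (∑ i ∈ s, Finsupp.single (k i) (W i)) (k i₀) = W i₀ := by
  rw [Finsupp.finsetSum_apply, sum_eq_single_of_mem i₀ hi₀, Finsupp.single_eq_same]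
  exact fun i hi hne => Finsupp.single_eq_of_ne' fun h => hne (huniq i hi h)

lemma op_smul_finsetSum {ι S N : Type*} [Ring S] [AddCommGroup N] [Module Sᵐᵒᵖ N]
    (n : N) (s : Finset ι) (f : ι → S) : n <• ∑ i ∈ s, f i = ∑ i ∈ s, n <• f i := by
  rw [← MulOpposite.opAddEquiv_apply, map_sum, sum_smul]

structure IsCrossedProduct {G R S : Type*} [Monoid G] [Ring R] [Ring S]
    (ι : R →+* S) (σ : G → R →+* R) (c : G → G → Rˣ) (xb : G → S) : Prop where
  σ_one : σ 1 = RingHom.id R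
  xb_one : xb 1 = 1
  xb_mul_ι : ∀ (g : G) (r : R), xb g * ι r = ι (σ g r) * xb g
  xb_mul_xb : ∀ g h : G, xb g * xb h = ι (c g h : R) * xb (g * h)
  bijective : Function.Bijective fun f : G →₀ R => f.sum fun g r => ι r * xb g

namespace IsCrossedProduct

variable {G R S : Type*} [Monoid G] [Ring R] [Ring S]
  {ι : R →+* S} {σ : G → R →+* R} {c : G → G → Rˣ} {xb : G → S}

lemma σ_one_apply (hS : IsCrossedProduct ι σ c xb) (r : R) : σ 1 r = r := by
  rw [hS.σ_one, RingHom.id_apply]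

lemma eq_of_ι_mul_xb_eq (hS : IsCrossedProduct ι σ c xb) {g : G} {r r' : R}
    (h : ι r * xb g = ι r' * xb g) : r = r' :=
  Finsupp.single_injective g <| hS.bijective.injective <| by
    simpa only [Finsupp.sum_single_index, map_zero, zero_mul] using h

lemma c_one_right (hS : IsCrossedProduct ι σ c xb) (g : G) : (c g 1 : R) = 1 :=
  hS.eq_of_ι_mul_xb_eq (g := g) <| by
    have h := hS.xb_mul_xb g 1
    rw [hS.xb_one, mul_one, mul_one] at h
    rw [map_one, one_mul, ← h]

lemma c_mul_σ_mul (hS : IsCrossedProduct ι σ c xb) (g h : G) (r : R) :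
    (c g h : R) * σ (g * h) r = σ g (σ h r) * c g h :=
  hS.eq_of_ι_mul_xb_eq (g := g * h) <| calc
    ι ((c g h : R) * σ (g * h) r) * xb (g * h) = xb g * xb h * ι r := by
      rw [map_mul, mul_assoc, ← hS.xb_mul_ι, ← mul_assoc, hS.xb_mul_xb]
    _ = ι (σ g (σ h r) * c g h) * xb (g * h) := by
      rw [mul_assoc, hS.xb_mul_ι, ← mul_assoc, hS.xb_mul_ι, mul_assoc, hS.xb_mul_xb, map_mul,
        mul_assoc]

lemma σ_σ_apply (hS : IsCrossedProduct ι σ c xb) (g h : G) (r : R) :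
    σ g (σ h r) = c g h * σ (g * h) r * ↑(c g h)⁻¹ := by
  rw [hS.c_mul_σ_mul, Units.mul_inv_cancel_right]

lemma ι_mul_xb_mul_ι_mul_xb (hS : IsCrossedProduct ι σ c xb) (a b : R) (g h : G) :
    ι a * xb g * (ι b * xb h) = ι (a * σ g b * c g h) * xb (g * h) := by
  rw [← mul_assoc, mul_assoc (ι a), hS.xb_mul_ι, mul_assoc, mul_assoc, hS.xb_mul_xb, map_mul,
    map_mul]
  simp only [mul_assoc]

lemma sum_mul_ι (hS : IsCrossedProduct ι σ c xb) (t : G →₀ R) (b : R) :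
    (t.sum fun g r => ι r * xb g) * ι b = t.sum fun g r => ι (r * σ g b) * xb g := by
  rw [Finsupp.sum_mul]
  refine sum_congr rfl fun g _ => ?_
  simp only [mul_assoc, hS.xb_mul_ι, map_mul]

end IsCrossedProduct

/-- The largest `G`-stable ideal `B` with `m · σ(x)(B) = 0`. -/
def stableAnnihilator {G R M : Type*} [Ring R] [AddCommGroup M] [Module Rᵐᵒᵖ M]
    (σ : G → R →+* R) (m : M) (x : G) : Set R :=
  {b | ∀ (v : G) (a : R), m <• σ x (a * σ v b) = 0}

section stableAnnihilator

variable {G R M : Type*} [Ring R] [AddCommGroup M] [Module Rᵐᵒᵖ M]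

lemma isIdealSet_stableAnnihilator (σ : G → R →+* R) (m : M) (x : G) :
    IsIdealSet (stableAnnihilator σ m x) := by
  refine ⟨fun v a => by simp, fun b hb b' hb' v a => ?_, fun b hb v a => ?_,
    fun b hb r => ⟨fun v a => ?_, fun v a => ?_⟩⟩
  · rw [map_add, mul_add, map_add, MulOpposite.op_add, add_smul, hb, hb', add_zero]
  · rw [map_neg, mul_neg, map_neg, MulOpposite.op_neg, neg_smul, hb, neg_zero]
  · rw [map_mul (σ v), ← mul_assoc]
    exact hb v _
  · rw [map_mul (σ v), ← mul_assoc, map_mul, op_smul_mul, hb, smul_zero]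

variable {S : Type*} [Monoid G] [Ring S]
  {ι : R →+* S} {σ : G → R →+* R} {c : G → G → Rˣ} {xb : G → S}

lemma IsCrossedProduct.σ_mem_stableAnnihilator (hS : IsCrossedProduct ι σ c xb) {m : M}
    {x : G} {b : R} (hb : b ∈ stableAnnihilator σ m x) (h : G) :
    σ h b ∈ stableAnnihilator σ m x := by
  intro v a
  rw [hS.σ_σ_apply, ← mul_assoc, ← mul_assoc, map_mul, op_smul_mul, hb, smul_zero]

lemma IsCrossedProduct.op_smul_σ_eq_zero_of_mem_stableAnnihilator
    (hS : IsCrossedProduct ι σ c xb) {m : M} {x : G} {b : R}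
    (hb : b ∈ stableAnnihilator σ m x) : m <• σ x b = 0 := by
  simpa only [hS.σ_one_apply, one_mul] using hb 1 1

end stableAnnihilator

/-- `j g m` is `m x̄_g ∈ M*G`. -/
structure IsInducedModule {G R S : Type*} [Monoid G] [Ring R] [Ring S]
    (ι : R →+* S) (σ : G → R →+* R) (c : G → G → Rˣ) (xb : G → S)
    {M N : Type*} [AddCommGroup M] [Module Rᵐᵒᵖ M] [AddCommGroup N] [Module Sᵐᵒᵖ N]
    (j : G → M →+ N) : Prop where
  j_smul : ∀ (g h : G) (m : M) (r : R),
    j g m <• (ι r * xb h) = j (g * h) (m <• (σ g r * c g h))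
  bijective : Function.Bijective (Finsupp.liftAddHom j)

namespace IsInducedModule

variable {G R S M N : Type*} [Monoid G] [Ring R] [Ring S]
  {ι : R →+* S} {σ : G → R →+* R} {c : G → G → Rˣ} {xb : G → S}
  [AddCommGroup M] [Module Rᵐᵒᵖ M] [AddCommGroup N] [Module Sᵐᵒᵖ N] {j : G → M →+ N}

lemma eq_zero_of_j_eq_zero (hN : IsInducedModule ι σ c xb j) {g : G} {m : M}
    (h : j g m = 0) : m = 0 :=
  Finsupp.single_eq_zero.mp <| hN.bijective.injective <| by
    rw [Finsupp.liftAddHom_apply_single, h, map_zero]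

lemma j_smul_ι (hN : IsInducedModule ι σ c xb j) (hS : IsCrossedProduct ι σ c xb)
    (g : G) (m : M) (r : R) : j g m <• ι r = j g (m <• σ g r) := by
  simpa only [hS.xb_one, mul_one, hS.c_one_right] using hN.j_smul g 1 m r

lemma lift_smul_ι_mul_xb_eq_zero (hN : IsInducedModule ι σ c xb j) {f : G →₀ M} {r : R}
    (hf : ∀ x ∈ f.support, f x <• σ x r = 0) (h : G) :
    Finsupp.liftAddHom j f <• (ι r * xb h) = 0 := by
  rw [Finsupp.liftAddHom_apply, Finsupp.sum, smul_sum]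
  refine sum_eq_zero fun x hx => ?_
  rw [hN.j_smul, op_smul_mul, hf x hx, smul_zero, map_zero]

lemma sum_lift_smul_ι_mul_xb {β : Type*} (hN : IsInducedModule ι σ c xb j) (f : G →₀ M)
    (Y : Finset β) (r : β → R) (k : β → G) :
    ∑ y ∈ Y, Finsupp.liftAddHom j f <• (ι (r y) * xb (k y)) =
      Finsupp.liftAddHom j (∑ p ∈ f.support ×ˢ Y,
        Finsupp.single (p.1 * k p.2) (f p.1 <• (σ p.1 (r p.2) * c p.1 (k p.2)))) := by
  rw [map_sum, sum_product' (f := fun x y => Finsupp.liftAddHom j (Finsupp.single (x * k y)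
    (f x <• (σ x (r y) * c x (k y))))), sum_comm]
  refine sum_congr rfl fun y _ => ?_
  rw [Finsupp.liftAddHom_apply, Finsupp.sum, smul_sum]
  refine sum_congr rfl fun x _ => ?_
  rw [Finsupp.liftAddHom_apply_single, hN.j_smul]

/-- The coefficient of a unique product in `f · s` is the product of the coefficients. -/
lemma op_smul_σ_eq_zero_of_unique_mul {β : Type*} (hN : IsInducedModule ι σ c xb j)
    {f : G →₀ M} {Y : Finset β} {r : β → R} {k : β → G}
    (h0 : ∑ y ∈ Y, Finsupp.liftAddHom j f <• (ι (r y) * xb (k y)) = 0)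
    {x₀ : G} {y₀ : β} (hx₀ : x₀ ∈ f.support) (hy₀ : y₀ ∈ Y)
    (huniq : ∀ x ∈ f.support, ∀ y ∈ Y, x * k y = x₀ * k y₀ → x = x₀ ∧ y = y₀) :
    f x₀ <• σ x₀ (r y₀) = 0 := by
  rw [hN.sum_lift_smul_ι_mul_xb, ← map_zero (Finsupp.liftAddHom j)] at h0
  have hcoeff := DFunLike.congr_fun (hN.bijective.injective h0) (x₀ * k y₀)
  rw [Finsupp.finsetSum_single_apply_of_unique _ (fun p => p.1 * k p.2) _ (i₀ := (x₀, y₀))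
      (mem_product.mpr ⟨hx₀, hy₀⟩) fun p hp hk => Prod.ext_iff.mpr
        (huniq p.1 (mem_product.mp hp).1 p.2 (mem_product.mp hp).2 hk)] at hcoeff
  rwa [Finsupp.coe_zero, Pi.zero_apply, op_smul_mul, (c x₀ (k y₀)).isUnit.op.smul_eq_zero]
    at hcoeff

lemma op_smul_ι_eq_zero_of_mem_span (hN : IsInducedModule ι σ c xb j)
    (hS : IsCrossedProduct ι σ c xb) {B : Set R} (hB : IsIdealSet B)
    (hBσ : ∀ h : G, ∀ b ∈ B, σ h b ∈ B) {g : G} {m : M} (hm : ∀ b ∈ B, m <• σ g b = 0)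
    {b : R} (hb : b ∈ B) {n : N} (hn : n ∈ Submodule.span Sᵐᵒᵖ {j g m}) : n <• ι b = 0 := by
  obtain ⟨u, rfl⟩ := Submodule.mem_span_singleton.mp hn
  obtain ⟨w, hw⟩ := hS.bijective.surjective u.unop
  rw [← MulOpposite.op_unop u, op_smul_op_smul, ← hw, hS.sum_mul_ι, Finsupp.sum,
    op_smul_finsetSum]
  refine sum_eq_zero fun h _ => ?_
  rw [hN.j_smul, op_smul_mul, hm _ (hB.2.2.2 _ (hBσ h b hb) _).1, smul_zero, map_zero]

lemma eq_zero_or_of_prime (hN : IsInducedModule ι σ c xb j) (hS : IsCrossedProduct ι σ c xb)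
    (hprime : ∀ P : Submodule Sᵐᵒᵖ N, P ≠ ⊥ →
      {s : S | ∀ n ∈ P, n <• s = 0} = {s : S | ∀ n : N, n <• s = 0})
    {B : Set R} (hB : IsIdealSet B) (hBσ : ∀ h : G, ∀ b ∈ B, σ h b ∈ B) {g : G} {m : M}
    (hm : ∀ b ∈ B, m <• σ g b = 0) : m = 0 ∨ ∀ m' : M, ∀ b ∈ B, m' <• b = 0 := by
  refine or_iff_not_imp_left.mpr fun hm0 m' b hb => ?_
  have hspan : Submodule.span Sᵐᵒᵖ {j g m} ≠ ⊥ := by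
    rw [Ne, Submodule.span_singleton_eq_bot]
    exact fun h => hm0 (hN.eq_zero_of_j_eq_zero h)
  have hann : ι b ∈ {s : S | ∀ n : N, n <• s = 0} :=
    hprime _ hspan ▸ fun n hn => hN.op_smul_ι_eq_zero_of_mem_span hS hB hBσ hm hb hn
  have hm' := hann (j 1 m')
  rw [hN.j_smul_ι hS, hS.σ_one_apply] at hm'
  exact hN.eq_zero_of_j_eq_zero hm'

lemma exists_min_support (hN : IsInducedModule ι σ c xb j) {P : Submodule Sᵐᵒᵖ N}
    (hP : P ≠ ⊥) : ∃ f₀ : G →₀ M, Finsupp.liftAddHom j f₀ ∈ P ∧ f₀ ≠ 0 ∧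
      ∀ f : G →₀ M, Finsupp.liftAddHom j f ∈ P → f ≠ 0 → #f₀.support ≤ #f.support := by
  obtain ⟨n, hnP, hn⟩ := Submodule.exists_mem_ne_zero_of_ne_bot hP
  obtain ⟨f, rfl⟩ := hN.bijective.surjective n
  obtain ⟨f₀, ⟨hf₀P, hf₀⟩, hmin⟩ := (measure fun f : G →₀ M => #f.support).wf.has_min
    {f | Finsupp.liftAddHom j f ∈ P ∧ f ≠ 0} ⟨f, hnP, by rintro rfl; exact hn (map_zero _)⟩
  exact ⟨f₀, hf₀P, hf₀, fun f hfP hf => not_lt.mp (hmin f ⟨hfP, hf⟩)⟩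

variable {P : Submodule Sᵐᵒᵖ N} {f₀ : G →₀ M}

/-- `f₀ · ι γ` has coefficients `f₀ x · σ x γ`, so its support is smaller than that of `f₀`
as soon as one of them vanishes. -/
lemma op_smul_σ_eq_zero_of_min_support (hN : IsInducedModule ι σ c xb j)
    (hS : IsCrossedProduct ι σ c xb) (hf₀P : Finsupp.liftAddHom j f₀ ∈ P)
    (hmin : ∀ f : G →₀ M, Finsupp.liftAddHom j f ∈ P → f ≠ 0 → #f₀.support ≤ #f.support)
    {γ : R} {x' : G} (hx' : x' ∈ f₀.support) (h : f₀ x' <• σ x' γ = 0) (x : G) :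
    f₀ x <• σ x γ = 0 := by
  let f₁ : G →₀ M := Finsupp.onFinset f₀.support (fun x => f₀ x <• σ x γ)
    fun x hx => Finsupp.mem_support_iff.mpr fun h0 => hx (by rw [h0, smul_zero])
  have hf₁P : Finsupp.liftAddHom j f₁ ∈ P := by
    have hf₁ : Finsupp.liftAddHom j f₁ = Finsupp.liftAddHom j f₀ <• ι γ := by
      rw [Finsupp.liftAddHom_apply, Finsupp.liftAddHom_apply,
        Finsupp.onFinset_sum _ fun x => map_zero (j x), Finsupp.sum, smul_sum]
      exact sum_congr rfl fun x _ => (hN.j_smul_ι hS x _ γ).symm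
    exact hf₁ ▸ P.smul_mem _ hf₀P
  have hlt : #f₁.support < #f₀.support := card_lt_card
    ⟨Finsupp.support_onFinset_subset, fun hsub => Finsupp.mem_support_iff.mp (hsub hx') h⟩
  by_contra hx
  exact (hmin f₁ hf₁P fun h0 => hx (DFunLike.congr_fun h0 x)).not_gt hlt

/-- The unique-product argument: if `s = ∑ ι (t y) xb y` kills `P`, look at a unique product
`xs · (v ys)` with `xs` in the support of `f₀` and `ys` ranging over the `y` that violate the
claim; the corresponding coefficient of `f₀ · (ι a xb v) · s` is then a single term. -/
lemma op_smul_σ_mul_σ_eq_zero (hN : IsInducedModule ι σ c xb j) (hG : IsUPM G)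
    (hS : IsCrossedProduct ι σ c xb) (hf₀P : Finsupp.liftAddHom j f₀ ∈ P) (hf₀ : f₀ ≠ 0)
    (hmin : ∀ f : G →₀ M, Finsupp.liftAddHom j f ∈ P → f ≠ 0 → #f₀.support ≤ #f.support)
    {t : G →₀ R} (ht : ∀ n ∈ P, n <• (t.sum fun g r => ι r * xb g) = 0)
    (v y : G) (a : R) (x : G) : f₀ x <• σ x (a * σ v (t y)) = 0 := by
  classical
  revert y a x
  by_contra! hbad
  obtain ⟨y₁, a₁, x₁, h₁⟩ := hbad
  set K := t.support.filter fun y => ∃ a x, f₀ x <• σ x (a * σ v (t y)) ≠ 0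
  have hK : K.Nonempty := ⟨y₁, mem_filter.mpr ⟨Finsupp.mem_support_iff.mpr fun h0 =>
    h₁ (by rw [h0, map_zero, mul_zero, map_zero, MulOpposite.op_zero, zero_smul]), a₁, x₁, h₁⟩⟩
  obtain ⟨xs, hxs, _, hvys, huniq⟩ := hG f₀.support (K.image (v * ·))
    (Finsupp.support_nonempty_iff.mpr hf₀) (hK.image _)
  obtain ⟨ys, hys, rfl⟩ := mem_image.mp hvys
  obtain ⟨-, a₀, x₀, h₀⟩ := mem_filter.mp hys
  refine h₀ (hN.op_smul_σ_eq_zero_of_min_support hS hf₀P hmin hxs ?_ x₀)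
  have hzero : ∑ y ∈ K,
      Finsupp.liftAddHom j f₀ <• (ι (a₀ * σ v (t y) * c v y) * xb (v * y)) = 0 := by
    have hs := ht _ (P.smul_mem (MulOpposite.op (ι a₀ * xb v)) hf₀P)
    rw [op_smul_op_smul, Finsupp.sum, mul_sum, op_smul_finsetSum] at hs
    simp only [hS.ι_mul_xb_mul_ι_mul_xb] at hs
    rwa [← sum_subset (filter_subset _ t.support : K ⊆ _) fun y hy hyK => ?_] at hs
    refine hN.lift_smul_ι_mul_xb_eq_zero (fun x _ => ?_) _
    simp only [mem_filter, not_and, not_exists, not_not] at hyK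
    rw [map_mul, op_smul_mul, hyK hy a₀ x, smul_zero]
  have hcoeff := hN.op_smul_σ_eq_zero_of_unique_mul hzero hxs hys fun x hx y hy hxy =>
    have h := huniq x hx (v * y) (mem_image_of_mem _ hy) hxy
    ⟨h.1, hG.mul_left_cancel h.2⟩
  rwa [map_mul, op_smul_mul, ((c v ys).isUnit.map (σ xs)).op.smul_eq_zero] at hcoeff

lemma op_smul_eq_zero_of_forall (hN : IsInducedModule ι σ c xb j) {t : G →₀ R}
    (ht : ∀ (g y : G) (m : M), m <• σ g (t y) = 0) (n : N) :
    n <• (t.sum fun g r => ι r * xb g) = 0 := by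
  obtain ⟨f, rfl⟩ := hN.bijective.surjective n
  rw [Finsupp.sum, op_smul_finsetSum]
  exact sum_eq_zero fun y _ => hN.lift_smul_ι_mul_xb_eq_zero (fun x _ => ht x y (f x)) y

lemma annihilator_eq_of_ne_bot (hN : IsInducedModule ι σ c xb j) (hG : IsUPM G)
    (hS : IsCrossedProduct ι σ c xb)
    (hcond : ∀ (m : M) (B : Set R), IsIdealSet B → (∀ h : G, ∀ b ∈ B, σ h b ∈ B) →
      (∃ g : G, ∀ b ∈ B, m <• σ g b = 0) → m = 0 ∨ ∀ m' : M, ∀ b ∈ B, m' <• b = 0)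
    (hP : P ≠ ⊥) : {s : S | ∀ n ∈ P, n <• s = 0} = {s : S | ∀ n : N, n <• s = 0} := by
  refine Set.Subset.antisymm (fun s hs => ?_) fun s hs n _ => hs n
  obtain ⟨t, rfl⟩ := hS.bijective.surjective s
  obtain ⟨f₀, hf₀P, hf₀, hmin⟩ := hN.exists_min_support hP
  obtain ⟨x₀, hx₀⟩ := Finsupp.support_nonempty_iff.mpr hf₀
  have ht : ∀ y, t y ∈ stableAnnihilator σ (f₀ x₀) x₀ := fun y v a =>
    hN.op_smul_σ_mul_σ_eq_zero hG hS hf₀P hf₀ hmin hs v y a x₀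
  rcases hcond (f₀ x₀) _ (isIdealSet_stableAnnihilator σ _ x₀)
      (fun h b hb => hS.σ_mem_stableAnnihilator hb h)
      ⟨x₀, fun b hb => hS.op_smul_σ_eq_zero_of_mem_stableAnnihilator hb⟩ with h0 | hB
  · exact absurd h0 (Finsupp.mem_support_iff.mp hx₀)
  · exact hN.op_smul_eq_zero_of_forall fun g y m => hB m _ (hS.σ_mem_stableAnnihilator (ht y) g)

end IsInducedModule

/-- Let `G` be a unique product monoid and `S = R*G` a crossed product with action
`σ`.  A nonzero right `R`-module `M` is `S`-prime — i.e. the induced module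
`N = M*G` is a prime `S`-module — iff for all `m ∈ M` and every `G`-stable ideal
`B` of `R`, whenever `m·σ(g)(B) = 0` for some `g ∈ G`, we have `m = 0` or `MB = 0`. -/
theorem stmt18 {G : Type*} [Monoid G] (hUP : IsUPM G)
    {R S : Type*} [Ring R] [Ring S]
    (ι : R →+* S) (σ : G → R →+* R) (c : G → G → Rˣ) (xb : G → S)
    (hσe : σ 1 = RingHom.id R) (hxe : xb 1 = 1)
    (hxr : ∀ (g : G) (r : R), xb g * ι r = ι (σ g r) * xb g)
    (hxx : ∀ g h : G, xb g * xb h = ι (c g h : R) * xb (g * h))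
    (hfree : Function.Bijective fun f : G →₀ R => f.sum fun g r => ι r * xb g)
    {M : Type*} [AddCommGroup M] [Module Rᵐᵒᵖ M] (hM : ∃ m : M, m ≠ 0)
    {N : Type*} [AddCommGroup N] [Module Sᵐᵒᵖ N] (j : G → M →+ N)
    (hact : ∀ (g h : G) (m : M) (r : R),
      MulOpposite.op (ι r * xb h) • j g m =
        j (g * h) (MulOpposite.op (σ g r * (c g h : R)) • m))
    (hNfree : Function.Bijective fun f : G →₀ M => f.sum fun g m => j g m) :
    ((∃ n : N, n ≠ 0) ∧ ∀ P : Submodule Sᵐᵒᵖ N, P ≠ ⊥ →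
        {s : S | ∀ n ∈ P, MulOpposite.op s • n = 0} =
          {s : S | ∀ n : N, MulOpposite.op s • n = 0}) ↔
    (∀ (m : M) (B : Set R), IsIdealSet B → (∀ h : G, ∀ b ∈ B, σ h b ∈ B) →
      (∃ g : G, ∀ b ∈ B, MulOpposite.op (σ g b) • m = 0) →
      m = 0 ∨ ∀ m' : M, ∀ b ∈ B, MulOpposite.op b • m' = 0) := by
  have hS : IsCrossedProduct ι σ c xb := ⟨hσe, hxe, hxr, hxx, hfree⟩
  have hN : IsInducedModule ι σ c xb j := ⟨hact, hNfree⟩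
  obtain ⟨m, hm⟩ := hM
  constructor
  · rintro ⟨-, hprime⟩ m B hB hBσ ⟨g, hmg⟩
    exact hN.eq_zero_or_of_prime hS hprime hB hBσ hmg
  · exact fun hcond => ⟨⟨j 1 m, fun h => hm (hN.eq_zero_of_j_eq_zero h)⟩,
      fun P hP => hN.annihilator_eq_of_ne_bot hUP hS hcond hP⟩
end

section
/- Let σ be an endomorphism of a ring R, S = R[x;σ] the skew polynomial ring with xr = σ(r)x, and I an ideal of R with σ(I) ⊆ I. Then IS is a prime ideal of S if and only if for every left ideal A of R and every ideal B of R with σ(B) ⊆ B, if A·σ^p(B) ⊆ I for some p ∈ ℕ then A ⊆ I or B ⊆ I. -/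
/-! `IS` consists of the skew polynomials all of whose coefficients lie in `I`. For `a, b ∈ R`,
`(a xⁿ) S b ⊆ IS` says exactly that `a σⁿ(r) σⁿ⁺ᵏ(b) ∈ I` for all `r ∈ R`, `k ∈ ℕ`. If `a S b ⊆ IS`
for arbitrary `a, b ∈ S`, let `aₙ`, `bₘ` be their last coefficients outside `I`: the coefficient
of `xⁿ⁺ᵏ⁺ᵐ` in `a (r xᵏ) b` is `aₙ σⁿ(r) σⁿ⁺ᵏ(bₘ)` plus terms in `I` (here `σ(I) ⊆ I` is used).
Hence both sides of the equivalence say that this condition on `a, b ∈ R` forces `a ∈ I` or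
`b ∈ I`. On the ideal side, the `a'` satisfying it against `b` form a left ideal, and the `b'`
satisfying it against all those `a'` form a σ-stable ideal. -/

open Pointwise

def IsLeftIdealSet {R : Type*} [Ring R] (I : Set R) : Prop :=
  (0 : R) ∈ I ∧ (∀ a ∈ I, ∀ b ∈ I, a + b ∈ I) ∧ (∀ a ∈ I, -a ∈ I) ∧
    (∀ a ∈ I, ∀ r : R, r * a ∈ I)

def IsIdealSet.toTwoSidedIdeal {R : Type*} [Ring R] {I : Set R} (hI : IsIdealSet I) :
    TwoSidedIdeal R :=
  .mk' I hI.1 (hI.2.1 _ · _ ·) (hI.2.2.1 _ ·) (fun hy => (hI.2.2.2 _ hy _).1)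
    (fun hx => (hI.2.2.2 _ hx _).2)

theorem IsIdealSet.coe_toTwoSidedIdeal {R : Type*} [Ring R] {I : Set R} (hI : IsIdealSet I) :
    (hI.toTwoSidedIdeal : Set R) = I :=
  TwoSidedIdeal.coe_mk' ..

section SkewPrime

variable {R : Type*} [Ring R] (σ : R →+* R)

theorem subset_or_subset_of_mem_or_mem {I : Set R}
    (hI : ∀ (a b : R) (n : ℕ), (∀ r k, a * σ^[n] r * σ^[n + k] b ∈ I) → a ∈ I ∨ b ∈ I)
    {A B : Set R} (hB : IsIdealSet B) (hσB : ∀ b ∈ B, σ b ∈ B) {p : ℕ}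
    (hAB : ∀ a ∈ A, ∀ b ∈ B, a * σ^[p] b ∈ I) : A ⊆ I ∨ B ⊆ I := by
  by_contra! h
  obtain ⟨⟨a, haA, haI⟩, ⟨b, hbB, hbI⟩⟩ := And.imp Set.not_subset.1 Set.not_subset.1 h
  refine (hI a b p fun r k => ?_).elim haI hbI
  rw [Function.iterate_add_apply, mul_assoc, ← iterate_map_mul]
  exact hAB a haA _ (hB.2.2.2 _ (Set.MapsTo.iterate hσB k hbB) r).1

theorem mem_or_mem_of_subset_or_subset (I : TwoSidedIdeal R)
    (hI : ∀ A B : Set R, IsLeftIdealSet A → IsIdealSet B → (∀ b ∈ B, σ b ∈ B) →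
      (∃ p : ℕ, ∀ a ∈ A, ∀ b ∈ B, a * σ^[p] b ∈ I) → A ⊆ I ∨ B ⊆ I)
    {a b : R} {n : ℕ} (hab : ∀ r k, a * σ^[n] r * σ^[n + k] b ∈ I) : a ∈ I ∨ b ∈ I := by
  -- `A` and `B` are ideals because the condition ranges over all `r` and all shifts `k`
  set A : Set R := {a' | ∀ r k, a' * σ^[n] r * σ^[n + k] b ∈ I}
  set B : Set R := {b' | ∀ a' ∈ A, ∀ r k, a' * σ^[n] r * σ^[n + k] b' ∈ I}
  have hA : IsLeftIdealSet A := by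
    refine ⟨fun r k => ?_, fun u hu v hv r k => ?_, fun u hu r k => ?_, fun u hu c r k => ?_⟩
    · simp
    · simpa only [add_mul] using I.add_mem (hu r k) (hv r k)
    · simpa only [neg_mul] using I.neg_mem (hu r k)
    · simpa only [mul_assoc] using I.mul_mem_left c _ (hu r k)
  have hB : IsIdealSet B := by
    refine ⟨fun a' _ r k => ?_, fun u hu v hv a' ha' r k => ?_, fun u hu a' ha' r k => ?_,
      fun u hu c => ⟨fun a' ha' r k => ?_, fun a' ha' r k => ?_⟩⟩
    · simp
    · simpa only [iterate_map_add, mul_add] using I.add_mem (hu a' ha' r k) (hv a' ha' r k)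
    · simpa only [iterate_map_neg, mul_neg] using I.neg_mem (hu a' ha' r k)
    · rw [iterate_map_mul, ← mul_assoc, Function.iterate_add_apply σ n k c, mul_assoc a',
        ← iterate_map_mul]
      exact hu a' ha' (r * σ^[k] c) k
    · simpa only [iterate_map_mul, ← mul_assoc] using I.mul_mem_right _ _ (hu a' ha' r k)
  have hσB : ∀ b' ∈ B, σ b' ∈ B := fun b' hb' a' ha' r k => by
    simpa only [← add_assoc, Function.iterate_succ_apply] using hb' a' ha' r (k + 1)
  have hAB : ∀ a' ∈ A, ∀ b' ∈ B, a' * σ^[n] b' ∈ I := fun a' ha' b' hb' => by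
    simpa using hb' a' ha' 1 0
  exact (hI A B hA hB hσB ⟨n, hAB⟩).imp (· hab) (· fun a' ha' => ha')

end SkewPrime

theorem Finsupp.exists_greatest_apply_notMem {M : Type*} [Zero M] {s : Set M} (hs : (0 : M) ∈ s)
    (f : ℕ →₀ M) (h : ∃ n, f n ∉ s) : ∃ n, f n ∉ s ∧ ∀ i, n < i → f i ∈ s := by
  have hfin : {n | f n ∉ s}.Finite := f.hasFiniteSupport.subset fun n hn h0 => hn (h0 ▸ hs)
  obtain ⟨n, hn, hmax⟩ := Set.exists_max_image _ id hfin h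
  exact ⟨n, hn, fun i hi => by_contra fun hi' => absurd (hmax i hi') (not_le.2 hi)⟩

noncomputable section

namespace SkewPoly

variable {R S : Type*} [Ring R] [Ring S] {σ : R →+* R} {ι : R →+* S} {x : S}

variable (ι) in
def extension (I : Set R) : AddSubgroup S :=
  AddSubgroup.closure ((ι '' I) * (Set.univ : Set S))

variable (ι x) in
def sumMonomials : (ℕ →₀ R) →+ S :=
  Finsupp.liftAddHom fun n => (AddMonoidHom.mulRight (x ^ n)).comp ι.toAddMonoidHom

theorem sumMonomials_apply (f : ℕ →₀ R) :
    sumMonomials ι x f = f.sum fun n r => ι r * x ^ n :=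
  Finsupp.liftAddHom_apply _ f

theorem pow_mul_map (hx : ∀ r : R, x * ι r = ι (σ r) * x) (n : ℕ) (r : R) :
    x ^ n * ι r = ι (σ^[n] r) * x ^ n := by
  induction n generalizing r with
  | zero => simp
  | succ n ih =>
    rw [pow_succ, mul_assoc, hx, ← mul_assoc, ih, mul_assoc, Function.iterate_succ_apply]

theorem monomial_mul_monomial (hx : ∀ r : R, x * ι r = ι (σ r) * x) (u v : R) (i j : ℕ) :
    ι u * x ^ i * (ι v * x ^ j) = ι (u * σ^[i] v) * x ^ (i + j) := by
  rw [mul_assoc, ← mul_assoc (x ^ i), pow_mul_map hx, mul_assoc, ← pow_add, ← mul_assoc,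
    ← map_mul]

variable (hfree : Function.Bijective fun f : ℕ →₀ R => f.sum fun n r => ι r * x ^ n)

def coeffs : S ≃+ (ℕ →₀ R) :=
  (AddEquiv.ofBijective (sumMonomials ι x) (by simpa only [funext sumMonomials_apply])).symm

theorem coeffs_symm_apply (f : ℕ →₀ R) :
    (coeffs hfree).symm f = f.sum fun n r => ι r * x ^ n :=
  sumMonomials_apply f

theorem coeffs_monomial (c : R) (n : ℕ) : coeffs hfree (ι c * x ^ n) = Finsupp.single n c := by
  rw [← AddEquiv.eq_symm_apply, coeffs_symm_apply, Finsupp.sum_single_index (by simp)]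

theorem sum_coeffs_monomial (s : S) :
    ∑ n ∈ (coeffs hfree s).support, ι (coeffs hfree s n) * x ^ n = s := by
  conv_rhs => rw [← (coeffs hfree).symm_apply_apply s, coeffs_symm_apply]
  rfl

theorem coeffs_sum_monomial {α : Type*} (T : Finset α) (c : α → R) (d : α → ℕ) (n : ℕ) :
    coeffs hfree (∑ p ∈ T, ι (c p) * x ^ d p) n = ∑ p ∈ T, if d p = n then c p else 0 := by
  simp only [map_sum, coeffs_monomial, Finsupp.finsetSum_apply, Finsupp.single_apply]

theorem coeffs_map_mul (c : R) (s : S) : coeffs hfree (ι c * s) = c • coeffs hfree s := by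
  rw [← AddEquiv.eq_symm_apply, coeffs_symm_apply, Finsupp.sum_smul_index (by simp)]
  conv_lhs => rw [← (coeffs hfree).symm_apply_apply s, coeffs_symm_apply]
  simp only [Finsupp.mul_sum, map_mul, mul_assoc]

theorem mem_extension_iff (I : TwoSidedIdeal R) (s : S) :
    s ∈ extension ι (I : Set R) ↔ ∀ n, coeffs hfree s n ∈ I := by
  constructor
  · intro hs
    induction hs using AddSubgroup.closure_induction with
    | mem y hy =>
      obtain ⟨_, ⟨c, hc, rfl⟩, t, -, rfl⟩ := Set.mem_mul.1 hy
      intro n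
      rw [coeffs_map_mul, Finsupp.smul_apply, smul_eq_mul]
      exact I.mul_mem_right _ _ hc
    | zero => simp
    | add y z _ _ hy hz => simpa using fun n => I.add_mem (hy n) (hz n)
    | neg y _ hy => simpa using hy
  · intro hs
    rw [← sum_coeffs_monomial hfree s]
    exact AddSubgroup.sum_mem _ fun n _ =>
      AddSubgroup.subset_closure ⟨_, ⟨_, hs n, rfl⟩, _, trivial, rfl⟩

include hfree in
theorem monomial_mem_extension_iff (I : TwoSidedIdeal R) (c : R) (n : ℕ) :
    ι c * x ^ n ∈ extension ι (I : Set R) ↔ c ∈ I := by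
  rw [mem_extension_iff hfree, coeffs_monomial]
  refine ⟨fun h => by simpa using h n, fun h m => ?_⟩
  rw [Finsupp.single_apply]
  split_ifs
  exacts [h, I.zero_mem]

include hfree in
theorem monomial_mul_mul_map_mem (hx : ∀ r : R, x * ι r = ι (σ r) * x) (I : TwoSidedIdeal R)
    {a b : R} {n : ℕ} (hab : ∀ r k, a * σ^[n] r * σ^[n + k] b ∈ I) (s : S) :
    ι a * x ^ n * s * ι b ∈ extension ι (I : Set R) := by
  rw [← sum_coeffs_monomial hfree s, Finset.mul_sum, Finset.sum_mul]
  refine AddSubgroup.sum_mem _ fun k _ => ?_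
  rw [← mul_one (ι b), ← pow_zero x, monomial_mul_monomial hx, monomial_mul_monomial hx]
  exact AddSubgroup.subset_closure ⟨_, ⟨_, hab _ k, rfl⟩, _, trivial, rfl⟩

theorem leading_coeffs_mul_mem (hx : ∀ r : R, x * ι r = ι (σ r) * x) (I : TwoSidedIdeal R)
    (hσI : ∀ c ∈ I, σ c ∈ I) {a b : S} (hab : ∀ s, a * s * b ∈ extension ι (I : Set R))
    {n m : ℕ} (han : coeffs hfree a n ∉ I) (ha : ∀ i, n < i → coeffs hfree a i ∈ I)
    (hbm : coeffs hfree b m ∉ I) (hb : ∀ j, m < j → coeffs hfree b j ∈ I) (r : R) (k : ℕ) :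
    coeffs hfree a n * σ^[n] r * σ^[n + k] (coeffs hfree b m) ∈ I := by
  set f := coeffs hfree a
  set g := coeffs hfree b
  set c : ℕ × ℕ → R := fun p => f p.1 * σ^[p.1] r * σ^[p.1 + k] (g p.2)
  have hprod : a * (ι r * x ^ k) * b =
      ∑ p ∈ f.support ×ˢ g.support, ι (c p) * x ^ (p.1 + k + p.2) := by
    conv_lhs => rw [← sum_coeffs_monomial hfree a, ← sum_coeffs_monomial hfree b]
    rw [Finset.sum_mul, Finset.sum_mul, Finset.sum_product]
    refine Finset.sum_congr rfl fun i _ => ?_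
    rw [Finset.mul_sum]
    exact Finset.sum_congr rfl fun j _ => by
      rw [monomial_mul_monomial hx, monomial_mul_monomial hx]
  have hnm : (n, m) ∈ f.support ×ˢ g.support :=
    Finset.mem_product.2 ⟨Finsupp.mem_support_iff.2 fun h => han (h ▸ I.zero_mem),
      Finsupp.mem_support_iff.2 fun h => hbm (h ▸ I.zero_mem)⟩
  have hsum := (mem_extension_iff hfree I _).1 (hab (ι r * x ^ k)) (n + k + m)
  rw [hprod, coeffs_sum_monomial, ← Finset.add_sum_erase _ _ hnm, if_pos rfl] at hsum
  refine (add_mem_cancel_right (sum_mem fun p hp => ?_)).1 hsum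
  split_ifs with hdeg
  · have hp : p ≠ (n, m) := Finset.ne_of_mem_erase hp
    rcases lt_or_gt_of_ne (show p.1 ≠ n by grind) with _ | hgt
    · exact I.mul_mem_left _ _ (Set.MapsTo.iterate hσI _ (hb p.2 (by omega)))
    · exact I.mul_mem_right _ _ (I.mul_mem_right _ _ (ha p.1 hgt))
  · exact I.zero_mem

include hfree in
theorem isPrime_extension_iff (hx : ∀ r : R, x * ι r = ι (σ r) * x) (I : TwoSidedIdeal R)
    (hσI : ∀ c ∈ I, σ c ∈ I) :
    ((1 : S) ∉ extension ι (I : Set R) ∧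
      ∀ a b : S, (∀ s, a * s * b ∈ extension ι (I : Set R)) →
        a ∈ extension ι (I : Set R) ∨ b ∈ extension ι (I : Set R)) ↔
    ((1 : R) ∉ I ∧
      ∀ (a b : R) (n : ℕ), (∀ r k, a * σ^[n] r * σ^[n + k] b ∈ I) → a ∈ I ∨ b ∈ I) := by
  have hmem := monomial_mem_extension_iff (x := x) hfree I
  have hone : (1 : S) ∈ extension ι (I : Set R) ↔ (1 : R) ∈ I := by simpa using hmem 1 0
  refine (not_congr hone).and ⟨fun hprime a b n hab => ?_, fun hcond a b hab => ?_⟩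
  · refine (hprime _ _ (monomial_mul_mul_map_mem hfree hx I hab)).imp (hmem a n).1 fun hb => ?_
    exact (hmem b 0).1 (by simpa using hb)
  · by_contra! hab'
    simp only [mem_extension_iff hfree, not_forall] at hab'
    obtain ⟨n, han, ha⟩ := Finsupp.exists_greatest_apply_notMem I.zero_mem _ hab'.1
    obtain ⟨m, hbm, hb⟩ := Finsupp.exists_greatest_apply_notMem I.zero_mem _ hab'.2
    exact (hcond _ _ n (leading_coeffs_mul_mem hfree hx I hσI hab han ha hbm hb)).elim han hbm

end SkewPoly

end

/-- Let `σ` be an endomorphism of `R` and `S = R[x;σ]` the skew polynomial ring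
(`S` is free as a left `R`-module on the powers of `x`, with `x r = σ(r) x`), and
let `I` be an ideal of `R` with `σ(I) ⊆ I`.  Then `IS` is a prime ideal of `S` iff
`I` is proper and for every left ideal `A` of `R` and every ideal `B` of `R` with
`σ(B) ⊆ B`, `A·σ^p(B) ⊆ I` for some `p ∈ ℕ` implies `A ⊆ I` or `B ⊆ I`. -/
theorem stmt19 {R S : Type*} [Ring R] [Ring S]
    (σ : R →+* R) (ι : R →+* S) (x : S)
    (hx : ∀ r : R, x * ι r = ι (σ r) * x)
    (hfree : Function.Bijective fun f : ℕ →₀ R => f.sum fun n r => ι r * x ^ n)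
    (I : Set R) (hI : IsIdealSet I) (hstab : ∀ a ∈ I, σ a ∈ I) :
    ((1 : S) ∉ AddSubgroup.closure ((ι '' I) * (Set.univ : Set S)) ∧
      ∀ a b : S,
        (∀ s : S, a * s * b ∈ AddSubgroup.closure ((ι '' I) * (Set.univ : Set S))) →
        a ∈ AddSubgroup.closure ((ι '' I) * (Set.univ : Set S)) ∨
        b ∈ AddSubgroup.closure ((ι '' I) * (Set.univ : Set S))) ↔
    ((1 : R) ∉ I ∧
      ∀ A B : Set R, IsLeftIdealSet A → IsIdealSet B → (∀ b ∈ B, σ b ∈ B) →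
        (∃ p : ℕ, ∀ a ∈ A, ∀ b ∈ B, a * (⇑σ)^[p] b ∈ I) →
        A ⊆ I ∨ B ⊆ I) := by
  obtain ⟨I, rfl⟩ : ∃ J : TwoSidedIdeal R, (J : Set R) = I :=
    ⟨hI.toTwoSidedIdeal, hI.coe_toTwoSidedIdeal⟩
  refine (SkewPoly.isPrime_extension_iff hfree hx I hstab).trans (Iff.rfl.and ⟨?_, ?_⟩)
  · exact fun h A B _ hB hσB ⟨_, hAB⟩ => subset_or_subset_of_mem_or_mem σ h hB hσB hAB
  · exact fun h a b n hab => mem_or_mem_of_subset_or_subset σ I h hab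
end
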